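/- arXiv:2603.08439 — 7 statements merged into one kernel-verified Lean document; each statement's English description precedes it below -/
import Mathlib

section
/- The subgroup H = {M ∈ G(−1) : det M = 1} is cyclic of order 6 and is generated by the matrix R₋₁·S₋₁; moreover the full group G(−1) is isomorphic to the dihedral group of order 12. -/
noncomputable def Rmat (ζ : ℂ) : Matrix (Fin 2) (Fin 2) ℂ := !![ζ, 1; 0, 1]

noncomputable def Smat (ζ : ℂ) : Matrix (Fin 2) (Fin 2) ℂ := !![0, -ζ⁻¹; 1, 0]

noncomputable def G (ζ : ℂ) : Subgroup (Matrix.GeneralLinearGroup (Fin 2) ℂ) :=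
  Subgroup.closure {A : Matrix.GeneralLinearGroup (Fin 2) ℂ |
    (A : Matrix (Fin 2) (Fin 2) ℂ) = Rmat ζ ∨ (A : Matrix (Fin 2) (Fin 2) ℂ) = Smat ζ}

/-- The subgroup of `GL(2, ℂ)` consisting of matrices of determinant `1`. -/
noncomputable def detOne : Subgroup (Matrix.GeneralLinearGroup (Fin 2) ℂ) where
  carrier := {M | (M : Matrix (Fin 2) (Fin 2) ℂ).det = 1}
  one_mem' := by simp
  mul_mem' := by
    intro a b ha hb
    simp only [Set.mem_setOf_eq, Units.val_mul, Matrix.det_mul] at *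
    rw [ha, hb, one_mul]
  inv_mem' := by
    intro a ha
    simp only [Set.mem_setOf_eq] at *
    have h : ((a⁻¹ : (Matrix (Fin 2) (Fin 2) ℂ)ˣ) : Matrix (Fin 2) (Fin 2) ℂ).det *
        ((a : Matrix (Fin 2) (Fin 2) ℂ)).det = 1 := by
      rw [← Matrix.det_mul, ← Units.val_mul, inv_mul_cancel, Units.val_one, Matrix.det_one]
    rw [ha, mul_one] at h
    exact h

namespace GAux

/-- the unit with value `Smat (-1)` -/
noncomputable def sU : Matrix.GeneralLinearGroup (Fin 2) ℂ :=
  ⟨!![0,1;1,0], !![0,1;1,0],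
    by norm_num [Matrix.mul_fin_two]; rw [Matrix.one_fin_two],
    by norm_num [Matrix.mul_fin_two]; rw [Matrix.one_fin_two]⟩

/-- the unit with value `Rmat (-1)` -/
noncomputable def rU : Matrix.GeneralLinearGroup (Fin 2) ℂ :=
  ⟨!![-1,1;0,1], !![-1,1;0,1],
    by norm_num [Matrix.mul_fin_two]; rw [Matrix.one_fin_two],
    by norm_num [Matrix.mul_fin_two]; rw [Matrix.one_fin_two]⟩

/-- the unit with value `Rmat (-1) * Smat (-1)` -/
noncomputable def uU : Matrix.GeneralLinearGroup (Fin 2) ℂ :=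
  ⟨!![1,-1;1,0], !![0,1;-1,1],
    by norm_num [Matrix.mul_fin_two]; rw [Matrix.one_fin_two],
    by norm_num [Matrix.mul_fin_two]; rw [Matrix.one_fin_two]⟩

lemma sU_val : (sU : Matrix (Fin 2) (Fin 2) ℂ) = !![0,1;1,0] := rfl
lemma rU_val : (rU : Matrix (Fin 2) (Fin 2) ℂ) = !![-1,1;0,1] := rfl
lemma uU_val : (uU : Matrix (Fin 2) (Fin 2) ℂ) = !![1,-1;1,0] := rfl

lemma sU_sq : sU * sU = 1 := by
  apply Units.ext
  simp only [Units.val_mul, Units.val_one, sU_val]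
  norm_num [Matrix.mul_fin_two]; rw [Matrix.one_fin_two]

lemma sU_inv : sU⁻¹ = sU := inv_eq_of_mul_eq_one_right sU_sq

lemma rU_eq : rU = uU * sU := by
  apply Units.ext
  simp only [Units.val_mul, rU_val, uU_val, sU_val]
  norm_num [Matrix.mul_fin_two]

lemma uU_inv_val : ((uU⁻¹ : Matrix.GeneralLinearGroup (Fin 2) ℂ) :
    Matrix (Fin 2) (Fin 2) ℂ) = !![0,1;-1,1] := rfl

lemma conj_uU : sU * uU * sU⁻¹ = uU⁻¹ := by
  rw [sU_inv]
  apply Units.ext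
  simp only [Units.val_mul, sU_val, uU_val, uU_inv_val]
  norm_num [Matrix.mul_fin_two]

lemma uU_six : uU ^ 6 = 1 := by
  apply Units.ext
  rw [Units.val_pow_eq_pow_val, uU_val, Units.val_one]
  norm_num [pow_succ, Matrix.mul_fin_two]; rw [Matrix.one_fin_two]

lemma uU_order : orderOf uU = 6 := by
  rw [orderOf_eq_iff (by norm_num)]
  refine ⟨uU_six, ?_⟩
  intro m hm hm' h
  have hv : ((1 : ℂ) = 1 → (!![(1:ℂ),-1;1,0]) ^ m = 1) := fun _ => by
    have := congrArg Units.val h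
    rwa [Units.val_pow_eq_pow_val, uU_val, Units.val_one] at this
  have hv' := hv rfl
  interval_cases m <;>
    simp [pow_succ, Matrix.mul_fin_two, Matrix.one_fin_two, funext_iff,
      Fin.forall_fin_two] at hv' <;> norm_num at hv'

lemma det_uU : (uU : Matrix (Fin 2) (Fin 2) ℂ).det = 1 := by
  rw [uU_val]; norm_num [Matrix.det_fin_two_of]

lemma det_sU : (sU : Matrix (Fin 2) (Fin 2) ℂ).det = -1 := by
  rw [sU_val]; norm_num [Matrix.det_fin_two_of]

/-- the cyclic part -/
noncomputable def χ (i : ZMod 6) : Matrix.GeneralLinearGroup (Fin 2) ℂ := uU ^ i.val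

lemma χ_add (i j : ZMod 6) : χ (i + j) = χ i * χ j := by
  rw [χ, χ, χ, ← pow_add, pow_eq_pow_iff_modEq, uU_order, ZMod.val_add]
  exact Nat.mod_modEq _ 6

lemma χ_zero : χ 0 = 1 := by simp [χ]

lemma χ_inv (i : ZMod 6) : (χ i)⁻¹ = χ (-i) :=
  inv_eq_of_mul_eq_one_right (by rw [← χ_add, add_neg_cancel, χ_zero])

lemma det_χ (i : ZMod 6) : ((χ i : Matrix.GeneralLinearGroup (Fin 2) ℂ) :
    Matrix (Fin 2) (Fin 2) ℂ).det = 1 := by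
  rw [χ, Units.val_pow_eq_pow_val, Matrix.det_pow, det_uU, one_pow]

lemma swap (i : ZMod 6) : sU * χ i = χ (-i) * sU := by
  have h : sU * χ i * sU⁻¹ = χ (-i) := by
    rw [χ, ← conj_pow, conj_uU, inv_pow, ← χ, χ_inv]
  rw [← h, sU_inv, mul_assoc, sU_sq, mul_one]

lemma swap' (i : ZMod 6) : χ i * sU = sU * χ (-i) := by
  have := swap (-i)
  rw [neg_neg] at this
  rw [this]

/-- the homomorphism from the dihedral group -/
noncomputable def φ : DihedralGroup 6 →* Matrix.GeneralLinearGroup (Fin 2) ℂ where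
  toFun x := match x with
    | .r i => χ i
    | .sr i => sU * χ i
  map_one' := by rw [DihedralGroup.one_def]; exact χ_zero
  map_mul' := by
    rintro (i | i) (j | j)
    · show χ (i + j) = χ i * χ j
      exact χ_add i j
    · show sU * χ (j - i) = χ i * (sU * χ j)
      rw [← mul_assoc, swap' i, mul_assoc, ← χ_add, sub_eq_neg_add]
    · show sU * χ (i + j) = sU * χ i * χ j
      rw [χ_add, mul_assoc]
    · show χ (j - i) = sU * χ i * (sU * χ j)
      rw [mul_assoc, ← mul_assoc (χ i), swap' i, ← mul_assoc, ← mul_assoc, sU_sq, one_mul,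
        ← χ_add, sub_eq_neg_add]

lemma φ_r (i : ZMod 6) : φ (.r i) = χ i := rfl
lemma φ_sr (i : ZMod 6) : φ (.sr i) = sU * χ i := rfl

lemma φ_inj : Function.Injective φ := by
  rw [injective_iff_map_eq_one]
  rintro (i | i) h
  · rw [φ_r, χ] at h
    have h6 : orderOf uU ∣ i.val := orderOf_dvd_of_pow_eq_one h
    rw [uU_order] at h6
    have h0 : i.val = 0 := Nat.eq_zero_of_dvd_of_lt h6 i.val_lt
    have hi : i = 0 := by rwa [ZMod.val_eq_zero] at h0
    rw [hi, ← DihedralGroup.one_def]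
  · exfalso
    rw [φ_sr] at h
    have := congrArg (fun M : Matrix.GeneralLinearGroup (Fin 2) ℂ =>
      (M : Matrix (Fin 2) (Fin 2) ℂ).det) h
    simp only [Units.val_mul, Matrix.det_mul, det_sU, det_χ, Units.val_one,
      Matrix.det_one] at this
    norm_num at this

lemma sU_mem : sU ∈ G (-1) := by
  apply Subgroup.subset_closure
  right
  rw [sU_val, Smat]
  norm_num

lemma rU_mem : rU ∈ G (-1) := by
  apply Subgroup.subset_closure
  left
  rw [rU_val, Rmat]

lemma uU_mem : uU ∈ G (-1) := by
  have : uU = rU * sU⁻¹ := by rw [rU_eq, mul_assoc, mul_inv_cancel, mul_one]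
  rw [this]
  exact mul_mem rU_mem (inv_mem sU_mem)

lemma χ_mem (i : ZMod 6) : χ i ∈ G (-1) := pow_mem uU_mem _

lemma uU_pow_five : uU ^ 5 = uU⁻¹ :=
  (inv_eq_of_mul_eq_one_right (by rw [← pow_succ', uU_six])).symm

lemma φ_range : φ.range = G (-1) := by
  apply le_antisymm
  · rintro _ ⟨(i | i), rfl⟩
    · exact χ_mem i
    · exact mul_mem sU_mem (χ_mem i)
  · rw [G, Subgroup.closure_le]
    rintro A (hA | hA)
    · have hAr : A = rU := Units.ext (by rw [hA, rU_val, Rmat])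
      refine ⟨.sr 5, ?_⟩
      rw [φ_sr, hAr, rU_eq, χ]
      have h5 : ((5 : ZMod 6)).val = 5 := rfl
      rw [h5, uU_pow_five, ← conj_uU, sU_inv, ← mul_assoc, ← mul_assoc, sU_sq, one_mul]
    · have hAs : A = sU := Units.ext (by
        rw [hA, sU_val, Smat]; norm_num)
      refine ⟨.sr 0, ?_⟩
      rw [φ_sr, hAs, χ_zero, mul_one]

end GAux

open GAux in
theorem G_at_minus_one (u : Matrix.GeneralLinearGroup (Fin 2) ℂ)
    (hu : (u : Matrix (Fin 2) (Fin 2) ℂ) = Rmat (-1) * Smat (-1)) :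
    ((G (-1) ⊓ detOne : Subgroup (Matrix.GeneralLinearGroup (Fin 2) ℂ)) : Set _) =
      ((Subgroup.zpowers u : Subgroup (Matrix.GeneralLinearGroup (Fin 2) ℂ)) : Set (Matrix.GeneralLinearGroup (Fin 2) ℂ)) ∧
    orderOf u = 6 ∧
    Nonempty (↥(G (-1)) ≃* DihedralGroup 6) := by
  have huU : u = uU := by
    apply Units.ext
    rw [hu, uU_val, Rmat, Smat]
    norm_num [Matrix.mul_fin_two]
  subst huU
  refine ⟨?_, uU_order, ⟨((MonoidHom.ofInjective φ_inj).trans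
    (MulEquiv.subgroupCongr φ_range)).symm⟩⟩
  apply Set.Subset.antisymm
  · intro M hM
    obtain ⟨hG, hdet⟩ := Subgroup.mem_inf.mp hM
    rw [← φ_range] at hG
    obtain ⟨x, rfl⟩ := hG
    rcases x with i | i
    · rw [φ_r, χ]
      exact ⟨(i.val : ℤ), zpow_natCast uU i.val⟩
    · exfalso
      have hd : ((φ (.sr i) : Matrix.GeneralLinearGroup (Fin 2) ℂ) :
          Matrix (Fin 2) (Fin 2) ℂ).det = 1 := hdet
      rw [φ_sr, Units.val_mul, Matrix.det_mul, det_sU, det_χ] at hd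
      norm_num at hd
  · rw [SetLike.coe_subset_coe, Subgroup.zpowers_le]
    exact Subgroup.mem_inf.mpr ⟨uU_mem, det_uU⟩
end

section
/- Let i = √−1 (a primitive 4th root of unity). The subgroup H = {M ∈ G(i) : det M = 1} is isomorphic to SL(2, 𝔽₃); in particular H has order 24. -/
/-!
The generators `R_i = !![i, 1; 0, 1]` and `S_i = !![0, i; 1, 0]` have entries in `ℤ[i]` and
finite order (`R_i ^ 4 = S_i ^ 8 = 1`), so `G(i)` is the image of the subgroup of `GL(2, ℤ[i])`
they generate, and that subgroup is the set of matrices reached from `1` by left multiplication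
by `R_i` and `S_i`. A breadth-first search finds these 96 matrices, 24 of them of
determinant `1`. Reduction modulo `3` maps `ℤ[i]` onto `𝔽₉ = 𝔽₃[ω]`, `ω² = -1`, and after
conjugation by a suitable `P ∈ SL(2, 𝔽₉)` the 24 reduced matrices are distinct and lie in
`SL(2, 𝔽₃)`, which has exactly 24 elements.
-/

/-- Entrywise decidable equality: the kernel evaluates it much faster than the default instance,
which goes through `Fintype`. -/
instance Matrix.decidableEqFinTwo {R : Type*} [DecidableEq R] :
    DecidableEq (Matrix (Fin 2) (Fin 2) R) := fun M N =>
  decidable_of_iff (M 0 0 = N 0 0 ∧ M 0 1 = N 0 1 ∧ M 1 0 = N 1 0 ∧ M 1 1 = N 1 1) <| by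
    simp only [← Matrix.ext_iff, Fin.forall_fin_two, and_assoc]

section BFS

variable {M : Type*} [Monoid M] [DecidableEq M]

def bfsClosure (gens : List M) : ℕ → List M × List M
  | 0 => ([1], [1])
  | n + 1 =>
    let (seen, front) := bfsClosure gens n
    let new := ((gens.flatMap fun g => front.map (g * ·)).filter (· ∉ seen)).dedup
    (seen ++ new, new)

theorem one_mem_bfsClosure (gens : List M) (n : ℕ) : 1 ∈ (bfsClosure gens n).1 := by
  induction n with
  | zero => simp [bfsClosure]
  | succ n ih => exact List.mem_append_left _ ih

theorem bfsClosure_subset_closure (gens : List M) (n : ℕ) :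
    (∀ x ∈ (bfsClosure gens n).1, x ∈ Submonoid.closure {g | g ∈ gens}) ∧
      ∀ x ∈ (bfsClosure gens n).2, x ∈ Submonoid.closure {g | g ∈ gens} := by
  induction n with
  | zero => simp [bfsClosure, one_mem]
  | succ n ih =>
    have hnew : ∀ x ∈ ((gens.flatMap fun g => (bfsClosure gens n).2.map (g * ·)).filter
        (· ∉ (bfsClosure gens n).1)).dedup, x ∈ Submonoid.closure {g | g ∈ gens} := by
      simp only [List.mem_dedup, List.mem_filter, List.mem_flatMap, List.mem_map]
      rintro _ ⟨⟨g, hg, y, hy, rfl⟩, -⟩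
      exact mul_mem (Submonoid.subset_closure hg) (ih.2 y hy)
    refine ⟨fun x hx => ?_, hnew⟩
    rcases List.mem_append.mp hx with hx | hx
    · exact ih.1 x hx
    · exact hnew x hx

end BFS

theorem Subgroup.closure_subset_of_mul_mem {G : Type*} [Group G] {s T : Set G}
    (hs : ∀ x ∈ s, IsOfFinOrder x) (h1 : 1 ∈ T) (hmul : ∀ x ∈ s, ∀ y ∈ T, x * y ∈ T) :
    (closure s : Set G) ⊆ T := by
  intro y (hy : y ∈ (closure s).toSubmonoid)
  rw [closure_toSubmonoid_of_isOfFinOrder hs] at hy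
  induction hy using Submonoid.closure_induction_left with
  | one => exact h1
  | mul_left x hx y _ ih => exact hmul x hx y ih

theorem Subgroup.coe_closure_eq_bfsClosure {G : Type*} [Group G] [DecidableEq G] (gens : List G)
    (n : ℕ) (hgens : ∀ g ∈ gens, IsOfFinOrder g)
    (hmul : ∀ g ∈ gens, ∀ y ∈ (bfsClosure gens n).1, g * y ∈ (bfsClosure gens n).1) :
    (closure {g | g ∈ gens} : Set G) = {x | x ∈ (bfsClosure gens n).1} := by
  refine subset_antisymm (closure_subset_of_mul_mem hgens (one_mem_bfsClosure gens n) hmul) ?_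
  exact fun x hx => le_closure_toSubmonoid _ ((bfsClosure_subset_closure gens n).1 x hx)

theorem Matrix.GeneralLinearGroup.map_injective {n R S : Type*} [Fintype n] [DecidableEq n]
    [CommRing R] [CommRing S] {f : R →+* S} (hf : Function.Injective f) :
    Function.Injective (Matrix.GeneralLinearGroup.map (n := n) f) := fun _ _ h =>
  Units.ext <| Matrix.map_injective hf congr(($h : Matrix n n S))

theorem Matrix.SpecialLinearGroup.mem_range_mapGL_of_im_eq_zero {n R : Type*} [Fintype n]
    [DecidableEq n] [CommRing R] {a b : R} (g : GL n (QuadraticAlgebra R a b))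
    (hdet : (g : Matrix n n (QuadraticAlgebra R a b)).det = 1) (him : ∀ i j, (g i j).im = 0) :
    g ∈ (mapGL (R := R) (QuadraticAlgebra R a b)).range := by
  have hg : ((g : Matrix n n (QuadraticAlgebra R a b)).map QuadraticAlgebra.re).map
      (algebraMap R _) = (g : Matrix n n (QuadraticAlgebra R a b)) := by
    ext i j <;> simp [him]
  have hdet' : ((g : Matrix n n (QuadraticAlgebra R a b)).map QuadraticAlgebra.re).det = 1 := by
    apply QuadraticAlgebra.algebraMap_injective (a := a) (b := b)
    rw [RingHom.map_det, RingHom.mapMatrix_apply, hg, hdet, map_one]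
  exact ⟨⟨_, hdet'⟩, Units.ext hg⟩

theorem card_SL_two_zmod_three : Nat.card (Matrix.SpecialLinearGroup (Fin 2) (ZMod 3)) = 24 := by
  rw [Nat.card_eq_fintype_card]
  decide +kernel

namespace GaussianInt

local notation "ℤ[i]" => GaussianInt
local notation "𝔽₉" => QuadraticAlgebra (ZMod 3) (-1) 0

def rMat : Matrix (Fin 2) (Fin 2) ℤ[i] := !![⟨0, 1⟩, 1; 0, 1]

def sMat : Matrix (Fin 2) (Fin 2) ℤ[i] := !![0, ⟨0, 1⟩; 1, 0]

theorem rMat_pow_four : rMat ^ 4 = 1 := by decide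

theorem sMat_pow_eight : sMat ^ 8 = 1 := by decide

def rGL : GL (Fin 2) ℤ[i] := Units.ofPowEqOne rMat 4 rMat_pow_four (by norm_num)

def sGL : GL (Fin 2) ℤ[i] := Units.ofPowEqOne sMat 8 sMat_pow_eight (by norm_num)

def qModularGroup : Subgroup (GL (Fin 2) ℤ[i]) := Subgroup.closure {rGL, sGL}

/-- Every element of `qModularGroup` is a word of length at most `10` in `rGL` and `sGL`. -/
def qModularGroupList : List (GL (Fin 2) ℤ[i]) := (bfsClosure [rGL, sGL] 10).1

theorem coe_qModularGroup :
    (qModularGroup : Set (GL (Fin 2) ℤ[i])) = {g | g ∈ qModularGroupList} := by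
  have hgens : ({rGL, sGL} : Set (GL (Fin 2) ℤ[i])) = {g | g ∈ [rGL, sGL]} := by
    ext; simp
  rw [qModularGroup, hgens]
  refine Subgroup.coe_closure_eq_bfsClosure _ _ ?_ (by decide +kernel)
  simp only [List.mem_cons, List.not_mem_nil, or_false, forall_eq_or_imp, forall_eq]
  exact ⟨isOfFinOrder_iff_pow_eq_one.mpr ⟨4, by norm_num, Units.pow_ofPowEqOne _ _⟩,
    isOfFinOrder_iff_pow_eq_one.mpr ⟨8, by norm_num, Units.pow_ofPowEqOne _ _⟩⟩

noncomputable def toComplexGL : GL (Fin 2) ℤ[i] →* GL (Fin 2) ℂ :=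
  Matrix.GeneralLinearGroup.map toComplex

theorem toComplexGL_injective : Function.Injective toComplexGL :=
  Matrix.GeneralLinearGroup.map_injective toComplex_injective

theorem coe_toComplexGL_rGL :
    (toComplexGL rGL : Matrix (Fin 2) (Fin 2) ℂ) = Rmat Complex.I := by
  ext i j
  fin_cases i <;> fin_cases j <;> simp [toComplexGL, rGL, rMat, Rmat, toComplex_def]

theorem coe_toComplexGL_sGL :
    (toComplexGL sGL : Matrix (Fin 2) (Fin 2) ℂ) = Smat Complex.I := by
  ext i j
  fin_cases i <;> fin_cases j <;> simp [toComplexGL, sGL, sMat, Smat, toComplex_def]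

theorem map_toComplexGL_qModularGroup : qModularGroup.map toComplexGL = G Complex.I := by
  rw [qModularGroup, MonoidHom.map_closure, G]
  congr 1
  ext A
  rw [← coe_toComplexGL_rGL, ← coe_toComplexGL_sGL]
  simp [← Units.ext_iff, eq_comm]

theorem mem_comap_detOne {g : GL (Fin 2) ℤ[i]} :
    g ∈ detOne.comap toComplexGL ↔ (g : Matrix (Fin 2) (Fin 2) ℤ[i]).det = 1 := by
  change (toComplex.mapMatrix (g : Matrix (Fin 2) (Fin 2) ℤ[i])).det = 1 ↔ _
  rw [← RingHom.map_det, ← toComplex_one, toComplex_inj]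

noncomputable def qModularGroupDetOne : Subgroup (GL (Fin 2) ℤ[i]) :=
  qModularGroup ⊓ detOne.comap toComplexGL

theorem G_I_inf_detOne_eq_map : G Complex.I ⊓ detOne = qModularGroupDetOne.map toComplexGL := by
  have hG : G Complex.I ≤ toComplexGL.range :=
    map_toComplexGL_qModularGroup ▸ Subgroup.map_le_range _ _
  rw [qModularGroupDetOne, Subgroup.map_inf_eq _ _ _ toComplexGL_injective,
    Subgroup.map_comap_eq, map_toComplexGL_qModularGroup, ← inf_assoc, inf_eq_left.mpr hG]

theorem mem_qModularGroupDetOne {g : GL (Fin 2) ℤ[i]} :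
    g ∈ qModularGroupDetOne ↔
      g ∈ qModularGroupList ∧ (g : Matrix (Fin 2) (Fin 2) ℤ[i]).det = 1 := by
  rw [qModularGroupDetOne, Subgroup.mem_inf, mem_comap_detOne, ← SetLike.mem_coe,
    coe_qModularGroup, Set.mem_ofPred_eq]

theorem card_qModularGroupList_filter_det_eq_one :
    (qModularGroupList.toFinset.filter fun g : GL (Fin 2) ℤ[i] =>
      (g : Matrix (Fin 2) (Fin 2) ℤ[i]).det = 1).card = 24 := by
  decide +kernel

theorem card_qModularGroupDetOne : Nat.card qModularGroupDetOne = 24 := by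
  have hcoe : (qModularGroupDetOne : Set (GL (Fin 2) ℤ[i])) =
      ↑(qModularGroupList.toFinset.filter fun g : GL (Fin 2) ℤ[i] =>
        (g : Matrix (Fin 2) (Fin 2) ℤ[i]).det = 1) := by
    ext g
    simp [mem_qModularGroupDetOne]
  rw [← SetLike.coe_sort_coe, hcoe, Nat.card_coe_set_eq, Set.ncard_coe_finset,
    card_qModularGroupList_filter_det_eq_one]

def modThree : ℤ[i] →+* 𝔽₉ := Zsqrtd.lift ⟨⟨0, 1⟩, by decide⟩

/-- Conjugation by this matrix of `SL(2, 𝔽₉)` maps the reduction of `qModularGroupDetOne` into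
`SL(2, 𝔽₃)`; it was found by a search over `SL(2, 𝔽₉)`. -/
def conjugator : GL (Fin 2) 𝔽₉ :=
  ⟨!![1, 1; ⟨0, 1⟩, ⟨1, 1⟩], !![⟨1, 1⟩, -1; ⟨0, -1⟩, 1], by decide, by decide⟩

def conjModThree : GL (Fin 2) ℤ[i] →* GL (Fin 2) 𝔽₉ :=
  (MulAut.conj conjugator).toMonoidHom.comp (Matrix.GeneralLinearGroup.map modThree)

theorem conjModThree_det_eq_one_and_im_eq_zero :
    ∀ g ∈ qModularGroupList, (g : Matrix (Fin 2) (Fin 2) ℤ[i]).det = 1 →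
      (conjModThree g : Matrix (Fin 2) (Fin 2) 𝔽₉).det = 1 ∧
        ∀ i j, (conjModThree g i j).im = 0 := by
  decide +kernel

theorem eq_one_of_conjModThree_eq_one :
    ∀ g ∈ qModularGroupList, conjModThree g = 1 → g = 1 := by
  decide +kernel

theorem conjModThree_restrict_injective :
    Function.Injective (conjModThree.comp qModularGroupDetOne.subtype) := by
  refine (injective_iff_map_eq_one _).mpr fun g hg => Subtype.ext ?_
  exact eq_one_of_conjModThree_eq_one g (mem_qModularGroupDetOne.mp g.2).1 hg

theorem range_conjModThree_restrict :
    (conjModThree.comp qModularGroupDetOne.subtype).range =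
      (Matrix.SpecialLinearGroup.mapGL (R := ZMod 3) (n := Fin 2) 𝔽₉).range := by
  have hle : (conjModThree.comp qModularGroupDetOne.subtype).range ≤
      (Matrix.SpecialLinearGroup.mapGL (R := ZMod 3) (n := Fin 2) 𝔽₉).range := by
    rintro _ ⟨g, rfl⟩
    obtain ⟨hg, hdet⟩ := mem_qModularGroupDetOne.mp g.2
    obtain ⟨hdet', him⟩ := conjModThree_det_eq_one_and_im_eq_zero g hg hdet
    exact Matrix.SpecialLinearGroup.mem_range_mapGL_of_im_eq_zero _ hdet' him
  refine Subgroup.eq_of_le_of_card_ge hle ?_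
  rw [← Nat.card_congr (MonoidHom.ofInjective Matrix.SpecialLinearGroup.mapGL_injective).toEquiv,
    ← Nat.card_congr (MonoidHom.ofInjective conjModThree_restrict_injective).toEquiv,
    card_SL_two_zmod_three, card_qModularGroupDetOne]

noncomputable def qModularGroupDetOneEquivSL :
    qModularGroupDetOne ≃* Matrix.SpecialLinearGroup (Fin 2) (ZMod 3) :=
  (MonoidHom.ofInjective conjModThree_restrict_injective).trans <|
    (MulEquiv.subgroupCongr range_conjModThree_restrict).trans
      (MonoidHom.ofInjective Matrix.SpecialLinearGroup.mapGL_injective).symm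

end GaussianInt

theorem G_i_SL2_part :
    Nonempty (↥(G Complex.I ⊓ detOne) ≃* Matrix.SpecialLinearGroup (Fin 2) (ZMod 3)) ∧
    Nat.card ↥(G Complex.I ⊓ detOne) = 24 := by
  have e : ↥(G Complex.I ⊓ detOne) ≃* GaussianInt.qModularGroupDetOne :=
    (MulEquiv.subgroupCongr GaussianInt.G_I_inf_detOne_eq_map).trans
      (Subgroup.equivMapOfInjective _ _ GaussianInt.toComplexGL_injective).symm
  exact ⟨⟨e.trans GaussianInt.qModularGroupDetOneEquivSL⟩,
    (Nat.card_congr e.toEquiv).trans GaussianInt.card_qModularGroupDetOne⟩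
end

section
/- Let i = √−1 and set H = {M ∈ G(i) : det M = 1} and K = the cyclic subgroup of G(i) generated by R_i. Then H is a normal subgroup of G(i), K has order 4, H ∩ K is trivial, and every element of G(i) is a product of an element of H and an element of K (so G(i) is an internal semidirect product H ⋊ K of order 96); moreover G(i) is NOT isomorphic to the direct product SL(2, 𝔽₃) × C₄, where C₄ is the cyclic group of order 4. -/
section ProdsUpTo

variable {M : Type*} [Monoid M] [DecidableEq M]

def growByLeftMul (gens L : List M) : List M :=
  (gens.flatMap fun g => L.map (g * ·)) ∪ L

def prodsUpTo (gens : List M) : ℕ → List M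
  | 0 => [1]
  | n + 1 => growByLeftMul gens (prodsUpTo gens n)

theorem mem_growByLeftMul {gens L : List M} {x : M} :
    x ∈ growByLeftMul gens L ↔ (∃ g ∈ gens, ∃ y ∈ L, g * y = x) ∨ x ∈ L := by
  simp [growByLeftMul]

theorem nodup_prodsUpTo (gens : List M) (n : ℕ) : (prodsUpTo gens n).Nodup := by
  induction n with
  | zero => exact List.nodup_singleton 1
  | succ n ih => exact List.Nodup.union _ ih

theorem one_mem_prodsUpTo (gens : List M) (n : ℕ) : 1 ∈ prodsUpTo gens n := by
  induction n with
  | zero => exact List.mem_singleton_self 1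
  | succ n ih => exact mem_growByLeftMul.2 (Or.inr ih)

theorem mem_closure_of_mem_prodsUpTo {gens : List M} {n : ℕ} {x : M}
    (hx : x ∈ prodsUpTo gens n) : x ∈ Submonoid.closure {g | g ∈ gens} := by
  induction n generalizing x with
  | zero =>
    rw [List.mem_singleton.1 hx]
    exact one_mem _
  | succ n ih =>
    rcases mem_growByLeftMul.1 hx with ⟨g, hg, y, hy, rfl⟩ | hx
    · exact mul_mem (Submonoid.subset_closure hg) (ih hy)
    · exact ih hx

theorem coe_closure_eq_prodsUpTo {gens : List M} {n : ℕ}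
    (hclosed : ∀ g ∈ gens, ∀ x ∈ prodsUpTo gens n, g * x ∈ prodsUpTo gens n) :
    (Submonoid.closure {g | g ∈ gens} : Set M) = {x | x ∈ prodsUpTo gens n} := by
  refine Set.Subset.antisymm (fun x hx => ?_) fun x => mem_closure_of_mem_prodsUpTo
  induction hx using Submonoid.closure_induction_left with
  | one => exact one_mem_prodsUpTo gens n
  | mul_left g hg y _ ih => exact hclosed g hg y ih

end ProdsUpTo

theorem image_val_closure_preimage_image {M N F : Type*} [Monoid M] [Monoid N] [FunLike F M N]
    [MonoidHomClass F M N] (f : F) {T : Set M} (hT : ∀ t ∈ T, IsOfFinOrder t) :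
    Units.val '' (Subgroup.closure (Units.val ⁻¹' (f '' T)) : Set Nˣ) =
      f '' Submonoid.closure T := by
  have hfT : ∀ t ∈ T, IsOfFinOrder (f t) := fun t ht => (f : M →* N).isOfFinOrder (hT t ht)
  have hfin : ∀ x ∈ Units.val ⁻¹' (f '' T), IsOfFinOrder x := by
    rintro x ⟨t, ht, hx⟩
    exact Units.isOfFinOrder_val.1 (hx ▸ hfT t ht)
  have hunits : f '' T ⊆ Set.range Units.val := by
    rintro _ ⟨t, ht, rfl⟩
    exact (hfT t ht).isUnit
  rw [← Subgroup.coe_toSubmonoid, Subgroup.closure_toSubmonoid_of_isOfFinOrder hfin,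
    ← Submonoid.coe_map f, MonoidHom.map_mclosure f T]
  calc Units.val '' (Submonoid.closure (Units.val ⁻¹' (f '' T)) : Set Nˣ)
      = ((Submonoid.closure (Units.val ⁻¹' (f '' T))).map (Units.coeHom N) : Set N) := rfl
    _ = Submonoid.closure (f '' T) := by
      rw [MonoidHom.map_mclosure]
      exact congrArg _ (congrArg _ (Set.image_preimage_eq_of_subset hunits))

theorem conj_mem_inf_of_normal {Γ : Type*} [Group Γ] {K N : Subgroup Γ} (hN : N.Normal)
    {g h : Γ} (hg : g ∈ K) (hh : h ∈ K ⊓ N) : g * h * g⁻¹ ∈ K ⊓ N :=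
  Subgroup.mem_inf.2 ⟨mul_mem (mul_mem hg (Subgroup.mem_inf.1 hh).1) (inv_mem hg),
    hN.conj_mem h (Subgroup.mem_inf.1 hh).2 g⟩

theorem zpowers_inf_ker_eq_bot {Γ Δ : Type*} [Group Γ] [Group Δ] (f : Γ →* Δ) {x : Γ}
    (h : orderOf (f x) = orderOf x) : Subgroup.zpowers x ⊓ f.ker = ⊥ := by
  refine eq_bot_iff.2 fun y hy => Subgroup.mem_bot.2 ?_
  obtain ⟨hy, hker⟩ := Subgroup.mem_inf.1 hy
  obtain ⟨n, rfl⟩ := Subgroup.mem_zpowers_iff.1 hy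
  rwa [MonoidHom.mem_ker, map_zpow, ← orderOf_dvd_iff_zpow_eq_one, h,
    orderOf_dvd_iff_zpow_eq_one] at hker

theorem exists_mem_inf_ker_mul_zpowers {Γ Δ : Type*} [Group Γ] [Group Δ] (f : Γ →* Δ)
    {K : Subgroup Γ} {u : Γ} (hu : u ∈ K) (hK : K ≤ (Subgroup.zpowers (f u)).comap f)
    {g : Γ} (hg : g ∈ K) : ∃ h ∈ K ⊓ f.ker, ∃ k ∈ Subgroup.zpowers u, g = h * k := by
  obtain ⟨n, hn⟩ := Subgroup.mem_zpowers_iff.1 (hK hg)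
  refine ⟨g * (u ^ n)⁻¹, Subgroup.mem_inf.2 ⟨mul_mem hg (inv_mem (zpow_mem hu n)), ?_⟩,
    u ^ n, zpow_mem (Subgroup.mem_zpowers u) n, (inv_mul_cancel_right g _).symm⟩
  rw [MonoidHom.mem_ker, map_mul, map_inv, map_zpow, hn, mul_inv_cancel]

theorem not_nonempty_mulEquiv_of_pow_eq_one {A B : Type*} [Monoid A] [Monoid B] {n : ℕ}
    (hA : ∃ a : A, a ^ n ≠ 1) (hB : ∀ b : B, b ^ n = 1) : ¬Nonempty (A ≃* B) := by
  rintro ⟨e⟩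
  obtain ⟨a, ha⟩ := hA
  exact ha (e.injective (by rw [map_pow, hB, map_one]))

theorem pow_twelve_eq_one_SL_ZMod_three (A : Matrix.SpecialLinearGroup (Fin 2) (ZMod 3)) :
    A ^ 12 = 1 := by
  revert A
  decide +kernel

theorem pow_twelve_eq_one_ZMod_four (z : Multiplicative (ZMod 4)) : z ^ 12 = 1 := by
  revert z
  decide

theorem det_Rmat (ζ : ℂ) : (Rmat ζ).det = ζ := by
  simp [Rmat, Matrix.det_fin_two_of]

theorem det_Smat (ζ : ℂ) : (Smat ζ).det = ζ⁻¹ := by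
  simp [Smat, Matrix.det_fin_two_of]

theorem detOne_eq_ker : detOne = Matrix.GeneralLinearGroup.det.ker := by
  ext A
  simp [detOne, Units.ext_iff, Matrix.GeneralLinearGroup.val_det_apply]

theorem G_le_comap_det {ζ : ℂ} (hζ : ζ ≠ 0) :
    G ζ ≤ (Subgroup.zpowers (Units.mk0 ζ hζ)).comap Matrix.GeneralLinearGroup.det := by
  refine (Subgroup.closure_le _).2 ?_
  rintro A (hA | hA)
  · exact ⟨1, Units.ext (by simp [Matrix.GeneralLinearGroup.val_det_apply, hA, det_Rmat])⟩
  · exact ⟨-1, Units.ext (by simp [Matrix.GeneralLinearGroup.val_det_apply, hA, det_Smat])⟩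

def gaussR : Matrix (Fin 2) (Fin 2) GaussianInt := !![⟨0, 1⟩, 1; 0, 1]

def gaussS : Matrix (Fin 2) (Fin 2) GaussianInt := !![0, ⟨0, 1⟩; 1, 0]

theorem injective_toComplex_mapMatrix :
    Function.Injective (GaussianInt.toComplex.mapMatrix : Matrix (Fin 2) (Fin 2) GaussianInt → _) :=
  fun _ _ h => Matrix.map_injective GaussianInt.toComplex_injective h

theorem toComplex_mapMatrix_gaussR : GaussianInt.toComplex.mapMatrix gaussR = Rmat Complex.I := by
  ext i j
  fin_cases i <;> fin_cases j <;> simp [gaussR, Rmat, GaussianInt.toComplex_def]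

theorem toComplex_mapMatrix_gaussS : GaussianInt.toComplex.mapMatrix gaussS = Smat Complex.I := by
  ext i j
  fin_cases i <;> fin_cases j <;> simp [gaussS, Smat, GaussianInt.toComplex_def]

theorem orderOf_gaussR : orderOf gaussR = 4 :=
  (orderOf_eq_iff four_pos).2 ⟨by decide, by decide⟩

theorem orderOf_Rmat_I : orderOf (Rmat Complex.I) = 4 := by
  have h := orderOf_injective (GaussianInt.toComplex.mapMatrix (m := Fin 2)).toMonoidHom
    injective_toComplex_mapMatrix gaussR
  rwa [RingHom.toMonoidHom_eq_coe, MonoidHom.coe_coe, toComplex_mapMatrix_gaussR,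
    orderOf_gaussR] at h

theorem gaussS_pow_eight : gaussS ^ 8 = 1 := by decide

theorem gaussS_pow_twelve_ne_one : gaussS ^ 12 ≠ 1 := by decide

theorem prodsUpTo_gauss_closed : ∀ g ∈ [gaussR, gaussS], ∀ x ∈ prodsUpTo [gaussR, gaussS] 10,
    g * x ∈ prodsUpTo [gaussR, gaussS] 10 := by
  decide +kernel

theorem length_prodsUpTo_gauss : (prodsUpTo [gaussR, gaussS] 10).length = 96 := by
  decide +kernel

theorem G_I_eq_closure : G Complex.I = Subgroup.closure
    (Units.val ⁻¹' (GaussianInt.toComplex.mapMatrix '' {g | g ∈ [gaussR, gaussS]})) := by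
  refine congrArg Subgroup.closure (Set.ext fun A => ?_)
  simp only [Set.mem_preimage, Set.mem_image, Set.mem_ofPred_eq, List.mem_cons, List.not_mem_nil,
    or_false, exists_eq_or_imp, exists_eq_left, toComplex_mapMatrix_gaussR,
    toComplex_mapMatrix_gaussS, eq_comm]

theorem image_val_G_I : Units.val '' (G Complex.I : Set (Matrix.GeneralLinearGroup (Fin 2) ℂ)) =
    GaussianInt.toComplex.mapMatrix '' {x | x ∈ prodsUpTo [gaussR, gaussS] 10} := by
  have hfin : ∀ g ∈ {g | g ∈ [gaussR, gaussS]}, IsOfFinOrder g := by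
    simp only [Set.mem_ofPred_eq, List.mem_cons, List.not_mem_nil, or_false]
    rintro g (rfl | rfl)
    · exact orderOf_pos_iff.1 (orderOf_gaussR ▸ four_pos)
    · exact isOfFinOrder_iff_pow_eq_one.2 ⟨8, by norm_num, gaussS_pow_eight⟩
  rw [G_I_eq_closure, image_val_closure_preimage_image _ hfin,
    coe_closure_eq_prodsUpTo prodsUpTo_gauss_closed]

theorem card_G_I : Nat.card (G Complex.I) = 96 := by
  rw [← SetLike.coe_sort_coe, ← Nat.card_image_of_injective Units.val_injective _, image_val_G_I,
    Nat.card_image_of_injective injective_toComplex_mapMatrix, ← List.coe_toFinset,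
    Nat.card_coe_set_eq, Set.ncard_coe_finset, List.toFinset_card_of_nodup (nodup_prodsUpTo _ _),
    length_prodsUpTo_gauss]

theorem exists_mem_G_I_pow_twelve_ne_one : ∃ g ∈ G Complex.I, g ^ 12 ≠ 1 := by
  have hS := prodsUpTo_gauss_closed gaussS (by simp) 1 (one_mem_prodsUpTo _ _)
  rw [mul_one] at hS
  obtain ⟨g, hg, hval⟩ : GaussianInt.toComplex.mapMatrix gaussS ∈
      Units.val '' (G Complex.I : Set (Matrix.GeneralLinearGroup (Fin 2) ℂ)) := by
    rw [image_val_G_I]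
    exact ⟨gaussS, hS, rfl⟩
  refine ⟨g, hg, fun h => gaussS_pow_twelve_ne_one (injective_toComplex_mapMatrix ?_)⟩
  rw [map_pow, map_one, ← hval, ← Units.val_pow_eq_pow_val, h, Units.val_one]

theorem G_i_structure (u : Matrix.GeneralLinearGroup (Fin 2) ℂ)
    (hu : (u : Matrix (Fin 2) (Fin 2) ℂ) = Rmat Complex.I) :
    (∀ g ∈ G Complex.I, ∀ h ∈ G Complex.I ⊓ detOne,
      g * h * g⁻¹ ∈ G Complex.I ⊓ detOne) ∧
    Subgroup.zpowers u ≤ G Complex.I ∧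
    orderOf u = 4 ∧
    ((Subgroup.zpowers u : Subgroup (Matrix.GeneralLinearGroup (Fin 2) ℂ)) :
        Set (Matrix.GeneralLinearGroup (Fin 2) ℂ)) ∩
      ((G Complex.I ⊓ detOne : Subgroup (Matrix.GeneralLinearGroup (Fin 2) ℂ)) :
        Set (Matrix.GeneralLinearGroup (Fin 2) ℂ)) = {1} ∧
    (∀ g ∈ G Complex.I, ∃ h ∈ G Complex.I ⊓ detOne, ∃ k ∈ Subgroup.zpowers u, g = h * k) ∧
    Nat.card ↥(G Complex.I) = 96 ∧
    ¬ Nonempty (↥(G Complex.I) ≃*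
      Matrix.SpecialLinearGroup (Fin 2) (ZMod 3) × Multiplicative (ZMod 4)) := by
  have hu_mem : u ∈ G Complex.I := Subgroup.subset_closure (Or.inl hu)
  have hdet_u : Matrix.GeneralLinearGroup.det u = Units.mk0 Complex.I Complex.I_ne_zero :=
    Units.ext (by simp [Matrix.GeneralLinearGroup.val_det_apply, hu, det_Rmat])
  have horder_u : orderOf u = 4 := by
    rw [← orderOf_units, hu, orderOf_Rmat_I]
  have horder_det_u : orderOf (Matrix.GeneralLinearGroup.det u) = orderOf u := by
    rw [hdet_u, ← orderOf_units, Units.val_mk0, ← Complex.isPrimitiveRoot_I.eq_orderOf, horder_u]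
  rw [detOne_eq_ker]
  refine ⟨fun g hg h hh => conj_mem_inf_of_normal (MonoidHom.normal_ker _) hg hh,
    Subgroup.zpowers_le.2 hu_mem, horder_u, ?_,
    fun g hg => exists_mem_inf_ker_mul_zpowers _ hu_mem (hdet_u ▸ G_le_comap_det _) hg,
    card_G_I, not_nonempty_mulEquiv_of_pow_eq_one (n := 12) ?_ ?_⟩
  · refine Set.eq_singleton_iff_unique_mem.2 ⟨⟨one_mem _, one_mem _⟩, fun y ⟨hy, hyH⟩ => ?_⟩
    rw [← Subgroup.mem_bot, ← zpowers_inf_ker_eq_bot _ horder_det_u]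
    exact Subgroup.mem_inf.2 ⟨hy, (Subgroup.mem_inf.1 hyH).2⟩
  · obtain ⟨g, hg, hg12⟩ := exists_mem_G_I_pow_twelve_ne_one
    exact ⟨⟨g, hg⟩, fun h => hg12 (congrArg Subtype.val h)⟩
  · exact fun p => Prod.ext (pow_twelve_eq_one_SL_ZMod_three p.1) (pow_twelve_eq_one_ZMod_four p.2)
end

section
/- Let ω = (−1 + i√3)/2, a primitive cube root of unity, so that −ω is a primitive 6th root of unity. Then the set of traces of elements of G(−ω) is exactly {0} ∪ { c, (1−ω)·c, 2c : c = (−ω)^j, j = 0, 1, …, 5 }. (Note 1−ω = √3·e^{−πi/6}, which agrees with √3·ζ₁₂ up to multiplication by a sixth root of unity.) In particular, the set of traces of elements of G(−ω) is finite. -/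
/-- The subgroup of `GL(2, ℂ)` of matrices fixing the line through `(1, 1+ω)` with
eigenvalue a power of `-ω`, and with determinant a power of `-ω`. -/
noncomputable def Hsub (ω : ℂ) (h6 : (-ω) ^ 6 = 1) :
    Subgroup (Matrix.GeneralLinearGroup (Fin 2) ℂ) where
  carrier := {M | ∃ a b : ℕ,
    (M : Matrix (Fin 2) (Fin 2) ℂ).mulVec ![1, 1 + ω] = (-ω) ^ a • ![1, 1 + ω] ∧
    (M : Matrix (Fin 2) (Fin 2) ℂ).det = (-ω) ^ (a + b)}
  one_mem' := ⟨0, 0, by simp, by simp⟩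
  mul_mem' := by
    rintro x y ⟨a, b, hxv, hxd⟩ ⟨c, d, hyv, hyd⟩
    refine ⟨a + c, b + d, ?_, ?_⟩
    · rw [Units.val_mul, ← Matrix.mulVec_mulVec, hyv, Matrix.mulVec_smul, hxv,
        smul_smul, ← pow_add]
      congr 1
      ring
    · rw [Units.val_mul, Matrix.det_mul, hxd, hyd, ← pow_add]
      congr 1
      ring
  inv_mem' := by
    rintro x ⟨a, b, hxv, hxd⟩
    have hpow : ∀ n : ℕ, (-ω) ^ (5 * n) * (-ω) ^ n = 1 := by
      intro n
      rw [← pow_add, show 5 * n + n = 6 * n by ring, pow_mul, h6, one_pow]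
    refine ⟨5 * a, 5 * b, ?_, ?_⟩
    · have hMM : ((x⁻¹ : (Matrix (Fin 2) (Fin 2) ℂ)ˣ) : Matrix (Fin 2) (Fin 2) ℂ) *
          (x : Matrix (Fin 2) (Fin 2) ℂ) = 1 := by
        rw [← Units.val_mul, inv_mul_cancel, Units.val_one]
      have h1 : (-ω) ^ a • ((x⁻¹ : (Matrix (Fin 2) (Fin 2) ℂ)ˣ) :
          Matrix (Fin 2) (Fin 2) ℂ).mulVec ![1, 1 + ω] = ![1, 1 + ω] := by
        rw [← Matrix.mulVec_smul, ← hxv, Matrix.mulVec_mulVec, hMM, Matrix.one_mulVec]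
      calc ((x⁻¹ : (Matrix (Fin 2) (Fin 2) ℂ)ˣ) :
            Matrix (Fin 2) (Fin 2) ℂ).mulVec ![1, 1 + ω]
          = ((-ω) ^ (5 * a) * (-ω) ^ a) • ((x⁻¹ : (Matrix (Fin 2) (Fin 2) ℂ)ˣ) :
            Matrix (Fin 2) (Fin 2) ℂ).mulVec ![1, 1 + ω] := by rw [hpow, one_smul]
        _ = (-ω) ^ (5 * a) • ((-ω) ^ a • ((x⁻¹ : (Matrix (Fin 2) (Fin 2) ℂ)ˣ) :
            Matrix (Fin 2) (Fin 2) ℂ).mulVec ![1, 1 + ω]) := by rw [mul_smul]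
        _ = (-ω) ^ (5 * a) • ![1, 1 + ω] := by rw [h1]
    · have h : ((x⁻¹ : (Matrix (Fin 2) (Fin 2) ℂ)ˣ) : Matrix (Fin 2) (Fin 2) ℂ).det *
          ((x : Matrix (Fin 2) (Fin 2) ℂ)).det = 1 := by
        rw [← Matrix.det_mul, ← Units.val_mul, inv_mul_cancel, Units.val_one, Matrix.det_one]
      rw [hxd] at h
      have h2 : (-ω) ^ (5 * a + 5 * b) * (-ω) ^ (a + b) = 1 := by
        rw [show 5 * a + 5 * b = 5 * (a + b) by ring]
        exact hpow (a + b)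
      have hne : ((-ω) ^ (a + b) : ℂ) ≠ 0 := by
        intro h0
        rw [h0, mul_zero] at h2
        exact zero_ne_one h2
      exact mul_right_cancel₀ hne (h.trans h2.symm)


lemma m2eq {a b c d e f g h : ℂ} (h11 : a = e) (h12 : b = f) (h21 : c = g) (h22 : d = h) :
    !![a, b; c, d] = !![e, f; g, h] := by rw [h11, h12, h21, h22]

lemma v2eq {a b c d : ℂ} (h1 : a = c) (h2 : b = d) : ![a, b] = ![c, d] := by rw [h1, h2]

lemma mulVec_fin_two (A : Matrix (Fin 2) (Fin 2) ℂ) (v : Fin 2 → ℂ) :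
    A.mulVec v = ![A 0 0 * v 0 + A 0 1 * v 1, A 1 0 * v 0 + A 1 1 * v 1] := by
  funext i
  fin_cases i <;> simp [Matrix.mulVec, dotProduct, Fin.sum_univ_two]

lemma smul_vec_two (c a b : ℂ) : c • ![a, b] = ![c * a, c * b] := by
  funext i
  fin_cases i <;> simp

lemma key_cases (ω : ℂ) (hrel : ω ^ 2 + ω + 1 = 0) (i j : ℕ) (hi : i < 6) (hj : j < 6) :
    (-ω) ^ i + (-ω) ^ j = 0 ∨ ∃ k < 6, ((-ω) ^ i + (-ω) ^ j = (-ω) ^ k ∨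
      (-ω) ^ i + (-ω) ^ j = (1 - ω) * (-ω) ^ k ∨
      (-ω) ^ i + (-ω) ^ j = 2 * (-ω) ^ k) := by
  interval_cases i <;> interval_cases j
  · exact Or.inr ⟨0, by norm_num, Or.inr (Or.inr (by linear_combination ((0:ℂ)) * hrel))⟩
  · exact Or.inr ⟨0, by norm_num, Or.inr (Or.inl (by linear_combination ((0:ℂ)) * hrel))⟩
  · exact Or.inr ⟨1, by norm_num, Or.inl (by linear_combination ((1:ℂ)) * hrel)⟩
  · exact Or.inl (by linear_combination ((1:ℂ) + (-1:ℂ)*ω) * hrel)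
  · exact Or.inr ⟨5, by norm_num, Or.inl (by linear_combination ((1:ℂ) + (-1:ℂ)*ω + (1:ℂ)*ω^3) * hrel)⟩
  · exact Or.inr ⟨5, by norm_num, Or.inr (Or.inl (by linear_combination ((1:ℂ) + (-1:ℂ)*ω + (1:ℂ)*ω^3 + (-1:ℂ)*ω^4) * hrel))⟩
  · exact Or.inr ⟨0, by norm_num, Or.inr (Or.inl (by linear_combination ((0:ℂ)) * hrel))⟩
  · exact Or.inr ⟨1, by norm_num, Or.inr (Or.inr (by linear_combination ((0:ℂ)) * hrel))⟩
  · exact Or.inr ⟨1, by norm_num, Or.inr (Or.inl (by linear_combination ((0:ℂ)) * hrel))⟩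
  · exact Or.inr ⟨2, by norm_num, Or.inl (by linear_combination ((-1:ℂ)*ω) * hrel)⟩
  · exact Or.inl (by linear_combination ((-1:ℂ)*ω + (1:ℂ)*ω^2) * hrel)
  · exact Or.inr ⟨0, by norm_num, Or.inl (by linear_combination ((-1:ℂ) + (1:ℂ)*ω^2 + (-1:ℂ)*ω^3) * hrel)⟩
  · exact Or.inr ⟨1, by norm_num, Or.inl (by linear_combination ((1:ℂ)) * hrel)⟩
  · exact Or.inr ⟨1, by norm_num, Or.inr (Or.inl (by linear_combination ((0:ℂ)) * hrel))⟩
  · exact Or.inr ⟨2, by norm_num, Or.inr (Or.inr (by linear_combination ((0:ℂ)) * hrel))⟩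
  · exact Or.inr ⟨2, by norm_num, Or.inr (Or.inl (by linear_combination ((0:ℂ)) * hrel))⟩
  · exact Or.inr ⟨3, by norm_num, Or.inl (by linear_combination ((1:ℂ)*ω^2) * hrel)⟩
  · exact Or.inl (by linear_combination ((1:ℂ)*ω^2 + (-1:ℂ)*ω^3) * hrel)
  · exact Or.inl (by linear_combination ((1:ℂ) + (-1:ℂ)*ω) * hrel)
  · exact Or.inr ⟨2, by norm_num, Or.inl (by linear_combination ((-1:ℂ)*ω) * hrel)⟩
  · exact Or.inr ⟨2, by norm_num, Or.inr (Or.inl (by linear_combination ((0:ℂ)) * hrel))⟩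
  · exact Or.inr ⟨3, by norm_num, Or.inr (Or.inr (by linear_combination ((0:ℂ)) * hrel))⟩
  · exact Or.inr ⟨3, by norm_num, Or.inr (Or.inl (by linear_combination ((0:ℂ)) * hrel))⟩
  · exact Or.inr ⟨4, by norm_num, Or.inl (by linear_combination ((-1:ℂ)*ω^3) * hrel)⟩
  · exact Or.inr ⟨5, by norm_num, Or.inl (by linear_combination ((1:ℂ) + (-1:ℂ)*ω + (1:ℂ)*ω^3) * hrel)⟩
  · exact Or.inl (by linear_combination ((-1:ℂ)*ω + (1:ℂ)*ω^2) * hrel)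
  · exact Or.inr ⟨3, by norm_num, Or.inl (by linear_combination ((1:ℂ)*ω^2) * hrel)⟩
  · exact Or.inr ⟨3, by norm_num, Or.inr (Or.inl (by linear_combination ((0:ℂ)) * hrel))⟩
  · exact Or.inr ⟨4, by norm_num, Or.inr (Or.inr (by linear_combination ((0:ℂ)) * hrel))⟩
  · exact Or.inr ⟨4, by norm_num, Or.inr (Or.inl (by linear_combination ((0:ℂ)) * hrel))⟩
  · exact Or.inr ⟨5, by norm_num, Or.inr (Or.inl (by linear_combination ((1:ℂ) + (-1:ℂ)*ω + (1:ℂ)*ω^3 + (-1:ℂ)*ω^4) * hrel))⟩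
  · exact Or.inr ⟨0, by norm_num, Or.inl (by linear_combination ((-1:ℂ) + (1:ℂ)*ω^2 + (-1:ℂ)*ω^3) * hrel)⟩
  · exact Or.inl (by linear_combination ((1:ℂ)*ω^2 + (-1:ℂ)*ω^3) * hrel)
  · exact Or.inr ⟨4, by norm_num, Or.inl (by linear_combination ((-1:ℂ)*ω^3) * hrel)⟩
  · exact Or.inr ⟨4, by norm_num, Or.inr (Or.inl (by linear_combination ((0:ℂ)) * hrel))⟩
  · exact Or.inr ⟨5, by norm_num, Or.inr (Or.inr (by linear_combination ((0:ℂ)) * hrel))⟩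

theorem traces_of_G_zeta6 (ω : ℂ) (hω : ω = (-1 + Complex.I * Real.sqrt 3) / 2) :
    {x : ℂ | ∃ M ∈ G (-ω), Matrix.trace (M : Matrix (Fin 2) (Fin 2) ℂ) = x} =
      {0} ∪ {x : ℂ | ∃ j < 6,
        x = (-ω) ^ j ∨ x = (1 - ω) * (-ω) ^ j ∨ x = 2 * (-ω) ^ j} := by
  have h3 : ((Real.sqrt 3 : ℝ) : ℂ) ^ 2 = 3 := by
    rw [← Complex.ofReal_pow, Real.sq_sqrt (by norm_num : (3:ℝ) ≥ 0)]
    norm_num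
  have h4 : (Complex.I * (Real.sqrt 3 : ℝ)) ^ 2 = -3 := by
    rw [mul_pow, Complex.I_sq, h3]; ring
  have hrel : ω ^ 2 + ω + 1 = 0 := by
    rw [hω]; linear_combination (1/4 : ℂ) * h4
  have h6 : (-ω) ^ 6 = 1 := by
    linear_combination (ω^4 - ω^3 + ω - 1) * hrel
  have hωne : (-ω : ℂ) ≠ 0 := by
    intro h0
    rw [neg_eq_zero] at h0
    rw [h0] at hrel
    norm_num at hrel
  have hinv : (-ω)⁻¹ = 1 + ω := by
    refine inv_eq_of_mul_eq_one_right ?_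
    linear_combination -hrel
  have hSmat : Smat (-ω) = !![0, -(1 + ω); 1, 0] := by rw [Smat, hinv]
  -- the generators as units
  have hdetR : IsUnit (Rmat (-ω)).det := by
    rw [Rmat, Matrix.det_fin_two_of]
    simpa using hωne
  have hdetS : IsUnit (Smat (-ω)).det := by
    rw [Smat, Matrix.det_fin_two_of]
    simp only [zero_mul, neg_neg, zero_sub, mul_one, sub_zero, neg_zero]
    simpa using inv_ne_zero hωne
  set uR : Matrix.GeneralLinearGroup (Fin 2) ℂ := Matrix.nonsingInvUnit _ hdetR with huRdef
  set uS : Matrix.GeneralLinearGroup (Fin 2) ℂ := Matrix.nonsingInvUnit _ hdetS with huSdef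
  have huR : (uR : Matrix (Fin 2) (Fin 2) ℂ) = Rmat (-ω) := rfl
  have huS : (uS : Matrix (Fin 2) (Fin 2) ℂ) = Smat (-ω) := rfl
  have hmemR : uR ∈ G (-ω) := Subgroup.subset_closure (Or.inl huR)
  have hmemS : uS ∈ G (-ω) := Subgroup.subset_closure (Or.inr huS)
  -- matrix computations
  have hRS : Rmat (-ω) * Smat (-ω) = !![1, -1; 1, 0] := by
    rw [Rmat, hSmat, Matrix.mul_fin_two]
    exact m2eq (by ring) (by linear_combination hrel) (by ring) (by ring)
  have hRS3 : (!![1, -1; 1, 0] : Matrix (Fin 2) (Fin 2) ℂ) ^ 3 = !![-1, 0; 0, -1] := by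
    rw [pow_succ, pow_two, Matrix.mul_fin_two, Matrix.mul_fin_two]
    norm_num
  have hS2 : Smat (-ω) ^ 2 = !![-(1 + ω), 0; 0, -(1 + ω)] := by
    rw [hSmat, pow_two, Matrix.mul_fin_two]
    norm_num
  have hS4 : Smat (-ω) ^ 4 = !![ω, 0; 0, ω] := by
    rw [show (4:ℕ) = 2 * 2 by norm_num, pow_mul, hS2, pow_two, Matrix.mul_fin_two]
    exact m2eq (by linear_combination hrel) (by ring) (by ring) (by linear_combination hrel)
  set g : Matrix.GeneralLinearGroup (Fin 2) ℂ := (uR * uS) ^ 3 * uS ^ 4 with hgdef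
  have hmemg : g ∈ G (-ω) := mul_mem (pow_mem (mul_mem hmemR hmemS) 3) (pow_mem hmemS 4)
  have hg : (g : Matrix (Fin 2) (Fin 2) ℂ) = (-ω) • (1 : Matrix (Fin 2) (Fin 2) ℂ) := by
    have hone : (-ω) • (1 : Matrix (Fin 2) (Fin 2) ℂ) = !![-ω, 0; 0, -ω] := by
      rw [Matrix.one_fin_two, ← Matrix.ext_iff]
      intro i j
      fin_cases i <;> fin_cases j <;> simp
    rw [hgdef, Units.val_mul, Units.val_pow_eq_pow_val, Units.val_pow_eq_pow_val,
      Units.val_mul, huR, huS, hRS, hRS3, hS4, Matrix.mul_fin_two, hone]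
    exact m2eq (by ring) (by ring) (by ring) (by ring)
  have hgj : ∀ j : ℕ, ((g ^ j : Matrix.GeneralLinearGroup (Fin 2) ℂ) :
      Matrix (Fin 2) (Fin 2) ℂ) = (-ω) ^ j • (1 : Matrix (Fin 2) (Fin 2) ℂ) := by
    intro j
    rw [Units.val_pow_eq_pow_val, hg, smul_pow, one_pow]
  ext x
  constructor
  · rintro ⟨M, hM, rfl⟩
    -- M lies in Hsub
    have hGH : G (-ω) ≤ Hsub ω h6 := by
      rw [G]
      refine Subgroup.closure_le _ |>.mpr ?_
      rintro A (hA | hA)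
      · refine ⟨0, 1, ?_, ?_⟩
        · rw [hA, Rmat, mulVec_fin_two, smul_vec_two]
          refine v2eq ?_ ?_ <;> simp [Matrix.cons_val_zero, Matrix.cons_val_one]
        · rw [hA, Rmat, Matrix.det_fin_two_of]
          ring
      · refine ⟨1, 4, ?_, ?_⟩
        · rw [hA, hSmat, mulVec_fin_two, smul_vec_two]
          refine v2eq ?_ ?_ <;>
            simp only [Matrix.cons_val', Matrix.cons_val_zero, Matrix.cons_val_one,
              Matrix.head_cons, Matrix.empty_val', Matrix.cons_val_fin_one, Matrix.of_apply,
              Matrix.head_fin_const, pow_one] <;>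
            first | linear_combination -hrel | linear_combination hrel
        · rw [hA, hSmat, Matrix.det_fin_two_of]
          linear_combination (ω^3 - ω^2 + 1) * hrel
    obtain ⟨a, b, hv, hd⟩ := hGH hM
    -- extract entries
    have e1 := congrFun hv 0
    have e2 := congrFun hv 1
    simp only [Matrix.mulVec, dotProduct, Fin.sum_univ_two, Matrix.cons_val_zero,
      Matrix.cons_val_one, Matrix.head_cons, Pi.smul_apply, smul_eq_mul] at e1 e2
    rw [Matrix.det_fin_two, pow_add] at hd
    have hzne : ((-ω) ^ a : ℂ) ≠ 0 := pow_ne_zero _ hωne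
    have htr : Matrix.trace (M : Matrix (Fin 2) (Fin 2) ℂ) = (-ω) ^ a + (-ω) ^ b := by
      rw [Matrix.trace_fin_two]
      refine mul_left_cancel₀ hzne ?_
      linear_combination ((-ω) ^ a - (M : Matrix (Fin 2) (Fin 2) ℂ) 1 1) * e1 +
        ((M : Matrix (Fin 2) (Fin 2) ℂ) 0 1) * e2 + hd
    have hred : ∀ n : ℕ, ((-ω) : ℂ) ^ n = (-ω) ^ (n % 6) := by
      intro n
      conv_lhs => rw [← Nat.div_add_mod n 6]
      rw [pow_add, pow_mul, h6, one_pow, one_mul]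
    rw [htr, hred a, hred b]
    have hcases := key_cases ω hrel (a % 6) (b % 6) (Nat.mod_lt _ (by norm_num))
      (Nat.mod_lt _ (by norm_num))
    rcases hcases with h0 | ⟨k, hk, hcase⟩
    · exact Or.inl h0
    · exact Or.inr ⟨k, hk, hcase⟩
  · rintro (hx | ⟨j, hj, hcase⟩)
    · -- x = 0 : use S
      refine ⟨uS, hmemS, ?_⟩
      rw [huS, hSmat, Matrix.trace_fin_two_of]
      simpa using hx.symm
    · rcases hcase with hc | hc | hc
      · -- x = (-ω)^j : use g^j * (uR * uS)
        refine ⟨g ^ j * (uR * uS), mul_mem (pow_mem hmemg j) (mul_mem hmemR hmemS), ?_⟩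
        rw [Units.val_mul, hgj j, Units.val_mul, huR, huS, hRS, smul_mul_assoc, one_mul,
          Matrix.trace_smul, smul_eq_mul, Matrix.trace_fin_two_of, hc]
        ring
      · -- x = (1-ω)(-ω)^j : use g^j * uR
        refine ⟨g ^ j * uR, mul_mem (pow_mem hmemg j) hmemR, ?_⟩
        rw [Units.val_mul, hgj j, huR, Rmat, smul_mul_assoc, one_mul,
          Matrix.trace_smul, smul_eq_mul, Matrix.trace_fin_two_of, hc]
        ring
      · -- x = 2(-ω)^j : use g^j
        refine ⟨g ^ j, pow_mem hmemg j, ?_⟩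
        rw [hgj j, Matrix.trace_smul, smul_eq_mul, Matrix.trace_one, hc]
        simp only [Fintype.card_fin, Nat.cast_ofNat]
        ring
end

section
/- Let ζ₅ = exp(2πi/5). Then the set { ev_{ζ₅}( (M_q(c₁,…,c_k))₂₁ ) : k ≥ 1, c₁,…,c_k ≥ 2 } — that is, the set of values 𝒮_{r/s}(ζ₅) of denominator polynomials over all irreducible fractions r/s > 1 — equals {0} ∪ { c, (1+ζ₅)·c, (1−ζ₅²)·c : c = ±ζ₅^j, j = 0, 1, …, 4 }. Moreover, for M = M_q(c₁,…,c_k) with r := ev₁(M₁₁) and s := ev₁(M₂₁), one has ev_{ζ₅}(M₂₁) = 0 if and only if s ≡ 0 (mod 5) and r ≡ 1 or 4 (mod 5). -/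
open LaurentPolynomial

/-- The matrix `R_q` over the Laurent polynomial ring `ℤ[q, q⁻¹]`. -/
noncomputable def Rq : Matrix (Fin 2) (Fin 2) (LaurentPolynomial ℤ) := !![T 1, 1; 0, 1]

/-- The matrix `S_q` over the Laurent polynomial ring `ℤ[q, q⁻¹]`. -/
noncomputable def Sq : Matrix (Fin 2) (Fin 2) (LaurentPolynomial ℤ) :=
  !![0, -(T (-1)); 1, 0]

/-- The subgroup `G_q` of `GL(2, ℤ[q, q⁻¹])` generated by `R_q` and `S_q`. -/
noncomputable def Gq : Subgroup (Matrix.GeneralLinearGroup (Fin 2) (LaurentPolynomial ℤ)) :=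
  Subgroup.closure {A : Matrix.GeneralLinearGroup (Fin 2) (LaurentPolynomial ℤ) |
    (A : Matrix (Fin 2) (Fin 2) (LaurentPolynomial ℤ)) = Rq ∨
    (A : Matrix (Fin 2) (Fin 2) (LaurentPolynomial ℤ)) = Sq}

/-- Given units `RU`, `SU` (specializing `R_q`, `S_q`) and a list `c = [c₁, …, c_k]`,
the matrix `M_q(c₁, …, c_k) = R_q^{c₁} S_q ⋯ R_q^{c_k} S_q`. -/
noncomputable def Mq (RU SU : Matrix.GeneralLinearGroup (Fin 2) (LaurentPolynomial ℤ))
    (c : List ℕ) : Matrix.GeneralLinearGroup (Fin 2) (LaurentPolynomial ℤ) :=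
  (c.map fun ci => RU ^ ci * SU).prod



-- ## Auxiliary: arithmetic in ℤ[x]/(x⁴+x³+x²+x+1) and 2×2 matrices over it
abbrev Z4 := ℤ × ℤ × ℤ × ℤ
def zadd (x y : Z4) : Z4 := (x.1+y.1, x.2.1+y.2.1, x.2.2.1+y.2.2.1, x.2.2.2+y.2.2.2)
def zmul (x y : Z4) : Z4 :=
  (x.1*y.1 + (x.2.2.1*y.2.2.2 + x.2.2.2*y.2.2.1) - (x.2.1*y.2.2.2 + x.2.2.1*y.2.2.1 + x.2.2.2*y.2.1),
   x.1*y.2.1 + x.2.1*y.1 + x.2.2.2*y.2.2.2 - (x.2.1*y.2.2.2 + x.2.2.1*y.2.2.1 + x.2.2.2*y.2.1),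
   x.1*y.2.2.1 + x.2.1*y.2.1 + x.2.2.1*y.1 - (x.2.1*y.2.2.2 + x.2.2.1*y.2.2.1 + x.2.2.2*y.2.1),
   x.1*y.2.2.2 + x.2.1*y.2.2.1 + x.2.2.1*y.2.1 + x.2.2.2*y.1 - (x.2.1*y.2.2.2 + x.2.2.1*y.2.2.1 + x.2.2.2*y.2.1))
abbrev M2 := Z4 × Z4 × Z4 × Z4
abbrev V2 := Z4 × Z4
def mmul (A B : M2) : M2 :=
  (zadd (zmul A.1 B.1) (zmul A.2.1 B.2.2.1),
   zadd (zmul A.1 B.2.1) (zmul A.2.1 B.2.2.2),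
   zadd (zmul A.2.2.1 B.1) (zmul A.2.2.2 B.2.2.1),
   zadd (zmul A.2.2.1 B.2.1) (zmul A.2.2.2 B.2.2.2))
def vapp (A : M2) (v : V2) : V2 :=
  (zadd (zmul A.1 v.1) (zmul A.2.1 v.2), zadd (zmul A.2.2.1 v.1) (zmul A.2.2.2 v.2))
def colM (A : M2) : V2 := (A.1, A.2.2.1)
def mI : M2 := ((1,0,0,0),(0,0,0,0),(0,0,0,0),(1,0,0,0))
def mpow (A : M2) : ℕ → M2
  | 0 => mI
  | n+1 => mmul A (mpow A n)
def Rz : M2 := ((0,1,0,0),(1,0,0,0),(0,0,0,0),(1,0,0,0))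
def Sz : M2 := ((0,0,0,0),(1,1,1,1),(1,0,0,0),(0,0,0,0))
def Az (j : ℕ) : M2 := mmul (mpow Rz j) Sz
def Nw : List ℕ → M2
  | [] => mI
  | ci :: t => mmul (mmul (mpow Rz ci) Sz) (Nw t)
def dig (n : ℕ) (i : ℕ) : ℤ := (↑(n / 5^i % 5) : ℤ) - 2
def decode (n : ℕ) : V2 :=
  ((dig n 0, dig n 1, dig n 2, dig n 3), (dig n 4, dig n 5, dig n 6, dig n 7))

def VFc : List ℕ := [191401,175756,97656,175781,191406,194531,195156,191531,194656,272781,273406,289031,194681,210306,210931,289056,292181,194686,195311,198436,214061,292186,292311,214086,94532,97657,175782,176407,192032,175907,191532,192157,270282,273407,191557,192182,195307,210932,289057,289182,82037,97662,98287,176412,179537,175912,176537,179662,195287,273412,97687,98312,101437,117062,195187,97812,194687,192187,179687,117187,273437,210937,198437,195937,292812,195437,273562,289187,292312,292937,117212,195337,210962,214087,214712,211087,214212,292337,292962,308587,101442,101567,179692,195317,198442,199067,117217,120342,198467,199092,214717,198592,214217,214842,292967,296092,176538,98313,98438,176563,192188,195313,195938,98443,101568,179693,180318,195943,101593,117218,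117843,195968,199093,195468,196093,199218,214843,292968,214868,199223]

def VF : List V2 := VFc.map decode

def E30 : List Z4 := [
  ((-1:ℤ),-2,-1,-1),
  ((-1:ℤ),-1,-2,-1),
  ((-1:ℤ),-1,-1,-1),
  ((-1:ℤ),-1,-1,0),
  ((-1:ℤ),-1,0,0),
  ((-1:ℤ),0,0,0),
  ((-1:ℤ),0,0,1),
  ((-1:ℤ),0,1,0),
  ((0:ℤ),-1,-1,-1),
  ((0:ℤ),-1,-1,0),
  ((0:ℤ),-1,0,0),
  ((0:ℤ),-1,0,1),
  ((0:ℤ),0,-1,-1),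
  ((0:ℤ),0,-1,0),
  ((0:ℤ),0,0,-1),
  ((0:ℤ),0,0,1),
  ((0:ℤ),0,1,0),
  ((0:ℤ),0,1,1),
  ((0:ℤ),1,0,-1),
  ((0:ℤ),1,0,0),
  ((0:ℤ),1,1,0),
  ((0:ℤ),1,1,1),
  ((1:ℤ),0,-1,0),
  ((1:ℤ),0,0,-1),
  ((1:ℤ),0,0,0),
  ((1:ℤ),1,0,0),
  ((1:ℤ),1,1,0),
  ((1:ℤ),1,1,1),
  ((1:ℤ),1,2,1),
  ((1:ℤ),2,1,1)]


lemma col_mmul (A B : M2) : colM (mmul A B) = vapp A (colM B) := rfl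

lemma mmul_mI (A : M2) : mmul A mI = A := by
  obtain ⟨⟨a1,a2,a3,a4⟩,⟨b1,b2,b3,b4⟩,⟨c1,c2,c3,c4⟩,⟨d1,d2,d3,d4⟩⟩ := A
  simp only [mmul, mI, zmul, zadd]
  norm_num

lemma mpow_Rz_add5 : ∀ n, mpow Rz (n+5) = mpow Rz n := by
  intro n; induction n with
  | zero => decide
  | succ n ih =>
    have h : n+1+5 = (n+5)+1 := rfl
    rw [h]
    show mmul Rz (mpow Rz (n+5)) = mmul Rz (mpow Rz n)
    rw [ih]

lemma mpow_Rz_mod : ∀ n, mpow Rz n = mpow Rz (n % 5) := by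
  intro n; induction n using Nat.strong_induction_on with
  | _ n ih =>
    rcases Nat.lt_or_ge n 5 with h | h
    · rw [Nat.mod_eq_of_lt h]
    · have hn : n = (n - 5) + 5 := by omega
      rw [hn, mpow_Rz_add5, ih (n-5) (by omega)]
      congr 1
      omega

set_option maxRecDepth 100000 in
set_option maxHeartbeats 4000000 in
lemma closure_fact : ∀ j : Fin 5, colM (Az j) ∈ VF ∧ ∀ v ∈ VF, vapp (Az j) v ∈ VF := by decide

lemma mem_VF : ∀ c : List ℕ, c ≠ [] → colM (Nw c) ∈ VF := by
  intro c
  induction c with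
  | nil => intro h; exact absurd rfl h
  | cons ci t ih =>
    intro _
    have hj : ci % 5 < 5 := Nat.mod_lt _ (by norm_num)
    rcases t with _ | ⟨cj, t'⟩
    · have h1 : Nw [ci] = Az (ci % 5) := by
        show mmul (mmul (mpow Rz ci) Sz) mI = _
        rw [mmul_mI, mpow_Rz_mod]
        rfl
      rw [h1]
      exact (closure_fact ⟨ci % 5, hj⟩).1
    · have h1 : colM (Nw (ci :: cj :: t')) = vapp (Az (ci % 5)) (colM (Nw (cj :: t'))) := by
        show colM (mmul (mmul (mpow Rz ci) Sz) (Nw (cj :: t'))) = _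
        rw [col_mmul, mpow_Rz_mod]
        rfl
      rw [h1]
      exact (closure_fact ⟨ci % 5, hj⟩).2 _ (ih (by simp))

set_option maxRecDepth 100000 in
set_option maxHeartbeats 2000000 in
lemma split_fact : ∀ v ∈ VF, v.2 = ((0:ℤ),0,0,0) ∨ v.2 ∈ E30 := by decide

def chi (x : Z4) : ZMod 5 := ((x.1 + x.2.1 + x.2.2.1 + x.2.2.2 : ℤ) : ZMod 5)

set_option maxRecDepth 100000 in
set_option maxHeartbeats 2000000 in
lemma chi_fact : ∀ v ∈ VF,
    (v.2 = ((0:ℤ),0,0,0)) ↔ (chi v.2 = 0 ∧ (chi v.1 = 1 ∨ chi v.1 = 4)) := by decide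

-- ## The evaluation homomorphisms on the model
noncomputable def psi (ζ : ℂ) (x : Z4) : ℂ := x.1 + x.2.1*ζ + x.2.2.1*ζ^2 + x.2.2.2*ζ^3
noncomputable def psiM (ζ : ℂ) (A : M2) : Matrix (Fin 2) (Fin 2) ℂ :=
  !![psi ζ A.1, psi ζ A.2.1; psi ζ A.2.2.1, psi ζ A.2.2.2]
def chiM (A : M2) : Matrix (Fin 2) (Fin 2) (ZMod 5) :=
  !![chi A.1, chi A.2.1; chi A.2.2.1, chi A.2.2.2]

lemma psi_add {ζ : ℂ} (x y : Z4) : psi ζ (zadd x y) = psi ζ x + psi ζ y := by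
  obtain ⟨a1,a2,a3,a4⟩ := x; obtain ⟨b1,b2,b3,b4⟩ := y
  simp only [psi, zadd]; push_cast; ring

lemma psi_mul {ζ : ℂ} (hΦ : ζ^4 + ζ^3 + ζ^2 + ζ + 1 = 0) (x y : Z4) :
    psi ζ (zmul x y) = psi ζ x * psi ζ y := by
  obtain ⟨a1,a2,a3,a4⟩ := x; obtain ⟨b1,b2,b3,b4⟩ := y
  simp only [psi, zmul]; push_cast
  linear_combination (((a3:ℂ)*b4 + (a4:ℂ)*b3 + ((a4:ℂ)*b4)*ζ) * (1 - ζ)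
    - ((a2:ℂ)*b4 + (a3:ℂ)*b3 + (a4:ℂ)*b2)) * hΦ

lemma chi_add (x y : Z4) : chi (zadd x y) = chi x + chi y := by
  obtain ⟨a1,a2,a3,a4⟩ := x; obtain ⟨b1,b2,b3,b4⟩ := y
  simp only [chi, zadd]; push_cast; ring

lemma chi_mul (x y : Z4) : chi (zmul x y) = chi x * chi y := by
  obtain ⟨a1,a2,a3,a4⟩ := x; obtain ⟨b1,b2,b3,b4⟩ := y
  have h5 : (5 : ZMod 5) = 0 := by decide
  simp only [chi, zmul]; push_cast
  linear_combination (-((a2:ZMod 5)*b4 + (a3:ZMod 5)*b3 + (a4:ZMod 5)*b2)) * h5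

lemma psiM_one {ζ : ℂ} : psiM ζ mI = 1 := by
  ext i j; fin_cases i <;> fin_cases j <;> simp [psiM, mI, psi, Matrix.one_apply]

lemma psiM_mul {ζ : ℂ} (hΦ : ζ^4 + ζ^3 + ζ^2 + ζ + 1 = 0) (A B : M2) :
    psiM ζ (mmul A B) = psiM ζ A * psiM ζ B := by
  ext i j
  fin_cases i <;> fin_cases j <;>
    simp [psiM, mmul, Matrix.mul_apply, Fin.sum_univ_two, psi_add, psi_mul hΦ]

lemma chiM_one : chiM mI = 1 := by
  ext i j; fin_cases i <;> fin_cases j <;> simp [chiM, mI, chi, Matrix.one_apply]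

lemma chiM_mul (A B : M2) : chiM (mmul A B) = chiM A * chiM B := by
  ext i j
  fin_cases i <;> fin_cases j <;>
    simp [chiM, mmul, Matrix.mul_apply, Fin.sum_univ_two, chi_add, chi_mul]

-- ## The bridge between `Mq` and the model
open LaurentPolynomial in
lemma bridge {R : Type} [CommRing R] (f : LaurentPolynomial ℤ →+* R)
    (g : M2 → Matrix (Fin 2) (Fin 2) R)
    (hone : g mI = 1) (hmul : ∀ A B, g (mmul A B) = g A * g B)
    (hR : f.mapMatrix Rq = g Rz) (hS : f.mapMatrix Sq = g Sz)
    (RU SU : Matrix.GeneralLinearGroup (Fin 2) (LaurentPolynomial ℤ))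
    (hRU : (RU : Matrix (Fin 2) (Fin 2) (LaurentPolynomial ℤ)) = Rq)
    (hSU : (SU : Matrix (Fin 2) (Fin 2) (LaurentPolynomial ℤ)) = Sq) :
    ∀ c : List ℕ,
      f.mapMatrix ((Mq RU SU c : Matrix (Fin 2) (Fin 2) (LaurentPolynomial ℤ))) = g (Nw c) := by
  have hpow : ∀ (A : M2) (n : ℕ), g (mpow A n) = (g A) ^ n := by
    intro A n; induction n with
    | zero => simpa [mpow] using hone
    | succ n ihn =>
      show g (mmul A (mpow A n)) = _
      rw [hmul, ihn, ← pow_succ']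
  intro c
  induction c with
  | nil =>
    show f.mapMatrix ((Mq RU SU [] : Matrix (Fin 2) (Fin 2) (LaurentPolynomial ℤ))) = g mI
    have h1 : (Mq RU SU [] : Matrix (Fin 2) (Fin 2) (LaurentPolynomial ℤ)) = 1 := by
      simp [Mq]
    rw [h1, map_one, hone]
  | cons ci t ih =>
    have h1 : (Mq RU SU (ci :: t) : Matrix (Fin 2) (Fin 2) (LaurentPolynomial ℤ)) =
        Rq ^ ci * Sq * (Mq RU SU t : Matrix (Fin 2) (Fin 2) (LaurentPolynomial ℤ)) := by
      have : Mq RU SU (ci :: t) = (RU ^ ci * SU) * Mq RU SU t := by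
        simp [Mq]
      rw [this, Units.val_mul, Units.val_mul, Units.val_pow_eq_pow_val, hRU, hSU]
    rw [h1, map_mul, map_mul, map_pow, hR, hS, ih]
    show _ = g (mmul (mmul (mpow Rz ci) Sz) (Nw t))
    rw [hmul, hmul, hpow]

theorem denominators_at_zeta5 (ζ : ℂ)
    (hζ : ζ = Complex.exp (2 * Real.pi * Complex.I / 5))
    (RU SU : Matrix.GeneralLinearGroup (Fin 2) (LaurentPolynomial ℤ))
    (hRU : (RU : Matrix (Fin 2) (Fin 2) (LaurentPolynomial ℤ)) = Rq)
    (hSU : (SU : Matrix (Fin 2) (Fin 2) (LaurentPolynomial ℤ)) = Sq)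
    (ev₁ : LaurentPolynomial ℤ →+* ℤ) (hev₁ : ev₁ (T 1) = 1)
    (evζ : LaurentPolynomial ℤ →+* ℂ) (hevζ : evζ (T 1) = ζ) :
    ({z : ℂ | ∃ c : List ℕ, c ≠ [] ∧ (∀ x ∈ c, 2 ≤ x) ∧
        z = evζ ((Mq RU SU c : Matrix (Fin 2) (Fin 2) (LaurentPolynomial ℤ)) 1 0)} =
      {0} ∪ {z : ℂ | ∃ j < 5, ∃ s : ℂ, (s = ζ ^ j ∨ s = -ζ ^ j) ∧
        (z = s ∨ z = (1 + ζ) * s ∨ z = (1 - ζ ^ 2) * s)}) ∧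
    (∀ c : List ℕ, c ≠ [] → (∀ x ∈ c, 2 ≤ x) →
      (evζ ((Mq RU SU c : Matrix (Fin 2) (Fin 2) (LaurentPolynomial ℤ)) 1 0) = 0 ↔
        ev₁ ((Mq RU SU c : Matrix (Fin 2) (Fin 2) (LaurentPolynomial ℤ)) 1 0) % 5 = 0 ∧
        (ev₁ ((Mq RU SU c : Matrix (Fin 2) (Fin 2) (LaurentPolynomial ℤ)) 0 0) % 5 = 1 ∨
         ev₁ ((Mq RU SU c : Matrix (Fin 2) (Fin 2) (LaurentPolynomial ℤ)) 0 0) % 5 = 4))) := by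

  classical
  have hprim : IsPrimitiveRoot ζ 5 := by
    rw [hζ]
    have := Complex.isPrimitiveRoot_exp 5 (by norm_num)
    convert this using 3 <;> norm_num
  have hζ5 : ζ ^ 5 = 1 := hprim.pow_eq_one
  have hζ1 : ζ ≠ 1 := hprim.ne_one (by norm_num)
  have hζ0 : ζ ≠ 0 := by
    rw [hζ]; exact Complex.exp_ne_zero _
  have hΦ : ζ^4 + ζ^3 + ζ^2 + ζ + 1 = 0 := by
    have h : (ζ - 1) * (ζ^4 + ζ^3 + ζ^2 + ζ + 1) = 0 := by linear_combination hζ5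
    rcases mul_eq_zero.mp h with h | h
    · exact absurd (by linear_combination h) hζ1
    · exact h
  have hζ2 : ζ ^ 2 ≠ 1 := hprim.pow_ne_one_of_pos_of_lt (by norm_num) (by norm_num)
  have h1p : (1 + ζ) ≠ 0 := by
    intro h
    apply hζ2
    have hm : ζ = -1 := by linear_combination h
    rw [hm]; norm_num
  have h2m : (1 - ζ ^ 2) ≠ 0 := by
    intro h; exact hζ2 (by linear_combination -h)
  -- the two specialization bridges
  have hxi : evζ (T (-1)) = -(1 + ζ + ζ^2 + ζ^3) := by
    have hmul1 : evζ (T (-1)) * ζ = 1 := by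
      rw [← hevζ, ← map_mul, ← T_add]
      norm_num
    have h2 : (-(1 + ζ + ζ^2 + ζ^3)) * ζ = 1 := by linear_combination -hΦ
    have := mul_right_cancel₀ hζ0 (hmul1.trans h2.symm)
    exact this
  have hRζ : evζ.mapMatrix Rq = psiM ζ Rz := by
    ext i j
    fin_cases i <;> fin_cases j <;>
      simp [Rq, Rz, psiM, psi, RingHom.mapMatrix_apply, Matrix.map_apply, hevζ]
  have hSζ : evζ.mapMatrix Sq = psiM ζ Sz := by
    ext i j
    fin_cases i <;> fin_cases j <;>
      simp [Sq, Sz, psiM, psi, RingHom.mapMatrix_apply, Matrix.map_apply, hxi] <;> ring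
  have bζ := bridge evζ (psiM ζ) psiM_one (psiM_mul hΦ) hRζ hSζ RU SU hRU hSU
  set φ5 : LaurentPolynomial ℤ →+* ZMod 5 := (Int.castRingHom (ZMod 5)).comp ev₁ with hφ5
  have hev1i : ev₁ (T (-1)) = 1 := by
    have hmul1 : ev₁ (T (-1)) * ev₁ (T 1) = 1 := by
      rw [← map_mul, ← T_add]
      norm_num
    rw [hev₁, mul_one] at hmul1
    exact hmul1
  have hR5 : φ5.mapMatrix Rq = chiM Rz := by
    ext i j
    fin_cases i <;> fin_cases j <;>
      simp [Rq, Rz, chiM, chi, RingHom.mapMatrix_apply, Matrix.map_apply, hφ5, hev₁] <;> decide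
  have hS5 : φ5.mapMatrix Sq = chiM Sz := by
    ext i j
    fin_cases i <;> fin_cases j <;>
      simp [Sq, Sz, chiM, chi, RingHom.mapMatrix_apply, Matrix.map_apply, hφ5, hev1i] <;> decide
  have b5 := bridge φ5 chiM chiM_one chiM_mul hR5 hS5 RU SU hRU hSU
  -- entry extraction
  have hval : ∀ c : List ℕ,
      evζ ((Mq RU SU c : Matrix (Fin 2) (Fin 2) (LaurentPolynomial ℤ)) 1 0)
        = psi ζ (colM (Nw c)).2 := by
    intro c
    have h := congrFun (congrFun (bζ c) 1) 0
    simpa [RingHom.mapMatrix_apply, Matrix.map_apply, psiM, colM] using h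
  have hval5 : ∀ c : List ℕ,
      ((ev₁ ((Mq RU SU c : Matrix (Fin 2) (Fin 2) (LaurentPolynomial ℤ)) 1 0) : ℤ) : ZMod 5)
          = chi (colM (Nw c)).2
        ∧ ((ev₁ ((Mq RU SU c : Matrix (Fin 2) (Fin 2) (LaurentPolynomial ℤ)) 0 0) : ℤ) : ZMod 5)
          = chi (colM (Nw c)).1 := by
    intro c
    have h1 := congrFun (congrFun (b5 c) 1) 0
    have h2 := congrFun (congrFun (b5 c) 0) 0
    constructor
    · simpa [RingHom.mapMatrix_apply, Matrix.map_apply, chiM, colM, hφ5] using h1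
    · simpa [RingHom.mapMatrix_apply, Matrix.map_apply, chiM, colM, hφ5] using h2
  have tmod : ∀ a b : ℤ, a % 5 = b % 5 ↔ ((a : ZMod 5) = (b : ZMod 5)) :=
    fun a b => ⟨(ZMod.intCast_eq_intCast_iff a b 5).mpr, (ZMod.intCast_eq_intCast_iff a b 5).mp⟩

  have HB : ∀ e ∈ E30, (psi ζ e ≠ 0) ∧ ∃ j, j < 5 ∧ ∃ s : ℂ, (s = ζ ^ j ∨ s = -ζ ^ j) ∧

      (psi ζ e = s ∨ psi ζ e = (1 + ζ) * s ∨ psi ζ e = (1 - ζ ^ 2) * s) := by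

    intro e he

    simp only [E30, List.mem_cons, List.not_mem_nil, or_false] at he

    rcases he with rfl|rfl|rfl|rfl|rfl|rfl|rfl|rfl|rfl|rfl|rfl|rfl|rfl|rfl|rfl|rfl|rfl|rfl|rfl|rfl|rfl|rfl|rfl|rfl|rfl|rfl|rfl|rfl|rfl|rfl

    · have hpe : psi ζ (((-1:ℤ),-2,-1,-1)) = (1 - ζ ^ 2) * (ζ ^ 4) := by

        norm_num [psi]

        try linear_combination (((-1:ℂ)) * ζ ^ 0 + ((-1:ℂ)) * ζ ^ 1 + ((1:ℂ)) * ζ ^ 2) * hΦ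

      exact ⟨by rw [hpe]; exact mul_ne_zero h2m (pow_ne_zero 4 hζ0), 4, by norm_num, ζ ^ 4, Or.inl rfl, Or.inr (Or.inr hpe)⟩

    · have hpe : psi ζ (((-1:ℤ),-1,-2,-1)) = (1 - ζ ^ 2) * (-ζ ^ 2) := by

        norm_num [psi]

        try linear_combination (((-1:ℂ)) * ζ ^ 0) * hΦ

      exact ⟨by rw [hpe]; exact mul_ne_zero h2m (neg_ne_zero.mpr (pow_ne_zero 2 hζ0)), 2, by norm_num, -ζ ^ 2, Or.inr rfl, Or.inr (Or.inr hpe)⟩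

    · have hpe : psi ζ (((-1:ℤ),-1,-1,-1)) = ζ ^ 4 := by

        norm_num [psi]

        try linear_combination (((-1:ℂ)) * ζ ^ 0) * hΦ

      exact ⟨by rw [hpe]; exact pow_ne_zero 4 hζ0, 4, by norm_num, ζ ^ 4, Or.inl rfl, Or.inl hpe⟩

    · have hpe : psi ζ (((-1:ℤ),-1,-1,0)) = (1 + ζ) * (ζ ^ 3) := by

        norm_num [psi]

        try linear_combination (((-1:ℂ)) * ζ ^ 0) * hΦ

      exact ⟨by rw [hpe]; exact mul_ne_zero h1p (pow_ne_zero 3 hζ0), 3, by norm_num, ζ ^ 3, Or.inl rfl, Or.inr (Or.inl hpe)⟩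

    · have hpe : psi ζ (((-1:ℤ),-1,0,0)) = (1 + ζ) * (-ζ ^ 0) := by

        norm_num [psi]

        try linear_combination ((0:ℂ)) * hΦ

      exact ⟨by rw [hpe]; exact mul_ne_zero h1p (neg_ne_zero.mpr (pow_ne_zero 0 hζ0)), 0, by norm_num, -ζ ^ 0, Or.inr rfl, Or.inr (Or.inl hpe)⟩

    · have hpe : psi ζ (((-1:ℤ),0,0,0)) = -ζ ^ 0 := by

        norm_num [psi]

        try linear_combination ((0:ℂ)) * hΦ

      exact ⟨by rw [hpe]; exact neg_ne_zero.mpr (pow_ne_zero 0 hζ0), 0, by norm_num, -ζ ^ 0, Or.inr rfl, Or.inl hpe⟩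

    · have hpe : psi ζ (((-1:ℤ),0,0,1)) = (1 - ζ ^ 2) * (ζ ^ 3) := by

        norm_num [psi]

        try linear_combination (((-1:ℂ)) * ζ ^ 0 + ((1:ℂ)) * ζ ^ 1) * hΦ

      exact ⟨by rw [hpe]; exact mul_ne_zero h2m (pow_ne_zero 3 hζ0), 3, by norm_num, ζ ^ 3, Or.inl rfl, Or.inr (Or.inr hpe)⟩

    · have hpe : psi ζ (((-1:ℤ),0,1,0)) = (1 - ζ ^ 2) * (-ζ ^ 0) := by

        norm_num [psi]

        try linear_combination ((0:ℂ)) * hΦ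

      exact ⟨by rw [hpe]; exact mul_ne_zero h2m (neg_ne_zero.mpr (pow_ne_zero 0 hζ0)), 0, by norm_num, -ζ ^ 0, Or.inr rfl, Or.inr (Or.inr hpe)⟩

    · have hpe : psi ζ (((0:ℤ),-1,-1,-1)) = (1 + ζ) * (ζ ^ 4) := by

        norm_num [psi]

        try linear_combination (((-1:ℂ)) * ζ ^ 1) * hΦ

      exact ⟨by rw [hpe]; exact mul_ne_zero h1p (pow_ne_zero 4 hζ0), 4, by norm_num, ζ ^ 4, Or.inl rfl, Or.inr (Or.inl hpe)⟩

    · have hpe : psi ζ (((0:ℤ),-1,-1,0)) = (1 + ζ) * (-ζ ^ 1) := by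

        norm_num [psi]

        try linear_combination ((0:ℂ)) * hΦ

      exact ⟨by rw [hpe]; exact mul_ne_zero h1p (neg_ne_zero.mpr (pow_ne_zero 1 hζ0)), 1, by norm_num, -ζ ^ 1, Or.inr rfl, Or.inr (Or.inl hpe)⟩

    · have hpe : psi ζ (((0:ℤ),-1,0,0)) = -ζ ^ 1 := by

        norm_num [psi]

        try linear_combination ((0:ℂ)) * hΦ

      exact ⟨by rw [hpe]; exact neg_ne_zero.mpr (pow_ne_zero 1 hζ0), 1, by norm_num, -ζ ^ 1, Or.inr rfl, Or.inl hpe⟩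

    · have hpe : psi ζ (((0:ℤ),-1,0,1)) = (1 - ζ ^ 2) * (-ζ ^ 1) := by

        norm_num [psi]

        try linear_combination ((0:ℂ)) * hΦ

      exact ⟨by rw [hpe]; exact mul_ne_zero h2m (neg_ne_zero.mpr (pow_ne_zero 1 hζ0)), 1, by norm_num, -ζ ^ 1, Or.inr rfl, Or.inr (Or.inr hpe)⟩

    · have hpe : psi ζ (((0:ℤ),0,-1,-1)) = (1 + ζ) * (-ζ ^ 2) := by

        norm_num [psi]

        try linear_combination ((0:ℂ)) * hΦ

      exact ⟨by rw [hpe]; exact mul_ne_zero h1p (neg_ne_zero.mpr (pow_ne_zero 2 hζ0)), 2, by norm_num, -ζ ^ 2, Or.inr rfl, Or.inr (Or.inl hpe)⟩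

    · have hpe : psi ζ (((0:ℤ),0,-1,0)) = -ζ ^ 2 := by

        norm_num [psi]

        try linear_combination ((0:ℂ)) * hΦ

      exact ⟨by rw [hpe]; exact neg_ne_zero.mpr (pow_ne_zero 2 hζ0), 2, by norm_num, -ζ ^ 2, Or.inr rfl, Or.inl hpe⟩

    · have hpe : psi ζ (((0:ℤ),0,0,-1)) = -ζ ^ 3 := by

        norm_num [psi]

        try linear_combination ((0:ℂ)) * hΦ

      exact ⟨by rw [hpe]; exact neg_ne_zero.mpr (pow_ne_zero 3 hζ0), 3, by norm_num, -ζ ^ 3, Or.inr rfl, Or.inl hpe⟩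

    · have hpe : psi ζ (((0:ℤ),0,0,1)) = ζ ^ 3 := by

        norm_num [psi]

        try linear_combination ((0:ℂ)) * hΦ

      exact ⟨by rw [hpe]; exact pow_ne_zero 3 hζ0, 3, by norm_num, ζ ^ 3, Or.inl rfl, Or.inl hpe⟩

    · have hpe : psi ζ (((0:ℤ),0,1,0)) = ζ ^ 2 := by

        norm_num [psi]

        try linear_combination ((0:ℂ)) * hΦ

      exact ⟨by rw [hpe]; exact pow_ne_zero 2 hζ0, 2, by norm_num, ζ ^ 2, Or.inl rfl, Or.inl hpe⟩

    · have hpe : psi ζ (((0:ℤ),0,1,1)) = (1 + ζ) * (ζ ^ 2) := by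

        norm_num [psi]

        try linear_combination ((0:ℂ)) * hΦ

      exact ⟨by rw [hpe]; exact mul_ne_zero h1p (pow_ne_zero 2 hζ0), 2, by norm_num, ζ ^ 2, Or.inl rfl, Or.inr (Or.inl hpe)⟩

    · have hpe : psi ζ (((0:ℤ),1,0,-1)) = (1 - ζ ^ 2) * (ζ ^ 1) := by

        norm_num [psi]

        try linear_combination ((0:ℂ)) * hΦ

      exact ⟨by rw [hpe]; exact mul_ne_zero h2m (pow_ne_zero 1 hζ0), 1, by norm_num, ζ ^ 1, Or.inl rfl, Or.inr (Or.inr hpe)⟩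

    · have hpe : psi ζ (((0:ℤ),1,0,0)) = ζ ^ 1 := by

        norm_num [psi]

        try linear_combination ((0:ℂ)) * hΦ

      exact ⟨by rw [hpe]; exact pow_ne_zero 1 hζ0, 1, by norm_num, ζ ^ 1, Or.inl rfl, Or.inl hpe⟩

    · have hpe : psi ζ (((0:ℤ),1,1,0)) = (1 + ζ) * (ζ ^ 1) := by

        norm_num [psi]

        try linear_combination ((0:ℂ)) * hΦ

      exact ⟨by rw [hpe]; exact mul_ne_zero h1p (pow_ne_zero 1 hζ0), 1, by norm_num, ζ ^ 1, Or.inl rfl, Or.inr (Or.inl hpe)⟩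

    · have hpe : psi ζ (((0:ℤ),1,1,1)) = (1 + ζ) * (-ζ ^ 4) := by

        norm_num [psi]

        try linear_combination (((1:ℂ)) * ζ ^ 1) * hΦ

      exact ⟨by rw [hpe]; exact mul_ne_zero h1p (neg_ne_zero.mpr (pow_ne_zero 4 hζ0)), 4, by norm_num, -ζ ^ 4, Or.inr rfl, Or.inr (Or.inl hpe)⟩

    · have hpe : psi ζ (((1:ℤ),0,-1,0)) = (1 - ζ ^ 2) * (ζ ^ 0) := by

        norm_num [psi]

        try linear_combination ((0:ℂ)) * hΦ

      exact ⟨by rw [hpe]; exact mul_ne_zero h2m (pow_ne_zero 0 hζ0), 0, by norm_num, ζ ^ 0, Or.inl rfl, Or.inr (Or.inr hpe)⟩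

    · have hpe : psi ζ (((1:ℤ),0,0,-1)) = (1 - ζ ^ 2) * (-ζ ^ 3) := by

        norm_num [psi]

        try linear_combination (((1:ℂ)) * ζ ^ 0 + ((-1:ℂ)) * ζ ^ 1) * hΦ

      exact ⟨by rw [hpe]; exact mul_ne_zero h2m (neg_ne_zero.mpr (pow_ne_zero 3 hζ0)), 3, by norm_num, -ζ ^ 3, Or.inr rfl, Or.inr (Or.inr hpe)⟩

    · have hpe : psi ζ (((1:ℤ),0,0,0)) = ζ ^ 0 := by

        norm_num [psi]

        try linear_combination ((0:ℂ)) * hΦ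

      exact ⟨by rw [hpe]; exact pow_ne_zero 0 hζ0, 0, by norm_num, ζ ^ 0, Or.inl rfl, Or.inl hpe⟩

    · have hpe : psi ζ (((1:ℤ),1,0,0)) = (1 + ζ) * (ζ ^ 0) := by

        norm_num [psi]

        try linear_combination ((0:ℂ)) * hΦ

      exact ⟨by rw [hpe]; exact mul_ne_zero h1p (pow_ne_zero 0 hζ0), 0, by norm_num, ζ ^ 0, Or.inl rfl, Or.inr (Or.inl hpe)⟩

    · have hpe : psi ζ (((1:ℤ),1,1,0)) = (1 + ζ) * (-ζ ^ 3) := by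

        norm_num [psi]

        try linear_combination (((1:ℂ)) * ζ ^ 0) * hΦ

      exact ⟨by rw [hpe]; exact mul_ne_zero h1p (neg_ne_zero.mpr (pow_ne_zero 3 hζ0)), 3, by norm_num, -ζ ^ 3, Or.inr rfl, Or.inr (Or.inl hpe)⟩

    · have hpe : psi ζ (((1:ℤ),1,1,1)) = -ζ ^ 4 := by

        norm_num [psi]

        try linear_combination (((1:ℂ)) * ζ ^ 0) * hΦ

      exact ⟨by rw [hpe]; exact neg_ne_zero.mpr (pow_ne_zero 4 hζ0), 4, by norm_num, -ζ ^ 4, Or.inr rfl, Or.inl hpe⟩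

    · have hpe : psi ζ (((1:ℤ),1,2,1)) = (1 - ζ ^ 2) * (ζ ^ 2) := by

        norm_num [psi]

        try linear_combination (((1:ℂ)) * ζ ^ 0) * hΦ

      exact ⟨by rw [hpe]; exact mul_ne_zero h2m (pow_ne_zero 2 hζ0), 2, by norm_num, ζ ^ 2, Or.inl rfl, Or.inr (Or.inr hpe)⟩

    · have hpe : psi ζ (((1:ℤ),2,1,1)) = (1 - ζ ^ 2) * (-ζ ^ 4) := by

        norm_num [psi]

        try linear_combination (((1:ℂ)) * ζ ^ 0 + ((1:ℂ)) * ζ ^ 1 + ((-1:ℂ)) * ζ ^ 2) * hΦ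

      exact ⟨by rw [hpe]; exact mul_ne_zero h2m (neg_ne_zero.mpr (pow_ne_zero 4 hζ0)), 4, by norm_num, -ζ ^ 4, Or.inr rfl, Or.inr (Or.inr hpe)⟩

  constructor
  · ext z
    simp only [Set.mem_setOf_eq, Set.mem_union, Set.mem_singleton_iff]
    constructor
    · rintro ⟨c, hne, h2, rfl⟩
      rw [hval c]
      rcases split_fact _ (mem_VF c hne) with h0 | hE
      · left; rw [h0]; norm_num [psi]
      · right; exact (HB _ hE).2
    · rintro (rfl | ⟨j, hj, s, hs, hz⟩)
      · refine ⟨[5,5], by decide, by decide, ?_⟩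
        have hc : (colM (Nw [5,5])).2 = (((0:ℤ),0,0,0) : Z4) := by decide
        rw [hval [5,5], hc]
        norm_num [psi]
      · interval_cases j <;> rcases hs with rfl | rfl <;> rcases hz with rfl | rfl | rfl

        · refine ⟨[5], by decide, by decide, ?_⟩

          have hc : (colM (Nw [5])).2 = (((1:ℤ),0,0,0) : Z4) := by decide

          rw [hval [5], hc]

          norm_num [psi]

          try linear_combination ((0:ℂ)) * hΦ

        · refine ⟨[5, 2], by decide, by decide, ?_⟩

          have hc : (colM (Nw [5, 2])).2 = (((1:ℤ),1,0,0) : Z4) := by decide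

          rw [hval [5, 2], hc]

          norm_num [psi]

          try linear_combination ((0:ℂ)) * hΦ

        · refine ⟨[5, 2, 2, 3, 4], by decide, by decide, ?_⟩

          have hc : (colM (Nw [5, 2, 2, 3, 4])).2 = (((1:ℤ),0,-1,0) : Z4) := by decide

          rw [hval [5, 2, 2, 3, 4], hc]

          norm_num [psi]

          try linear_combination ((0:ℂ)) * hΦ

        · refine ⟨[5, 6, 5], by decide, by decide, ?_⟩

          have hc : (colM (Nw [5, 6, 5])).2 = (((-1:ℤ),0,0,0) : Z4) := by decide

          rw [hval [5, 6, 5], hc]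

          norm_num [psi]

          try linear_combination ((0:ℂ)) * hΦ

        · refine ⟨[5, 6, 2, 4], by decide, by decide, ?_⟩

          have hc : (colM (Nw [5, 6, 2, 4])).2 = (((-1:ℤ),-1,0,0) : Z4) := by decide

          rw [hval [5, 6, 2, 4], hc]

          norm_num [psi]

          try linear_combination ((0:ℂ)) * hΦ

        · refine ⟨[5, 6, 4, 2], by decide, by decide, ?_⟩

          have hc : (colM (Nw [5, 6, 4, 2])).2 = (((-1:ℤ),0,1,0) : Z4) := by decide

          rw [hval [5, 6, 4, 2], hc]

          norm_num [psi]

          try linear_combination ((0:ℂ)) * hΦ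

        · refine ⟨[5, 6, 2], by decide, by decide, ?_⟩

          have hc : (colM (Nw [5, 6, 2])).2 = (((0:ℤ),1,0,0) : Z4) := by decide

          rw [hval [5, 6, 2], hc]

          norm_num [psi]

          try linear_combination ((0:ℂ)) * hΦ

        · refine ⟨[5, 6, 3], by decide, by decide, ?_⟩

          have hc : (colM (Nw [5, 6, 3])).2 = (((0:ℤ),1,1,0) : Z4) := by decide

          rw [hval [5, 6, 3], hc]

          norm_num [psi]

          try linear_combination ((0:ℂ)) * hΦ

        · refine ⟨[5, 3, 2, 3, 5], by decide, by decide, ?_⟩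

          have hc : (colM (Nw [5, 3, 2, 3, 5])).2 = (((0:ℤ),1,0,-1) : Z4) := by decide

          rw [hval [5, 3, 2, 3, 5], hc]

          norm_num [psi]

          try linear_combination ((0:ℂ)) * hΦ

        · refine ⟨[5, 2, 5], by decide, by decide, ?_⟩

          have hc : (colM (Nw [5, 2, 5])).2 = (((0:ℤ),-1,0,0) : Z4) := by decide

          rw [hval [5, 2, 5], hc]

          norm_num [psi]

          try linear_combination ((0:ℂ)) * hΦ

        · refine ⟨[5, 2, 2, 5], by decide, by decide, ?_⟩

          have hc : (colM (Nw [5, 2, 2, 5])).2 = (((0:ℤ),-1,-1,0) : Z4) := by decide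

          rw [hval [5, 2, 2, 5], hc]

          norm_num [psi]

          try linear_combination ((0:ℂ)) * hΦ

        · refine ⟨[5, 2, 2, 4], by decide, by decide, ?_⟩

          have hc : (colM (Nw [5, 2, 2, 4])).2 = (((0:ℤ),-1,0,1) : Z4) := by decide

          rw [hval [5, 2, 2, 4], hc]

          norm_num [psi]

          try linear_combination ((0:ℂ)) * hΦ

        · refine ⟨[5, 4, 3], by decide, by decide, ?_⟩

          have hc : (colM (Nw [5, 4, 3])).2 = (((0:ℤ),0,1,0) : Z4) := by decide

          rw [hval [5, 4, 3], hc]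

          norm_num [psi]

          try linear_combination ((0:ℂ)) * hΦ

        · refine ⟨[5, 2, 4], by decide, by decide, ?_⟩

          have hc : (colM (Nw [5, 2, 4])).2 = (((0:ℤ),0,1,1) : Z4) := by decide

          rw [hval [5, 2, 4], hc]

          norm_num [psi]

          try linear_combination ((0:ℂ)) * hΦ

        · refine ⟨[5, 2, 3], by decide, by decide, ?_⟩

          have hc : (colM (Nw [5, 2, 3])).2 = (((1:ℤ),1,2,1) : Z4) := by decide

          rw [hval [5, 2, 3], hc]

          norm_num [psi]

          try linear_combination (((-1:ℂ)) * ζ ^ 0) * hΦ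

        · refine ⟨[5, 3, 5], by decide, by decide, ?_⟩

          have hc : (colM (Nw [5, 3, 5])).2 = (((0:ℤ),0,-1,0) : Z4) := by decide

          rw [hval [5, 3, 5], hc]

          norm_num [psi]

          try linear_combination ((0:ℂ)) * hΦ

        · refine ⟨[5, 2, 3, 5], by decide, by decide, ?_⟩

          have hc : (colM (Nw [5, 2, 3, 5])).2 = (((0:ℤ),0,-1,-1) : Z4) := by decide

          rw [hval [5, 2, 3, 5], hc]

          norm_num [psi]

          try linear_combination ((0:ℂ)) * hΦ

        · refine ⟨[5, 6, 3, 2, 4], by decide, by decide, ?_⟩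

          have hc : (colM (Nw [5, 6, 3, 2, 4])).2 = (((-1:ℤ),-1,-2,-1) : Z4) := by decide

          rw [hval [5, 6, 3, 2, 4], hc]

          norm_num [psi]

          try linear_combination (((1:ℂ)) * ζ ^ 0) * hΦ

        · refine ⟨[5, 3, 4], by decide, by decide, ?_⟩

          have hc : (colM (Nw [5, 3, 4])).2 = (((0:ℤ),0,0,1) : Z4) := by decide

          rw [hval [5, 3, 4], hc]

          norm_num [psi]

          try linear_combination ((0:ℂ)) * hΦ

        · refine ⟨[5, 6, 3, 4], by decide, by decide, ?_⟩

          have hc : (colM (Nw [5, 6, 3, 4])).2 = (((-1:ℤ),-1,-1,0) : Z4) := by decide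

          rw [hval [5, 6, 3, 4], hc]

          norm_num [psi]

          try linear_combination (((1:ℂ)) * ζ ^ 0) * hΦ

        · refine ⟨[5, 6, 3, 3], by decide, by decide, ?_⟩

          have hc : (colM (Nw [5, 6, 3, 3])).2 = (((-1:ℤ),0,0,1) : Z4) := by decide

          rw [hval [5, 6, 3, 3], hc]

          norm_num [psi]

          try linear_combination (((1:ℂ)) * ζ ^ 0 + ((-1:ℂ)) * ζ ^ 1) * hΦ

        · refine ⟨[5, 4, 5], by decide, by decide, ?_⟩

          have hc : (colM (Nw [5, 4, 5])).2 = (((0:ℤ),0,0,-1) : Z4) := by decide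

          rw [hval [5, 4, 5], hc]

          norm_num [psi]

          try linear_combination ((0:ℂ)) * hΦ

        · refine ⟨[5, 3], by decide, by decide, ?_⟩

          have hc : (colM (Nw [5, 3])).2 = (((1:ℤ),1,1,0) : Z4) := by decide

          rw [hval [5, 3], hc]

          norm_num [psi]

          try linear_combination (((-1:ℂ)) * ζ ^ 0) * hΦ

        · refine ⟨[5, 2, 3, 2, 5], by decide, by decide, ?_⟩

          have hc : (colM (Nw [5, 2, 3, 2, 5])).2 = (((1:ℤ),0,0,-1) : Z4) := by decide

          rw [hval [5, 2, 3, 2, 5], hc]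

          norm_num [psi]

          try linear_combination (((-1:ℂ)) * ζ ^ 0 + ((1:ℂ)) * ζ ^ 1) * hΦ

        · refine ⟨[5, 6, 4, 4], by decide, by decide, ?_⟩

          have hc : (colM (Nw [5, 6, 4, 4])).2 = (((-1:ℤ),-1,-1,-1) : Z4) := by decide

          rw [hval [5, 6, 4, 4], hc]

          norm_num [psi]

          try linear_combination (((1:ℂ)) * ζ ^ 0) * hΦ

        · refine ⟨[5, 3, 2, 5], by decide, by decide, ?_⟩

          have hc : (colM (Nw [5, 3, 2, 5])).2 = (((0:ℤ),-1,-1,-1) : Z4) := by decide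

          rw [hval [5, 3, 2, 5], hc]

          norm_num [psi]

          try linear_combination (((1:ℂ)) * ζ ^ 1) * hΦ

        · refine ⟨[5, 6, 2, 3, 3], by decide, by decide, ?_⟩

          have hc : (colM (Nw [5, 6, 2, 3, 3])).2 = (((-1:ℤ),-2,-1,-1) : Z4) := by decide

          rw [hval [5, 6, 2, 3, 3], hc]

          norm_num [psi]

          try linear_combination (((1:ℂ)) * ζ ^ 0 + ((1:ℂ)) * ζ ^ 1 + ((-1:ℂ)) * ζ ^ 2) * hΦ

        · refine ⟨[5, 4], by decide, by decide, ?_⟩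

          have hc : (colM (Nw [5, 4])).2 = (((1:ℤ),1,1,1) : Z4) := by decide

          rw [hval [5, 4], hc]

          norm_num [psi]

          try linear_combination (((-1:ℂ)) * ζ ^ 0) * hΦ

        · refine ⟨[5, 6, 4], by decide, by decide, ?_⟩

          have hc : (colM (Nw [5, 6, 4])).2 = (((0:ℤ),1,1,1) : Z4) := by decide

          rw [hval [5, 6, 4], hc]

          norm_num [psi]

          try linear_combination (((-1:ℂ)) * ζ ^ 1) * hΦ

        · refine ⟨[5, 3, 2], by decide, by decide, ?_⟩

          have hc : (colM (Nw [5, 3, 2])).2 = (((1:ℤ),2,1,1) : Z4) := by decide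

          rw [hval [5, 3, 2], hc]

          norm_num [psi]

          try linear_combination (((-1:ℂ)) * ζ ^ 0 + ((-1:ℂ)) * ζ ^ 1 + ((1:ℂ)) * ζ ^ 2) * hΦ

  · intro c hne h2
    have hv := mem_VF c hne
    have e10 := hval c
    obtain ⟨m10, m00⟩ := hval5 c
    constructor
    · intro h0
      have hz2 : (colM (Nw c)).2 = (((0:ℤ),0,0,0) : Z4) := by
        rcases split_fact _ hv with h | hE
        · exact h
        · exact absurd (e10 ▸ h0) (HB _ hE).1
      obtain ⟨hc2, hc1⟩ := (chi_fact _ hv).mp hz2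
      refine ⟨?_, ?_⟩
      · have hx : ((ev₁ ((Mq RU SU c : Matrix (Fin 2) (Fin 2) (LaurentPolynomial ℤ)) 1 0) : ℤ) : ZMod 5)
            = (((0:ℤ)) : ZMod 5) := by rw [m10, hc2]; norm_num
        have := (tmod _ _).mpr hx
        omega
      · rcases hc1 with h | h
        · left
          have hx : ((ev₁ ((Mq RU SU c : Matrix (Fin 2) (Fin 2) (LaurentPolynomial ℤ)) 0 0) : ℤ) : ZMod 5)
              = (((1:ℤ)) : ZMod 5) := by rw [m00, h]; norm_num
          have := (tmod _ _).mpr hx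
          omega
        · right
          have hx : ((ev₁ ((Mq RU SU c : Matrix (Fin 2) (Fin 2) (LaurentPolynomial ℤ)) 0 0) : ℤ) : ZMod 5)
              = (((4:ℤ)) : ZMod 5) := by rw [m00, h]; norm_num
          have := (tmod _ _).mpr hx
          omega
    · rintro ⟨h5, h14⟩
      have hc2 : chi (colM (Nw c)).2 = 0 := by
        rw [← m10]
        have hx : ev₁ ((Mq RU SU c : Matrix (Fin 2) (Fin 2) (LaurentPolynomial ℤ)) 1 0) % 5
            = (0:ℤ) % 5 := by omega
        have := (tmod _ _).mp hx
        simpa using this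
      have hc1 : chi (colM (Nw c)).1 = 1 ∨ chi (colM (Nw c)).1 = 4 := by
        rcases h14 with h | h
        · left
          rw [← m00]
          have hx : ev₁ ((Mq RU SU c : Matrix (Fin 2) (Fin 2) (LaurentPolynomial ℤ)) 0 0) % 5
              = (1:ℤ) % 5 := by omega
          have := (tmod _ _).mp hx
          simpa using this
        · right
          rw [← m00]
          have hx : ev₁ ((Mq RU SU c : Matrix (Fin 2) (Fin 2) (LaurentPolynomial ℤ)) 0 0) % 5
              = (4:ℤ) % 5 := by omega
          have := (tmod _ _).mp hx
          simpa using this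
      have hz2 := (chi_fact _ hv).mpr ⟨hc2, hc1⟩
      rw [e10, hz2]
      norm_num [psi]
end

section
/- Let ζ₅ = exp(2πi/5) and, for M = M_q(c₁,…,c_k), set J(M) := ζ₅·ev_{ζ₅}(M₁₁) + (1−ζ₅)·ev_{ζ₅}(M₂₁), which is the value J_{r/s}(ζ₅) of the normalized Jones polynomial of the corresponding rational link L(r/s). Then { J(M) : k ≥ 1, c₁,…,c_k ≥ 2 } = {0} ∪ { c, (ζ₅−1)·c, (ζ₅²+1)·c : c = ±ζ₅^j, j = 0, 1, …, 4 }. Moreover, J(M) = 0 if and only if ev₁(M₁₁) ≡ 0 (mod 5) and ev₁(M₂₁) ≡ 2 or 3 (mod 5). -/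
open LaurentPolynomial

/- ## Auxiliary machinery: arithmetic in ℤ[ζ₅] via integer quadruples -/

abbrev Q4 := ℤ × ℤ × ℤ × ℤ

def qadd (u v : Q4) : Q4 := (u.1+v.1, u.2.1+v.2.1, u.2.2.1+v.2.2.1, u.2.2.2+v.2.2.2)
def qneg (u : Q4) : Q4 := (-u.1,-u.2.1,-u.2.2.1,-u.2.2.2)
def qmul (u v : Q4) : Q4 :=
  (u.1*v.1 - (u.2.1*v.2.2.2 + u.2.2.1*v.2.2.1 + u.2.2.2*v.2.1) + (u.2.2.1*v.2.2.2 + u.2.2.2*v.2.2.1),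
   u.1*v.2.1 + u.2.1*v.1 - (u.2.1*v.2.2.2 + u.2.2.1*v.2.2.1 + u.2.2.2*v.2.1) + u.2.2.2*v.2.2.2,
   u.1*v.2.2.1 + u.2.1*v.2.1 + u.2.2.1*v.1 - (u.2.1*v.2.2.2 + u.2.2.1*v.2.2.1 + u.2.2.2*v.2.1),
   u.1*v.2.2.2 + u.2.1*v.2.2.1 + u.2.2.1*v.2.1 + u.2.2.2*v.1 - (u.2.1*v.2.2.2 + u.2.2.1*v.2.2.1 + u.2.2.2*v.2.1))

noncomputable def toC (ζ : ℂ) (v : Q4) : ℂ :=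
  (v.1 : ℂ) + (v.2.1 : ℂ) * ζ + (v.2.2.1 : ℂ) * ζ^2 + (v.2.2.2 : ℂ) * ζ^3

def phiQ (v : Q4) : ZMod 5 := ((v.1 + v.2.1 + v.2.2.1 + v.2.2.2 : ℤ) : ZMod 5)

theorem toC_add (ζ : ℂ) (u v : Q4) : toC ζ (qadd u v) = toC ζ u + toC ζ v := by
  obtain ⟨a,b,c,d⟩ := u; obtain ⟨e,f,g,h⟩ := v
  simp only [toC, qadd]; push_cast; ring

theorem toC_neg (ζ : ℂ) (u : Q4) : toC ζ (qneg u) = - toC ζ u := by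
  obtain ⟨a,b,c,d⟩ := u
  simp only [toC, qneg]; push_cast; ring

theorem toC_mul {ζ : ℂ} (hrel : 1 + ζ + ζ^2 + ζ^3 + ζ^4 = 0) (u v : Q4) :
    toC ζ (qmul u v) = toC ζ u * toC ζ v := by
  obtain ⟨a,b,c,d⟩ := u; obtain ⟨e,f,g,h⟩ := v
  simp only [toC, qmul]; push_cast
  linear_combination (-(((b:ℂ)*h+c*g+d*f) - ((c:ℂ)*h+d*g)) - (((c:ℂ)*h+d*g) - (d:ℂ)*h)*ζ - ((d:ℂ)*h)*ζ^2) * hrel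

theorem phiQ_add (u v : Q4) : phiQ (qadd u v) = phiQ u + phiQ v := by
  obtain ⟨a,b,c,d⟩ := u; obtain ⟨e,f,g,h⟩ := v
  simp only [phiQ, qadd]; push_cast; ring

theorem phiQ_neg (u : Q4) : phiQ (qneg u) = - phiQ u := by
  obtain ⟨a,b,c,d⟩ := u
  simp only [phiQ, qneg]; push_cast; ring

theorem phiQ_mul (u v : Q4) : phiQ (qmul u v) = phiQ u * phiQ v := by
  obtain ⟨a,b,c,d⟩ := u; obtain ⟨e,f,g,h⟩ := v
  have h5z : (5 : ZMod 5) = 0 := by decide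
  simp only [phiQ, qmul]; push_cast
  linear_combination (-(((b:ZMod 5)*h+(c:ZMod 5)*g+(d:ZMod 5)*f))) * h5z

def sigQ : ℕ → Q4
  | 0 => (0,0,0,0) | 1 => (1,0,0,0) | 2 => (1,1,0,0) | 3 => (1,1,1,0) | _ => (1,1,1,1)
def xpQ : ℕ → Q4
  | 0 => (1,0,0,0) | 1 => (0,1,0,0) | 2 => (0,0,1,0) | 3 => (0,0,0,1) | _ => (-1,-1,-1,-1)
def stepQ (a : ℕ) (s : Q4 × Q4) : Q4 × Q4 :=
  (qadd (qmul (sigQ a) s.1) (qneg (qmul (xpQ ((a+4)%5)) s.2)), s.1)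
def runQ : List ℕ → Q4 × Q4
  | [] => ((1,0,0,0),(0,0,0,0))
  | a :: cs => stepQ (a % 5) (runQ cs)
def JQ (s : Q4 × Q4) : Q4 := qadd (qmul (0,1,0,0) s.1) (qmul (1,-1,0,0) s.2)

theorem toC_sig {ζ : ℂ} (r : ℕ) (hr : r < 5) :
    toC ζ (sigQ r) = ∑ i ∈ Finset.range r, ζ^i := by
  interval_cases r <;> simp [sigQ, toC, Finset.sum_range_succ] <;> ring

theorem toC_xp {ζ : ℂ} (hrel : 1 + ζ + ζ^2 + ζ^3 + ζ^4 = 0) (r : ℕ) (hr : r < 5) :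
    toC ζ (xpQ r) = ζ^r := by
  interval_cases r <;> simp only [xpQ, toC] <;> push_cast <;>
    first
      | linear_combination (-1 : ℂ) * hrel
      | ring

theorem phi_sig (r : ℕ) (hr : r < 5) : phiQ (sigQ r) = (r : ZMod 5) := by
  interval_cases r <;> decide

theorem phi_xp (r : ℕ) (hr : r < 5) : phiQ (xpQ r) = 1 := by
  interval_cases r <;> decide

theorem step_toC {ζ : ℂ} (hrel : 1 + ζ + ζ^2 + ζ^3 + ζ^4 = 0) (a : ℕ) (ha : a < 5)
    (s : Q4 × Q4) :
    toC ζ (stepQ a s).1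
      = (∑ i ∈ Finset.range a, ζ^i) * toC ζ s.1 - ζ^((a+4)%5) * toC ζ s.2 := by
  rw [show (stepQ a s).1 = qadd (qmul (sigQ a) s.1) (qneg (qmul (xpQ ((a+4)%5)) s.2)) from rfl,
    toC_add, toC_mul hrel, toC_neg, toC_mul hrel, toC_sig a ha,
    toC_xp hrel _ (Nat.mod_lt _ (by norm_num))]
  ring

theorem step_phi (a : ℕ) (ha : a < 5) (s : Q4 × Q4) :
    phiQ (stepQ a s).1 = (a : ZMod 5) * phiQ s.1 - phiQ s.2 := by
  rw [show (stepQ a s).1 = qadd (qmul (sigQ a) s.1) (qneg (qmul (xpQ ((a+4)%5)) s.2)) from rfl,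
    phiQ_add, phiQ_mul, phiQ_neg, phiQ_mul, phi_sig a ha,
    phi_xp _ (Nat.mod_lt _ (by norm_num))]
  ring

theorem Rt_pow {K : Type*} [CommRing K] (t : K) (a : ℕ) :
    (!![t, 1; 0, 1] : Matrix (Fin 2) (Fin 2) K) ^ a
      = !![t^a, ∑ i ∈ Finset.range a, t^i; 0, 1] := by
  induction a with
  | zero => simp [Matrix.one_fin_two]
  | succ n ih =>
    rw [pow_succ, ih, Matrix.mul_fin_two]
    ext i j
    fin_cases i <;> fin_cases j <;> simp [Finset.sum_range_succ, pow_succ] <;> ring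

theorem geom_per {ζ : ℂ} (hrel : 1 + ζ + ζ^2 + ζ^3 + ζ^4 = 0) (a : ℕ) :
    ∑ i ∈ Finset.range (a+5), ζ^i = ∑ i ∈ Finset.range a, ζ^i := by
  rw [show a+5 = a+1+1+1+1+1 by omega]
  simp only [Finset.sum_range_succ]
  linear_combination (ζ^a) * hrel

theorem geom_mod {ζ : ℂ} (hrel : 1 + ζ + ζ^2 + ζ^3 + ζ^4 = 0) :
    ∀ a : ℕ, ∑ i ∈ Finset.range a, ζ^i = ∑ i ∈ Finset.range (a % 5), ζ^i := by
  intro a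
  induction a using Nat.strong_induction_on with
  | _ a ih =>
    rcases Nat.lt_or_ge a 5 with h | h
    · rw [Nat.mod_eq_of_lt h]
    · obtain ⟨b, rfl⟩ : ∃ b, a = b + 5 := ⟨a - 5, by omega⟩
      rw [geom_per hrel, ih b (by omega), Nat.add_mod_right]

theorem pow_mod5 {ζ : ℂ} (h5 : ζ^5 = 1) (a : ℕ) : ζ^a = ζ^(a % 5) := by
  conv_lhs => rw [← Nat.div_add_mod a 5]
  rw [pow_add, pow_mul, h5, one_pow, one_mul]

set_option maxHeartbeats 2000000 in
set_option maxRecDepth 100000 in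
def statesL : List (Q4 × Q4) := [((-1,-2,-1,-1),(-1,-1,0,0)),
  ((-1,-1,-2,-1),(-1,-1,-1,0)),
  ((-1,-1,-1,-1),(-1,-1,-1,-1)),
  ((-1,-1,-1,-1),(-1,-1,-1,0)),
  ((-1,-1,-1,-1),(-1,-1,0,0)),
  ((-1,-1,-1,-1),(-1,0,0,0)),
  ((-1,-1,-1,-1),(0,0,0,0)),
  ((-1,-1,-1,0),(-1,-1,0,0)),
  ((-1,-1,-1,0),(-1,0,0,0)),
  ((-1,-1,-1,0),(-1,0,0,1)),
  ((-1,-1,-1,0),(0,0,0,1)),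
  ((-1,-1,-1,0),(0,0,1,1)),
  ((-1,-1,0,0),(-1,0,0,0)),
  ((-1,-1,0,0),(-1,0,1,0)),
  ((-1,-1,0,0),(0,0,1,0)),
  ((-1,-1,0,0),(0,0,1,1)),
  ((-1,-1,0,0),(0,1,1,1)),
  ((-1,0,0,0),(-1,0,0,0)),
  ((-1,0,0,0),(0,0,0,0)),
  ((-1,0,0,0),(0,1,0,0)),
  ((-1,0,0,0),(0,1,1,0)),
  ((-1,0,0,0),(0,1,1,1)),
  ((-1,0,0,1),(0,1,1,1)),
  ((-1,0,1,0),(0,1,1,0)),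
  ((0,-1,-1,-1),(-1,-2,-1,-1)),
  ((0,-1,-1,-1),(-1,-1,-1,-1)),
  ((0,-1,-1,-1),(-1,-1,-1,0)),
  ((0,-1,-1,-1),(0,-1,-1,0)),
  ((0,-1,-1,-1),(0,-1,0,0)),
  ((0,-1,-1,0),(-1,-1,-1,0)),
  ((0,-1,-1,0),(-1,-1,0,0)),
  ((0,-1,-1,0),(0,-1,0,0)),
  ((0,-1,-1,0),(0,-1,0,1)),
  ((0,-1,-1,0),(0,0,0,1)),
  ((0,-1,0,0),(-1,-1,0,0)),
  ((0,-1,0,0),(0,-1,0,0)),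
  ((0,-1,0,0),(0,0,0,0)),
  ((0,-1,0,0),(0,0,1,0)),
  ((0,-1,0,0),(0,0,1,1)),
  ((0,-1,0,1),(0,0,1,1)),
  ((0,0,-1,-1),(-1,-1,-2,-1)),
  ((0,0,-1,-1),(-1,-1,-1,-1)),
  ((0,0,-1,-1),(0,-1,-1,-1)),
  ((0,0,-1,-1),(0,-1,-1,0)),
  ((0,0,-1,-1),(0,0,-1,0)),
  ((0,0,-1,0),(-1,-1,-1,0)),
  ((0,0,-1,0),(0,-1,-1,0)),
  ((0,0,-1,0),(0,0,-1,0)),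
  ((0,0,-1,0),(0,0,0,0)),
  ((0,0,-1,0),(0,0,0,1)),
  ((0,0,0,-1),(-1,-1,-1,-1)),
  ((0,0,0,-1),(0,-1,-1,-1)),
  ((0,0,0,-1),(0,0,-1,-1)),
  ((0,0,0,-1),(0,0,0,-1)),
  ((0,0,0,-1),(0,0,0,0)),
  ((0,0,0,0),(-1,-1,-1,-1)),
  ((0,0,0,0),(-1,0,0,0)),
  ((0,0,0,0),(0,-1,0,0)),
  ((0,0,0,0),(0,0,-1,0)),
  ((0,0,0,0),(0,0,0,-1)),
  ((0,0,0,0),(0,0,0,1)),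
  ((0,0,0,0),(0,0,1,0)),
  ((0,0,0,0),(0,1,0,0)),
  ((0,0,0,0),(1,0,0,0)),
  ((0,0,0,0),(1,1,1,1)),
  ((0,0,0,1),(0,0,0,0)),
  ((0,0,0,1),(0,0,0,1)),
  ((0,0,0,1),(0,0,1,1)),
  ((0,0,0,1),(0,1,1,1)),
  ((0,0,0,1),(1,1,1,1)),
  ((0,0,1,0),(0,0,0,-1)),
  ((0,0,1,0),(0,0,0,0)),
  ((0,0,1,0),(0,0,1,0)),
  ((0,0,1,0),(0,1,1,0)),
  ((0,0,1,0),(1,1,1,0)),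
  ((0,0,1,1),(0,0,1,0)),
  ((0,0,1,1),(0,1,1,0)),
  ((0,0,1,1),(0,1,1,1)),
  ((0,0,1,1),(1,1,1,1)),
  ((0,0,1,1),(1,1,2,1)),
  ((0,1,0,-1),(0,0,-1,-1)),
  ((0,1,0,0),(0,0,-1,-1)),
  ((0,1,0,0),(0,0,-1,0)),
  ((0,1,0,0),(0,0,0,0)),
  ((0,1,0,0),(0,1,0,0)),
  ((0,1,0,0),(1,1,0,0)),
  ((0,1,1,0),(0,0,0,-1)),
  ((0,1,1,0),(0,1,0,-1)),
  ((0,1,1,0),(0,1,0,0)),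
  ((0,1,1,0),(1,1,0,0)),
  ((0,1,1,0),(1,1,1,0)),
  ((0,1,1,1),(0,1,0,0)),
  ((0,1,1,1),(0,1,1,0)),
  ((0,1,1,1),(1,1,1,0)),
  ((0,1,1,1),(1,1,1,1)),
  ((0,1,1,1),(1,2,1,1)),
  ((1,0,-1,0),(0,-1,-1,0)),
  ((1,0,0,-1),(0,-1,-1,-1)),
  ((1,0,0,0),(0,-1,-1,-1)),
  ((1,0,0,0),(0,-1,-1,0)),
  ((1,0,0,0),(0,-1,0,0)),
  ((1,0,0,0),(0,0,0,0)),
  ((1,0,0,0),(1,0,0,0)),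
  ((1,1,0,0),(0,-1,-1,-1)),
  ((1,1,0,0),(0,0,-1,-1)),
  ((1,1,0,0),(0,0,-1,0)),
  ((1,1,0,0),(1,0,-1,0)),
  ((1,1,0,0),(1,0,0,0)),
  ((1,1,1,0),(0,0,-1,-1)),
  ((1,1,1,0),(0,0,0,-1)),
  ((1,1,1,0),(1,0,0,-1)),
  ((1,1,1,0),(1,0,0,0)),
  ((1,1,1,0),(1,1,0,0)),
  ((1,1,1,1),(0,0,0,0)),
  ((1,1,1,1),(1,0,0,0)),
  ((1,1,1,1),(1,1,0,0)),
  ((1,1,1,1),(1,1,1,0)),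
  ((1,1,1,1),(1,1,1,1)),
  ((1,1,2,1),(1,1,1,0)),
  ((1,2,1,1),(1,1,0,0))]

def targetsL : List Q4 := [(-2,-1,-1,-1), (-1,-1,-1,-2), (-1,-1,-1,-1), (-1,-1,0,-1), (-1,0,-1,-1), (-1,0,-1,0), (-1,0,0,-1), (-1,0,0,0), (-1,1,0,0), (0,-1,0,-1), (0,-1,0,0), (0,-1,1,0), (0,0,-1,0), (0,0,-1,1), (0,0,0,-1), (0,0,0,0), (0,0,0,1), (0,0,1,-1), (0,0,1,0), (0,1,-1,0), (0,1,0,0), (0,1,0,1), (1,-1,0,0), (1,0,0,0), (1,0,0,1), (1,0,1,0), (1,0,1,1), (1,1,0,1), (1,1,1,1), (1,1,1,2), (2,1,1,1)]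

set_option maxHeartbeats 4000000 in
set_option maxRecDepth 100000 in
theorem closure_dec : ∀ s ∈ statesL, ∀ a ∈ [0,1,2,3,4], stepQ a s ∈ statesL := by decide

set_option maxHeartbeats 2000000 in
set_option maxRecDepth 100000 in
theorem targets_dec : ∀ s ∈ statesL, JQ s ∈ targetsL := by decide

set_option maxHeartbeats 2000000 in
set_option maxRecDepth 100000 in
theorem zero_iff_dec : ∀ s ∈ statesL,
    (JQ s = ((0,0,0,0):Q4) ↔ (phiQ s.1 = 0 ∧ (phiQ s.2 = 2 ∨ phiQ s.2 = 3))) := by decide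

set_option maxRecDepth 10000 in
theorem start_mem : runQ [] ∈ statesL := by decide

set_option maxHeartbeats 1000000 in
set_option maxRecDepth 10000 in
theorem jones_values_at_zeta5 (ζ : ℂ)
    (hζ : ζ = Complex.exp (2 * Real.pi * Complex.I / 5))
    (RU SU : Matrix.GeneralLinearGroup (Fin 2) (LaurentPolynomial ℤ))
    (hRU : (RU : Matrix (Fin 2) (Fin 2) (LaurentPolynomial ℤ)) = Rq)
    (hSU : (SU : Matrix (Fin 2) (Fin 2) (LaurentPolynomial ℤ)) = Sq)
    (ev₁ : LaurentPolynomial ℤ →+* ℤ) (hev₁ : ev₁ (T 1) = 1)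
    (evζ : LaurentPolynomial ℤ →+* ℂ) (hevζ : evζ (T 1) = ζ)
    (J : List ℕ → ℂ)
    (hJ : ∀ c : List ℕ, J c =
      ζ * evζ ((Mq RU SU c : Matrix (Fin 2) (Fin 2) (LaurentPolynomial ℤ)) 0 0) +
      (1 - ζ) * evζ ((Mq RU SU c : Matrix (Fin 2) (Fin 2) (LaurentPolynomial ℤ)) 1 0)) :
    ({z : ℂ | ∃ c : List ℕ, c ≠ [] ∧ (∀ x ∈ c, 2 ≤ x) ∧ z = J c} =
      {0} ∪ {z : ℂ | ∃ j < 5, ∃ s : ℂ, (s = ζ ^ j ∨ s = -ζ ^ j) ∧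
        (z = s ∨ z = (ζ - 1) * s ∨ z = (ζ ^ 2 + 1) * s)}) ∧
    (∀ c : List ℕ, c ≠ [] → (∀ x ∈ c, 2 ≤ x) →
      (J c = 0 ↔
        ev₁ ((Mq RU SU c : Matrix (Fin 2) (Fin 2) (LaurentPolynomial ℤ)) 0 0) % 5 = 0 ∧
        (ev₁ ((Mq RU SU c : Matrix (Fin 2) (Fin 2) (LaurentPolynomial ℤ)) 1 0) % 5 = 2 ∨
         ev₁ ((Mq RU SU c : Matrix (Fin 2) (Fin 2) (LaurentPolynomial ℤ)) 1 0) % 5 = 3))) := by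
  have hprim : IsPrimitiveRoot ζ 5 := by
    rw [hζ]; exact Complex.isPrimitiveRoot_exp 5 (by norm_num)
  have h5 : ζ ^ 5 = 1 := hprim.pow_eq_one
  have hne1 : ζ ≠ 1 := hprim.ne_one (by norm_num)
  have hrel : 1 + ζ + ζ^2 + ζ^3 + ζ^4 = 0 := by
    have hmul : (ζ - 1) * (1 + ζ + ζ^2 + ζ^3 + ζ^4) = 0 := by linear_combination h5
    rcases mul_eq_zero.mp hmul with h | h
    · exact absurd (by linear_combination h) hne1
    · exact h
  have hz0 : ζ ≠ 0 := by
    intro h; rw [h] at h5; norm_num at h5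
  have hzm1 : ζ - 1 ≠ 0 := sub_ne_zero.mpr hne1
  have h21 : ζ^2 + 1 ≠ 0 := by
    intro h
    have h4 : ζ^4 = 1 := by
      have h2 : ζ^2 = -1 := by linear_combination h
      calc ζ^4 = (ζ^2)^2 := by ring
        _ = 1 := by rw [h2]; norm_num
    exact hne1 (by
      calc ζ = ζ^4 * ζ := by rw [h4]; ring
        _ = 1 := by rw [← pow_succ]; exact h5)
  have hinv : evζ (T (-1)) = ζ^4 := by
    have h1 : evζ (T (-1)) * evζ (T 1) = 1 := by
      rw [← map_mul, ← T_add]; norm_num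
    rw [hevζ] at h1
    linear_combination (-(evζ (T (-1)))) * h5 + ζ^4 * h1
  have hinv1 : ev₁ (T (-1)) = 1 := by
    have h1 : ev₁ (T (-1)) * ev₁ (T 1) = 1 := by
      rw [← map_mul, ← T_add]; norm_num
    rw [hev₁, mul_one] at h1; exact h1
  have hMnil : ((Mq RU SU [] : Matrix (Fin 2) (Fin 2) (LaurentPolynomial ℤ))) = 1 := by
    simp [Mq]
  have hMcons : ∀ (a : ℕ) (cs : List ℕ),
      ((Mq RU SU (a :: cs) : Matrix (Fin 2) (Fin 2) (LaurentPolynomial ℤ)))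
        = Rq ^ a * Sq * (Mq RU SU cs : Matrix (Fin 2) (Fin 2) (LaurentPolynomial ℤ)) := by
    intro a cs
    simp only [Mq, List.map_cons, List.prod_cons]
    rw [Units.val_mul, Units.val_mul, Units.val_pow_eq_pow_val, hRU, hSU]
  have hPmat : ∀ a : ℕ, Rq ^ a * Sq
      = !![(T 1 : LaurentPolynomial ℤ)^a, ∑ i ∈ Finset.range a, (T 1 : LaurentPolynomial ℤ)^i; 0, 1]
        * !![0, -(T (-1) : LaurentPolynomial ℤ); 1, 0] := by
    intro a
    rw [show Rq = !![(T 1 : LaurentPolynomial ℤ), 1; 0, 1] from rfl, Rt_pow,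
      show Sq = !![0, -(T (-1) : LaurentPolynomial ℤ); 1, 0] from rfl]
  have hP00 : ∀ a : ℕ, (Rq ^ a * Sq) 0 0 = ∑ i ∈ Finset.range a, (T 1 : LaurentPolynomial ℤ)^i := by
    intro a
    rw [hPmat, Matrix.mul_fin_two]
    simp only [Matrix.of_apply, Matrix.cons_val_zero, Matrix.cons_val_one, Matrix.head_cons]
    ring
  have hP01 : ∀ a : ℕ, (Rq ^ a * Sq) 0 1 = -((T 1 : LaurentPolynomial ℤ)^a * T (-1)) := by
    intro a
    rw [hPmat, Matrix.mul_fin_two]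
    simp only [Matrix.of_apply, Matrix.cons_val_zero, Matrix.cons_val_one, Matrix.head_cons]
    ring
  have hP10 : ∀ a : ℕ, (Rq ^ a * Sq) 1 0 = 1 := by
    intro a
    rw [hPmat, Matrix.mul_fin_two]
    simp only [Matrix.of_apply, Matrix.cons_val_zero, Matrix.cons_val_one, Matrix.head_cons]
    ring
  have hP11 : ∀ a : ℕ, (Rq ^ a * Sq) 1 1 = 0 := by
    intro a
    rw [hPmat, Matrix.mul_fin_two]
    simp only [Matrix.of_apply, Matrix.cons_val_zero, Matrix.cons_val_one, Matrix.head_cons]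
    ring
  have hcol : ∀ (P N : Matrix (Fin 2) (Fin 2) (LaurentPolynomial ℤ)) (i : Fin 2),
      (P * N) i 0 = P i 0 * N 0 0 + P i 1 * N 1 0 := by
    intro P N i
    rw [Matrix.mul_apply, Fin.sum_univ_two]
  have spec : ∀ c : List ℕ,
      evζ ((Mq RU SU c : Matrix (Fin 2) (Fin 2) (LaurentPolynomial ℤ)) 0 0) = toC ζ (runQ c).1 ∧
      evζ ((Mq RU SU c : Matrix (Fin 2) (Fin 2) (LaurentPolynomial ℤ)) 1 0) = toC ζ (runQ c).2 ∧
      ((ev₁ ((Mq RU SU c : Matrix (Fin 2) (Fin 2) (LaurentPolynomial ℤ)) 0 0) : ZMod 5)) = phiQ (runQ c).1 ∧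
      ((ev₁ ((Mq RU SU c : Matrix (Fin 2) (Fin 2) (LaurentPolynomial ℤ)) 1 0) : ZMod 5)) = phiQ (runQ c).2 := by
    intro c
    induction c with
    | nil =>
      rw [hMnil]
      have hrun : runQ [] = (((1,0,0,0),(0,0,0,0)) : Q4 × Q4) := rfl
      rw [hrun]
      refine ⟨?_, ?_, ?_, ?_⟩
      · rw [Matrix.one_apply_eq, map_one]
        simp only [toC]; push_cast; ring
      · rw [Matrix.one_apply_ne (by decide), map_zero]
        simp only [toC]; push_cast; ring
      · rw [Matrix.one_apply_eq, map_one]; decide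
      · rw [Matrix.one_apply_ne (by decide), map_zero]; decide
    | cons a cs ih =>
      obtain ⟨ih1, ih2, ih3, ih4⟩ := ih
      have ha5 : a % 5 < 5 := Nat.mod_lt _ (by norm_num)
      have key0 : ((Mq RU SU (a :: cs) : Matrix (Fin 2) (Fin 2) (LaurentPolynomial ℤ))) 0 0
          = (∑ i ∈ Finset.range a, (T 1 : LaurentPolynomial ℤ)^i)
              * (Mq RU SU cs : Matrix (Fin 2) (Fin 2) (LaurentPolynomial ℤ)) 0 0
            - (T 1 : LaurentPolynomial ℤ)^a * T (-1)
              * (Mq RU SU cs : Matrix (Fin 2) (Fin 2) (LaurentPolynomial ℤ)) 1 0 := by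
        rw [hMcons, hcol, hP00, hP01]
        ring
      have key1 : ((Mq RU SU (a :: cs) : Matrix (Fin 2) (Fin 2) (LaurentPolynomial ℤ))) 1 0
          = (Mq RU SU cs : Matrix (Fin 2) (Fin 2) (LaurentPolynomial ℤ)) 0 0 := by
        rw [hMcons, hcol, hP10, hP11]
        ring
      refine ⟨?_, ?_, ?_, ?_⟩
      · rw [key0, map_sub]
        simp only [map_mul, map_sum, map_pow, hevζ, hinv]
        rw [ih1, ih2, show runQ (a::cs) = stepQ (a % 5) (runQ cs) from rfl,
          step_toC hrel _ ha5, geom_mod hrel a, pow_mod5 h5 a, ← pow_add,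
          pow_mod5 h5 (a % 5 + 4)]
      · rw [key1]
        exact ih1
      · rw [key0, map_sub]
        simp only [map_mul, map_sum, map_pow, hev₁, hinv1, one_pow, mul_one, one_mul,
          Finset.sum_const, Finset.card_range, nsmul_eq_mul]
        push_cast
        rw [ih3, ih4, show runQ (a::cs) = stepQ (a % 5) (runQ cs) from rfl,
          step_phi _ ha5, ZMod.natCast_mod]
        try ring
      · rw [key1]
        exact ih3
  have Jc_eq : ∀ c : List ℕ, J c = toC ζ (JQ (runQ c)) := by
    intro c
    obtain ⟨h1, h2, -, -⟩ := spec c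
    rw [hJ c, h1, h2,
      show JQ (runQ c) = qadd (qmul (0,1,0,0) (runQ c).1) (qmul (1,-1,0,0) (runQ c).2) from rfl,
      toC_add, toC_mul hrel, toC_mul hrel]
    simp only [toC]
    push_cast
    ring
  have runQ_mem : ∀ c : List ℕ, runQ c ∈ statesL := by
    intro c
    induction c with
    | nil => exact start_mem
    | cons a cs ih =>
      have h2 : a % 5 < 5 := Nat.mod_lt _ (by norm_num)
      have h5m : a % 5 ∈ [0,1,2,3,4] := by simp; omega
      exact closure_dec _ ih _ h5m
  have target_in : ∀ t ∈ targetsL,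
      toC ζ t ∈ ({0} ∪ {z : ℂ | ∃ j < 5, ∃ s : ℂ, (s = ζ ^ j ∨ s = -ζ ^ j) ∧
        (z = s ∨ z = (ζ - 1) * s ∨ z = (ζ ^ 2 + 1) * s)} : Set ℂ) := by
    intro t ht
    fin_cases ht
    · exact Or.inr ⟨4, by norm_num, -ζ ^ 4, Or.inr rfl, Or.inr (Or.inl (by simp only [toC]; push_cast; linear_combination ((-2:ℂ) + (1:ℂ)*ζ + (0:ℂ)*ζ^2) * hrel))⟩
    · exact Or.inr ⟨3, by norm_num, ζ ^ 3, Or.inl rfl, Or.inr (Or.inl (by simp only [toC]; push_cast; linear_combination ((-1:ℂ) + (0:ℂ)*ζ + (0:ℂ)*ζ^2) * hrel))⟩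
    · exact Or.inr ⟨4, by norm_num, ζ ^ 4, Or.inl rfl, Or.inl (by simp only [toC]; push_cast; linear_combination ((-1:ℂ) + (0:ℂ)*ζ + (0:ℂ)*ζ^2) * hrel)⟩
    · exact Or.inr ⟨2, by norm_num, ζ ^ 2, Or.inl rfl, Or.inr (Or.inr (by simp only [toC]; push_cast; linear_combination ((-1:ℂ) + (0:ℂ)*ζ + (0:ℂ)*ζ^2) * hrel))⟩
    · exact Or.inr ⟨4, by norm_num, ζ ^ 4, Or.inl rfl, Or.inr (Or.inr (by simp only [toC]; push_cast; linear_combination ((-1:ℂ) + (1:ℂ)*ζ + (-1:ℂ)*ζ^2) * hrel))⟩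
    · exact Or.inr ⟨0, by norm_num, -ζ ^ 0, Or.inr rfl, Or.inr (Or.inr (by simp only [toC]; push_cast; linear_combination ((0:ℂ) + (0:ℂ)*ζ + (0:ℂ)*ζ^2) * hrel))⟩
    · exact Or.inr ⟨3, by norm_num, -ζ ^ 3, Or.inr rfl, Or.inr (Or.inr (by simp only [toC]; push_cast; linear_combination ((-1:ℂ) + (1:ℂ)*ζ + (0:ℂ)*ζ^2) * hrel))⟩
    · exact Or.inr ⟨0, by norm_num, -ζ ^ 0, Or.inr rfl, Or.inl (by simp only [toC]; push_cast; linear_combination ((0:ℂ) + (0:ℂ)*ζ + (0:ℂ)*ζ^2) * hrel)⟩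
    · exact Or.inr ⟨0, by norm_num, ζ ^ 0, Or.inl rfl, Or.inr (Or.inl (by simp only [toC]; push_cast; linear_combination ((0:ℂ) + (0:ℂ)*ζ + (0:ℂ)*ζ^2) * hrel))⟩
    · exact Or.inr ⟨1, by norm_num, -ζ ^ 1, Or.inr rfl, Or.inr (Or.inr (by simp only [toC]; push_cast; linear_combination ((0:ℂ) + (0:ℂ)*ζ + (0:ℂ)*ζ^2) * hrel))⟩
    · exact Or.inr ⟨1, by norm_num, -ζ ^ 1, Or.inr rfl, Or.inl (by simp only [toC]; push_cast; linear_combination ((0:ℂ) + (0:ℂ)*ζ + (0:ℂ)*ζ^2) * hrel)⟩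
    · exact Or.inr ⟨1, by norm_num, ζ ^ 1, Or.inl rfl, Or.inr (Or.inl (by simp only [toC]; push_cast; linear_combination ((0:ℂ) + (0:ℂ)*ζ + (0:ℂ)*ζ^2) * hrel))⟩
    · exact Or.inr ⟨2, by norm_num, -ζ ^ 2, Or.inr rfl, Or.inl (by simp only [toC]; push_cast; linear_combination ((0:ℂ) + (0:ℂ)*ζ + (0:ℂ)*ζ^2) * hrel)⟩
    · exact Or.inr ⟨2, by norm_num, ζ ^ 2, Or.inl rfl, Or.inr (Or.inl (by simp only [toC]; push_cast; linear_combination ((0:ℂ) + (0:ℂ)*ζ + (0:ℂ)*ζ^2) * hrel))⟩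
    · exact Or.inr ⟨3, by norm_num, -ζ ^ 3, Or.inr rfl, Or.inl (by simp only [toC]; push_cast; linear_combination ((0:ℂ) + (0:ℂ)*ζ + (0:ℂ)*ζ^2) * hrel)⟩
    · exact Or.inl (by simp [toC])
    · exact Or.inr ⟨3, by norm_num, ζ ^ 3, Or.inl rfl, Or.inl (by simp only [toC]; push_cast; linear_combination ((0:ℂ) + (0:ℂ)*ζ + (0:ℂ)*ζ^2) * hrel)⟩
    · exact Or.inr ⟨2, by norm_num, -ζ ^ 2, Or.inr rfl, Or.inr (Or.inl (by simp only [toC]; push_cast; linear_combination ((0:ℂ) + (0:ℂ)*ζ + (0:ℂ)*ζ^2) * hrel))⟩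
    · exact Or.inr ⟨2, by norm_num, ζ ^ 2, Or.inl rfl, Or.inl (by simp only [toC]; push_cast; linear_combination ((0:ℂ) + (0:ℂ)*ζ + (0:ℂ)*ζ^2) * hrel)⟩
    · exact Or.inr ⟨1, by norm_num, -ζ ^ 1, Or.inr rfl, Or.inr (Or.inl (by simp only [toC]; push_cast; linear_combination ((0:ℂ) + (0:ℂ)*ζ + (0:ℂ)*ζ^2) * hrel))⟩
    · exact Or.inr ⟨1, by norm_num, ζ ^ 1, Or.inl rfl, Or.inl (by simp only [toC]; push_cast; linear_combination ((0:ℂ) + (0:ℂ)*ζ + (0:ℂ)*ζ^2) * hrel)⟩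
    · exact Or.inr ⟨1, by norm_num, ζ ^ 1, Or.inl rfl, Or.inr (Or.inr (by simp only [toC]; push_cast; linear_combination ((0:ℂ) + (0:ℂ)*ζ + (0:ℂ)*ζ^2) * hrel))⟩
    · exact Or.inr ⟨0, by norm_num, -ζ ^ 0, Or.inr rfl, Or.inr (Or.inl (by simp only [toC]; push_cast; linear_combination ((0:ℂ) + (0:ℂ)*ζ + (0:ℂ)*ζ^2) * hrel))⟩
    · exact Or.inr ⟨0, by norm_num, ζ ^ 0, Or.inl rfl, Or.inl (by simp only [toC]; push_cast; linear_combination ((0:ℂ) + (0:ℂ)*ζ + (0:ℂ)*ζ^2) * hrel)⟩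
    · exact Or.inr ⟨3, by norm_num, ζ ^ 3, Or.inl rfl, Or.inr (Or.inr (by simp only [toC]; push_cast; linear_combination ((1:ℂ) + (-1:ℂ)*ζ + (0:ℂ)*ζ^2) * hrel))⟩
    · exact Or.inr ⟨0, by norm_num, ζ ^ 0, Or.inl rfl, Or.inr (Or.inr (by simp only [toC]; push_cast; linear_combination ((0:ℂ) + (0:ℂ)*ζ + (0:ℂ)*ζ^2) * hrel))⟩
    · exact Or.inr ⟨4, by norm_num, -ζ ^ 4, Or.inr rfl, Or.inr (Or.inr (by simp only [toC]; push_cast; linear_combination ((1:ℂ) + (-1:ℂ)*ζ + (1:ℂ)*ζ^2) * hrel))⟩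
    · exact Or.inr ⟨2, by norm_num, -ζ ^ 2, Or.inr rfl, Or.inr (Or.inr (by simp only [toC]; push_cast; linear_combination ((1:ℂ) + (0:ℂ)*ζ + (0:ℂ)*ζ^2) * hrel))⟩
    · exact Or.inr ⟨4, by norm_num, -ζ ^ 4, Or.inr rfl, Or.inl (by simp only [toC]; push_cast; linear_combination ((1:ℂ) + (0:ℂ)*ζ + (0:ℂ)*ζ^2) * hrel)⟩
    · exact Or.inr ⟨3, by norm_num, -ζ ^ 3, Or.inr rfl, Or.inr (Or.inl (by simp only [toC]; push_cast; linear_combination ((1:ℂ) + (0:ℂ)*ζ + (0:ℂ)*ζ^2) * hrel))⟩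
    · exact Or.inr ⟨4, by norm_num, ζ ^ 4, Or.inl rfl, Or.inr (Or.inl (by simp only [toC]; push_cast; linear_combination ((2:ℂ) + (-1:ℂ)*ζ + (0:ℂ)*ζ^2) * hrel))⟩
  have nonzero_t : ∀ t ∈ targetsL, t ≠ ((0,0,0,0) : Q4) → toC ζ t ≠ 0 := by
    intro t ht hne h0
    fin_cases ht
    · exact (mul_ne_zero hzm1 (neg_ne_zero.mpr (pow_ne_zero 4 hz0))) (by simp only [toC] at h0; push_cast at h0; linear_combination h0 - ((-2:ℂ) + (1:ℂ)*ζ + (0:ℂ)*ζ^2) * hrel)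
    · exact (mul_ne_zero hzm1 (pow_ne_zero 3 hz0)) (by simp only [toC] at h0; push_cast at h0; linear_combination h0 - ((-1:ℂ) + (0:ℂ)*ζ + (0:ℂ)*ζ^2) * hrel)
    · exact (pow_ne_zero 4 hz0) (by simp only [toC] at h0; push_cast at h0; linear_combination h0 - ((-1:ℂ) + (0:ℂ)*ζ + (0:ℂ)*ζ^2) * hrel)
    · exact (mul_ne_zero h21 (pow_ne_zero 2 hz0)) (by simp only [toC] at h0; push_cast at h0; linear_combination h0 - ((-1:ℂ) + (0:ℂ)*ζ + (0:ℂ)*ζ^2) * hrel)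
    · exact (mul_ne_zero h21 (pow_ne_zero 4 hz0)) (by simp only [toC] at h0; push_cast at h0; linear_combination h0 - ((-1:ℂ) + (1:ℂ)*ζ + (-1:ℂ)*ζ^2) * hrel)
    · exact (mul_ne_zero h21 (neg_ne_zero.mpr (pow_ne_zero 0 hz0))) (by simp only [toC] at h0; push_cast at h0; linear_combination h0 - ((0:ℂ) + (0:ℂ)*ζ + (0:ℂ)*ζ^2) * hrel)
    · exact (mul_ne_zero h21 (neg_ne_zero.mpr (pow_ne_zero 3 hz0))) (by simp only [toC] at h0; push_cast at h0; linear_combination h0 - ((-1:ℂ) + (1:ℂ)*ζ + (0:ℂ)*ζ^2) * hrel)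
    · exact (neg_ne_zero.mpr (pow_ne_zero 0 hz0)) (by simp only [toC] at h0; push_cast at h0; linear_combination h0 - ((0:ℂ) + (0:ℂ)*ζ + (0:ℂ)*ζ^2) * hrel)
    · exact (mul_ne_zero hzm1 (pow_ne_zero 0 hz0)) (by simp only [toC] at h0; push_cast at h0; linear_combination h0 - ((0:ℂ) + (0:ℂ)*ζ + (0:ℂ)*ζ^2) * hrel)
    · exact (mul_ne_zero h21 (neg_ne_zero.mpr (pow_ne_zero 1 hz0))) (by simp only [toC] at h0; push_cast at h0; linear_combination h0 - ((0:ℂ) + (0:ℂ)*ζ + (0:ℂ)*ζ^2) * hrel)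
    · exact (neg_ne_zero.mpr (pow_ne_zero 1 hz0)) (by simp only [toC] at h0; push_cast at h0; linear_combination h0 - ((0:ℂ) + (0:ℂ)*ζ + (0:ℂ)*ζ^2) * hrel)
    · exact (mul_ne_zero hzm1 (pow_ne_zero 1 hz0)) (by simp only [toC] at h0; push_cast at h0; linear_combination h0 - ((0:ℂ) + (0:ℂ)*ζ + (0:ℂ)*ζ^2) * hrel)
    · exact (neg_ne_zero.mpr (pow_ne_zero 2 hz0)) (by simp only [toC] at h0; push_cast at h0; linear_combination h0 - ((0:ℂ) + (0:ℂ)*ζ + (0:ℂ)*ζ^2) * hrel)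
    · exact (mul_ne_zero hzm1 (pow_ne_zero 2 hz0)) (by simp only [toC] at h0; push_cast at h0; linear_combination h0 - ((0:ℂ) + (0:ℂ)*ζ + (0:ℂ)*ζ^2) * hrel)
    · exact (neg_ne_zero.mpr (pow_ne_zero 3 hz0)) (by simp only [toC] at h0; push_cast at h0; linear_combination h0 - ((0:ℂ) + (0:ℂ)*ζ + (0:ℂ)*ζ^2) * hrel)
    · exact hne rfl
    · exact (pow_ne_zero 3 hz0) (by simp only [toC] at h0; push_cast at h0; linear_combination h0 - ((0:ℂ) + (0:ℂ)*ζ + (0:ℂ)*ζ^2) * hrel)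
    · exact (mul_ne_zero hzm1 (neg_ne_zero.mpr (pow_ne_zero 2 hz0))) (by simp only [toC] at h0; push_cast at h0; linear_combination h0 - ((0:ℂ) + (0:ℂ)*ζ + (0:ℂ)*ζ^2) * hrel)
    · exact (pow_ne_zero 2 hz0) (by simp only [toC] at h0; push_cast at h0; linear_combination h0 - ((0:ℂ) + (0:ℂ)*ζ + (0:ℂ)*ζ^2) * hrel)
    · exact (mul_ne_zero hzm1 (neg_ne_zero.mpr (pow_ne_zero 1 hz0))) (by simp only [toC] at h0; push_cast at h0; linear_combination h0 - ((0:ℂ) + (0:ℂ)*ζ + (0:ℂ)*ζ^2) * hrel)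
    · exact (pow_ne_zero 1 hz0) (by simp only [toC] at h0; push_cast at h0; linear_combination h0 - ((0:ℂ) + (0:ℂ)*ζ + (0:ℂ)*ζ^2) * hrel)
    · exact (mul_ne_zero h21 (pow_ne_zero 1 hz0)) (by simp only [toC] at h0; push_cast at h0; linear_combination h0 - ((0:ℂ) + (0:ℂ)*ζ + (0:ℂ)*ζ^2) * hrel)
    · exact (mul_ne_zero hzm1 (neg_ne_zero.mpr (pow_ne_zero 0 hz0))) (by simp only [toC] at h0; push_cast at h0; linear_combination h0 - ((0:ℂ) + (0:ℂ)*ζ + (0:ℂ)*ζ^2) * hrel)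
    · exact (pow_ne_zero 0 hz0) (by simp only [toC] at h0; push_cast at h0; linear_combination h0 - ((0:ℂ) + (0:ℂ)*ζ + (0:ℂ)*ζ^2) * hrel)
    · exact (mul_ne_zero h21 (pow_ne_zero 3 hz0)) (by simp only [toC] at h0; push_cast at h0; linear_combination h0 - ((1:ℂ) + (-1:ℂ)*ζ + (0:ℂ)*ζ^2) * hrel)
    · exact (mul_ne_zero h21 (pow_ne_zero 0 hz0)) (by simp only [toC] at h0; push_cast at h0; linear_combination h0 - ((0:ℂ) + (0:ℂ)*ζ + (0:ℂ)*ζ^2) * hrel)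
    · exact (mul_ne_zero h21 (neg_ne_zero.mpr (pow_ne_zero 4 hz0))) (by simp only [toC] at h0; push_cast at h0; linear_combination h0 - ((1:ℂ) + (-1:ℂ)*ζ + (1:ℂ)*ζ^2) * hrel)
    · exact (mul_ne_zero h21 (neg_ne_zero.mpr (pow_ne_zero 2 hz0))) (by simp only [toC] at h0; push_cast at h0; linear_combination h0 - ((1:ℂ) + (0:ℂ)*ζ + (0:ℂ)*ζ^2) * hrel)
    · exact (neg_ne_zero.mpr (pow_ne_zero 4 hz0)) (by simp only [toC] at h0; push_cast at h0; linear_combination h0 - ((1:ℂ) + (0:ℂ)*ζ + (0:ℂ)*ζ^2) * hrel)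
    · exact (mul_ne_zero hzm1 (neg_ne_zero.mpr (pow_ne_zero 3 hz0))) (by simp only [toC] at h0; push_cast at h0; linear_combination h0 - ((1:ℂ) + (0:ℂ)*ζ + (0:ℂ)*ζ^2) * hrel)
    · exact (mul_ne_zero hzm1 (pow_ne_zero 4 hz0)) (by simp only [toC] at h0; push_cast at h0; linear_combination h0 - ((2:ℂ) + (-1:ℂ)*ζ + (0:ℂ)*ζ^2) * hrel)
  constructor
  · apply Set.Subset.antisymm
    · rintro z ⟨c, -, -, rfl⟩
      rw [Jc_eq c]
      exact target_in _ (targets_dec _ (runQ_mem c))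
    · rintro z (hz | ⟨j, hj, s, hs, hf⟩)
      · refine ⟨[2, 3], by simp, by decide, ?_⟩
        rw [Set.mem_singleton_iff] at hz
        rw [hz, Jc_eq]
        have h : JQ (runQ [2, 3]) = ((0,0,0,0) : Q4) := by decide
        rw [h]; simp [toC]
      · rcases hs with rfl | rfl <;> rcases hf with rfl | rfl | rfl
        all_goals interval_cases j
        · refine ⟨[6], by simp, by decide, ?_⟩
          rw [Jc_eq]
          have h : JQ (runQ [6]) = ((1,0,0,0) : Q4) := by decide
          rw [h]
          simp only [toC]; push_cast
          linear_combination (-((0:ℂ) + (0:ℂ)*ζ + (0:ℂ)*ζ^2)) * hrel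
        · refine ⟨[2, 4, 4], by simp, by decide, ?_⟩
          rw [Jc_eq]
          have h : JQ (runQ [2, 4, 4]) = ((0,1,0,0) : Q4) := by decide
          rw [h]
          simp only [toC]; push_cast
          linear_combination (-((0:ℂ) + (0:ℂ)*ζ + (0:ℂ)*ζ^2)) * hrel
        · refine ⟨[3, 4, 4], by simp, by decide, ?_⟩
          rw [Jc_eq]
          have h : JQ (runQ [3, 4, 4]) = ((0,0,1,0) : Q4) := by decide
          rw [h]
          simp only [toC]; push_cast
          linear_combination (-((0:ℂ) + (0:ℂ)*ζ + (0:ℂ)*ζ^2)) * hrel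
        · refine ⟨[4, 3, 5], by simp, by decide, ?_⟩
          rw [Jc_eq]
          have h : JQ (runQ [4, 3, 5]) = ((0,0,0,1) : Q4) := by decide
          rw [h]
          simp only [toC]; push_cast
          linear_combination (-((0:ℂ) + (0:ℂ)*ζ + (0:ℂ)*ζ^2)) * hrel
        · refine ⟨[4, 4, 5], by simp, by decide, ?_⟩
          rw [Jc_eq]
          have h : JQ (runQ [4, 4, 5]) = ((-1,-1,-1,-1) : Q4) := by decide
          rw [h]
          simp only [toC]; push_cast
          linear_combination (-((-1:ℂ) + (0:ℂ)*ζ + (0:ℂ)*ζ^2)) * hrel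
        · refine ⟨[5, 6, 5], by simp, by decide, ?_⟩
          rw [Jc_eq]
          have h : JQ (runQ [5, 6, 5]) = ((-1,1,0,0) : Q4) := by decide
          rw [h]
          simp only [toC]; push_cast
          linear_combination (-((0:ℂ) + (0:ℂ)*ζ + (0:ℂ)*ζ^2)) * hrel
        · refine ⟨[5, 2, 5], by simp, by decide, ?_⟩
          rw [Jc_eq]
          have h : JQ (runQ [5, 2, 5]) = ((0,-1,1,0) : Q4) := by decide
          rw [h]
          simp only [toC]; push_cast
          linear_combination (-((0:ℂ) + (0:ℂ)*ζ + (0:ℂ)*ζ^2)) * hrel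
        · refine ⟨[5, 3, 5], by simp, by decide, ?_⟩
          rw [Jc_eq]
          have h : JQ (runQ [5, 3, 5]) = ((0,0,-1,1) : Q4) := by decide
          rw [h]
          simp only [toC]; push_cast
          linear_combination (-((0:ℂ) + (0:ℂ)*ζ + (0:ℂ)*ζ^2)) * hrel
        · refine ⟨[5, 4, 5], by simp, by decide, ?_⟩
          rw [Jc_eq]
          have h : JQ (runQ [5, 4, 5]) = ((-1,-1,-1,-2) : Q4) := by decide
          rw [h]
          simp only [toC]; push_cast
          linear_combination (-((-1:ℂ) + (0:ℂ)*ζ + (0:ℂ)*ζ^2)) * hrel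
        · refine ⟨[4, 4], by simp, by decide, ?_⟩
          rw [Jc_eq]
          have h : JQ (runQ [4, 4]) = ((2,1,1,1) : Q4) := by decide
          rw [h]
          simp only [toC]; push_cast
          linear_combination (-((2:ℂ) + (-1:ℂ)*ζ + (0:ℂ)*ζ^2)) * hrel
        · refine ⟨[2], by simp, by decide, ?_⟩
          rw [Jc_eq]
          have h : JQ (runQ [2]) = ((1,0,1,0) : Q4) := by decide
          rw [h]
          simp only [toC]; push_cast
          linear_combination (-((0:ℂ) + (0:ℂ)*ζ + (0:ℂ)*ζ^2)) * hrel
        · refine ⟨[3, 3, 5], by simp, by decide, ?_⟩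
          rw [Jc_eq]
          have h : JQ (runQ [3, 3, 5]) = ((0,1,0,1) : Q4) := by decide
          rw [h]
          simp only [toC]; push_cast
          linear_combination (-((0:ℂ) + (0:ℂ)*ζ + (0:ℂ)*ζ^2)) * hrel
        · refine ⟨[3, 4, 5], by simp, by decide, ?_⟩
          rw [Jc_eq]
          have h : JQ (runQ [3, 4, 5]) = ((-1,-1,0,-1) : Q4) := by decide
          rw [h]
          simp only [toC]; push_cast
          linear_combination (-((-1:ℂ) + (0:ℂ)*ζ + (0:ℂ)*ζ^2)) * hrel
        · refine ⟨[2, 4], by simp, by decide, ?_⟩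
          rw [Jc_eq]
          have h : JQ (runQ [2, 4]) = ((1,0,0,1) : Q4) := by decide
          rw [h]
          simp only [toC]; push_cast
          linear_combination (-((1:ℂ) + (-1:ℂ)*ζ + (0:ℂ)*ζ^2)) * hrel
        · refine ⟨[2, 4, 2], by simp, by decide, ?_⟩
          rw [Jc_eq]
          have h : JQ (runQ [2, 4, 2]) = ((-1,0,-1,-1) : Q4) := by decide
          rw [h]
          simp only [toC]; push_cast
          linear_combination (-((-1:ℂ) + (1:ℂ)*ζ + (-1:ℂ)*ζ^2)) * hrel
        · refine ⟨[5, 5], by simp, by decide, ?_⟩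
          rw [Jc_eq]
          have h : JQ (runQ [5, 5]) = ((-1,0,0,0) : Q4) := by decide
          rw [h]
          simp only [toC]; push_cast
          linear_combination (-((0:ℂ) + (0:ℂ)*ζ + (0:ℂ)*ζ^2)) * hrel
        · refine ⟨[4], by simp, by decide, ?_⟩
          rw [Jc_eq]
          have h : JQ (runQ [4]) = ((0,-1,0,0) : Q4) := by decide
          rw [h]
          simp only [toC]; push_cast
          linear_combination (-((0:ℂ) + (0:ℂ)*ζ + (0:ℂ)*ζ^2)) * hrel
        · refine ⟨[2, 5], by simp, by decide, ?_⟩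
          rw [Jc_eq]
          have h : JQ (runQ [2, 5]) = ((0,0,-1,0) : Q4) := by decide
          rw [h]
          simp only [toC]; push_cast
          linear_combination (-((0:ℂ) + (0:ℂ)*ζ + (0:ℂ)*ζ^2)) * hrel
        · refine ⟨[3, 5], by simp, by decide, ?_⟩
          rw [Jc_eq]
          have h : JQ (runQ [3, 5]) = ((0,0,0,-1) : Q4) := by decide
          rw [h]
          simp only [toC]; push_cast
          linear_combination (-((0:ℂ) + (0:ℂ)*ζ + (0:ℂ)*ζ^2)) * hrel
        · refine ⟨[4, 5], by simp, by decide, ?_⟩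
          rw [Jc_eq]
          have h : JQ (runQ [4, 5]) = ((1,1,1,1) : Q4) := by decide
          rw [h]
          simp only [toC]; push_cast
          linear_combination (-((1:ℂ) + (0:ℂ)*ζ + (0:ℂ)*ζ^2)) * hrel
        · refine ⟨[5], by simp, by decide, ?_⟩
          rw [Jc_eq]
          have h : JQ (runQ [5]) = ((1,-1,0,0) : Q4) := by decide
          rw [h]
          simp only [toC]; push_cast
          linear_combination (-((0:ℂ) + (0:ℂ)*ζ + (0:ℂ)*ζ^2)) * hrel
        · refine ⟨[2, 6, 2], by simp, by decide, ?_⟩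
          rw [Jc_eq]
          have h : JQ (runQ [2, 6, 2]) = ((0,1,-1,0) : Q4) := by decide
          rw [h]
          simp only [toC]; push_cast
          linear_combination (-((0:ℂ) + (0:ℂ)*ζ + (0:ℂ)*ζ^2)) * hrel
        · refine ⟨[3, 4, 3], by simp, by decide, ?_⟩
          rw [Jc_eq]
          have h : JQ (runQ [3, 4, 3]) = ((0,0,1,-1) : Q4) := by decide
          rw [h]
          simp only [toC]; push_cast
          linear_combination (-((0:ℂ) + (0:ℂ)*ζ + (0:ℂ)*ζ^2)) * hrel
        · refine ⟨[4, 3, 4], by simp, by decide, ?_⟩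
          rw [Jc_eq]
          have h : JQ (runQ [4, 3, 4]) = ((1,1,1,2) : Q4) := by decide
          rw [h]
          simp only [toC]; push_cast
          linear_combination (-((1:ℂ) + (0:ℂ)*ζ + (0:ℂ)*ζ^2)) * hrel
        · refine ⟨[4, 4, 6, 5], by simp, by decide, ?_⟩
          rw [Jc_eq]
          have h : JQ (runQ [4, 4, 6, 5]) = ((-2,-1,-1,-1) : Q4) := by decide
          rw [h]
          simp only [toC]; push_cast
          linear_combination (-((-2:ℂ) + (1:ℂ)*ζ + (0:ℂ)*ζ^2)) * hrel
        · refine ⟨[2, 6, 5], by simp, by decide, ?_⟩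
          rw [Jc_eq]
          have h : JQ (runQ [2, 6, 5]) = ((-1,0,-1,0) : Q4) := by decide
          rw [h]
          simp only [toC]; push_cast
          linear_combination (-((0:ℂ) + (0:ℂ)*ζ + (0:ℂ)*ζ^2)) * hrel
        · refine ⟨[3, 3], by simp, by decide, ?_⟩
          rw [Jc_eq]
          have h : JQ (runQ [3, 3]) = ((0,-1,0,-1) : Q4) := by decide
          rw [h]
          simp only [toC]; push_cast
          linear_combination (-((0:ℂ) + (0:ℂ)*ζ + (0:ℂ)*ζ^2)) * hrel
        · refine ⟨[2, 2], by simp, by decide, ?_⟩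
          rw [Jc_eq]
          have h : JQ (runQ [2, 2]) = ((1,1,0,1) : Q4) := by decide
          rw [h]
          simp only [toC]; push_cast
          linear_combination (-((1:ℂ) + (0:ℂ)*ζ + (0:ℂ)*ζ^2)) * hrel
        · refine ⟨[2, 4, 5], by simp, by decide, ?_⟩
          rw [Jc_eq]
          have h : JQ (runQ [2, 4, 5]) = ((-1,0,0,-1) : Q4) := by decide
          rw [h]
          simp only [toC]; push_cast
          linear_combination (-((-1:ℂ) + (1:ℂ)*ζ + (0:ℂ)*ζ^2)) * hrel
        · refine ⟨[3], by simp, by decide, ?_⟩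
          rw [Jc_eq]
          have h : JQ (runQ [3]) = ((1,0,1,1) : Q4) := by decide
          rw [h]
          simp only [toC]; push_cast
          linear_combination (-((1:ℂ) + (-1:ℂ)*ζ + (1:ℂ)*ζ^2)) * hrel
  · intro c hc hc2
    obtain ⟨-, -, h3, h4⟩ := spec c
    have hsmem := runQ_mem c
    constructor
    · intro hz0
      have hq : JQ (runQ c) = ((0,0,0,0) : Q4) := by
        by_contra hne
        exact nonzero_t _ (targets_dec _ hsmem) hne (by rw [← Jc_eq c]; exact hz0)
      obtain ⟨p1, p2⟩ := (zero_iff_dec _ hsmem).mp hq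
      have q1 : ((ev₁ ((Mq RU SU c : Matrix (Fin 2) (Fin 2) (LaurentPolynomial ℤ)) 0 0) : ℤ) : ZMod 5) = 0 := by
        rw [h3, p1]
      have q1' := (ZMod.intCast_zmod_eq_zero_iff_dvd _ 5).mp q1
      refine ⟨by omega, ?_⟩
      rcases p2 with p2 | p2
      · left
        have q2 : ((ev₁ ((Mq RU SU c : Matrix (Fin 2) (Fin 2) (LaurentPolynomial ℤ)) 1 0) : ℤ) : ZMod 5)
            = ((2:ℤ) : ZMod 5) := by rw [h4, p2]; decide
        have q2' := (ZMod.intCast_eq_intCast_iff' _ _ _).mp q2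
        push_cast at q2'
        omega
      · right
        have q2 : ((ev₁ ((Mq RU SU c : Matrix (Fin 2) (Fin 2) (LaurentPolynomial ℤ)) 1 0) : ℤ) : ZMod 5)
            = ((3:ℤ) : ZMod 5) := by rw [h4, p2]; decide
        have q2' := (ZMod.intCast_eq_intCast_iff' _ _ _).mp q2
        push_cast at q2'
        omega
    · rintro ⟨p1, hp2⟩
      have q1 : phiQ (runQ c).1 = 0 := by
        rw [← h3]
        exact (ZMod.intCast_zmod_eq_zero_iff_dvd _ 5).mpr (by omega)
      have q2 : phiQ (runQ c).2 = 2 ∨ phiQ (runQ c).2 = 3 := by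
        rcases hp2 with p2 | p2
        · left
          rw [← h4, show ((2:ZMod 5)) = ((2:ℤ) : ZMod 5) by decide]
          exact (ZMod.intCast_eq_intCast_iff' _ _ _).mpr (by push_cast; omega)
        · right
          rw [← h4, show ((3:ZMod 5)) = ((3:ℤ) : ZMod 5) by decide]
          exact (ZMod.intCast_eq_intCast_iff' _ _ _).mpr (by push_cast; omega)
      have hq := (zero_iff_dec _ hsmem).mpr ⟨q1, q2⟩
      rw [Jc_eq c, hq]
      simp [toC]
end

section
/- For a nonzero complex number ζ, the set { ζ·ev_ζ((M_q(c₁,…,c_k))₁₁) + (1−ζ)·ev_ζ((M_q(c₁,…,c_k))₂₁) : k ≥ 1, c₁,…,c_k ≥ 2 } — that is, the set of values J_{r/s}(ζ) of the normalized Jones polynomials of rational links over all irreducible fractions r/s > 1 — is finite if and only if ζ is a primitive n-th root of unity for some n ∈ {2, 3, 4, 5, 6}. -/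
/-!
The value attached to a word `c` is the first coordinate of `(ζ, 1 - ζ) ᵥ* M_ζ(c)`, where
`M_ζ(c)` is a product of `R_ζ` and `S_ζ`.

If `ζ` is a primitive `n`-th root of unity with `2 ≤ n ≤ 5`, then `S_ζ²`, `(R_ζ S_ζ)³` and `R_ζⁿ`
are scalars, so modulo scalars `R_ζ` and `S_ζ` generate a quotient of the finite `(2, 3, n)`
triangle group; for `n = 6`, `(ζ, 1 - ζ)` is a common eigenvector of `R_ζ` and `S_ζ`. In all five
cases the line through `(ζ, 1 - ζ)` has a finite orbit and the scalars that occur are roots of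
unity, so only finitely many values arise.

Conversely, if `ζ = 1` or `ζ` is not a root of unity, the one-letter words already give
infinitely many values. If `ζ` has order `n ≥ 7`, an equality between two values is the vanishing
at `ζ` of an integral Laurent polynomial, so it persists at `ζ₀ = exp(2πi/n)`, a root of the same
cyclotomic polynomial. At `ζ₀` the words `(3, …, 3)` give a linear recurrence with characteristic
polynomial `X² - (1 + ζ₀ + ζ₀²) X + ζ₀²`. As `|1 + ζ₀ + ζ₀²| = 1 + 2 cos(2π/n) > 2`, its roots lie
on both sides of the unit circle, which forces infinitely many values.
-/

open LaurentPolynomial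

open Matrix

open Complex (exp I)

/- `rMat z`, `sMat z` and `wordMat z c` are `R_q`, `S_q` and `M_q(c)` at `q = z`; `jonesPoly c` is
the Jones polynomial of the fraction with negative continued fraction expansion `c`, and
`jonesValue z c` is its value at `z`. -/

noncomputable def rMat (z : ℂ) : Matrix (Fin 2) (Fin 2) ℂ := !![z, 1; 0, 1]

noncomputable def sMat (z : ℂ) : Matrix (Fin 2) (Fin 2) ℂ := !![0, -z⁻¹; 1, 0]

noncomputable def wordMat (z : ℂ) (c : List ℕ) : Matrix (Fin 2) (Fin 2) ℂ :=
  (c.map fun a => rMat z ^ a * sMat z).prod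

noncomputable def jonesValue (z : ℂ) (c : List ℕ) : ℂ :=
  z * wordMat z c 0 0 + (1 - z) * wordMat z c 1 0

def admissibleWords : Set (List ℕ) := {c | c ≠ [] ∧ ∀ x ∈ c, 2 ≤ x}

noncomputable def qWordMat (c : List ℕ) : Matrix (Fin 2) (Fin 2) (LaurentPolynomial ℤ) :=
  (c.map fun a => Rq ^ a * Sq).prod

noncomputable def jonesPoly (c : List ℕ) : LaurentPolynomial ℤ :=
  T 1 * qWordMat c 0 0 + (1 - T 1) * qWordMat c 1 0

theorem coe_Mq {RU SU : GL (Fin 2) (LaurentPolynomial ℤ)}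
    (hRU : (RU : Matrix (Fin 2) (Fin 2) (LaurentPolynomial ℤ)) = Rq)
    (hSU : (SU : Matrix (Fin 2) (Fin 2) (LaurentPolynomial ℤ)) = Sq) (c : List ℕ) :
    (Mq RU SU c : Matrix (Fin 2) (Fin 2) (LaurentPolynomial ℤ)) = qWordMat c := by
  induction c with
  | nil => rfl
  | cons a c ih =>
    simp only [Mq, qWordMat, List.map_cons, List.prod_cons] at ih ⊢
    rw [Units.val_mul, Units.val_mul, Units.val_pow_eq_pow_val, hRU, hSU, ih]

section Specialization

variable (f : LaurentPolynomial ℤ →+* ℂ)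

theorem map_T_neg_one : f (T (-1)) = (f (T 1))⁻¹ :=
  eq_inv_of_mul_eq_one_left (by rw [← map_mul, ← T_add]; simp)

theorem map_T_one_ne_zero : f (T 1) ≠ 0 :=
  ((isUnit_T 1).map f).ne_zero

theorem map_qWordMat_apply (c : List ℕ) (i j : Fin 2) :
    f (qWordMat c i j) = wordMat (f (T 1)) c i j := by
  suffices f.mapMatrix (qWordMat c) = wordMat (f (T 1)) c by rw [← this]; rfl
  have hR : f.mapMatrix Rq = rMat (f (T 1)) := by
    ext i j; fin_cases i <;> fin_cases j <;> simp [Rq, rMat]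
  have hS : f.mapMatrix Sq = sMat (f (T 1)) := by
    ext i j; fin_cases i <;> fin_cases j <;> simp [Sq, sMat, map_T_neg_one]
  simp only [qWordMat, wordMat, map_list_prod, List.map_map, Function.comp_def, map_mul, map_pow,
    hR, hS]

theorem map_jonesPoly (c : List ℕ) : f (jonesPoly c) = jonesValue (f (T 1)) c := by
  simp only [jonesPoly, jonesValue, map_add, map_mul, map_sub, map_one, map_qWordMat_apply]

theorem jonesValue_image_eq {RU SU : GL (Fin 2) (LaurentPolynomial ℤ)}
    (hRU : (RU : Matrix (Fin 2) (Fin 2) (LaurentPolynomial ℤ)) = Rq)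
    (hSU : (SU : Matrix (Fin 2) (Fin 2) (LaurentPolynomial ℤ)) = Sq) :
    jonesValue (f (T 1)) '' admissibleWords =
      {z : ℂ | ∃ c : List ℕ, c ≠ [] ∧ (∀ x ∈ c, 2 ≤ x) ∧
        z = f (T 1) * f ((Mq RU SU c : Matrix (Fin 2) (Fin 2) (LaurentPolynomial ℤ)) 0 0) +
          (1 - f (T 1)) * f ((Mq RU SU c : Matrix (Fin 2) (Fin 2) (LaurentPolynomial ℤ)) 1 0)} := by
  ext z
  simp [admissibleWords, coe_Mq hRU hSU, map_qWordMat_apply, jonesValue, and_assoc, eq_comm]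

end Specialization

@[simp]
theorem vecMul_rMat (z a b : ℂ) : ![a, b] ᵥ* rMat z = ![a * z, a + b] := by
  ext i; fin_cases i <;> simp [rMat, vecMul, dotProduct, Fin.sum_univ_two]

@[simp]
theorem vecMul_sMat (z a b : ℂ) : ![a, b] ᵥ* sMat z = ![b, -(a * z⁻¹)] := by
  ext i; fin_cases i <;> simp [sMat, vecMul, dotProduct, Fin.sum_univ_two]

theorem jonesValue_eq_vecMul (z : ℂ) (c : List ℕ) :
    jonesValue z c = (![z, 1 - z] ᵥ* wordMat z c) 0 := by
  simp [jonesValue, vecMul, dotProduct, Fin.sum_univ_two]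

theorem rMat_pow (z : ℂ) (m : ℕ) :
    rMat z ^ m = !![z ^ m, ∑ i ∈ Finset.range m, z ^ i; 0, 1] := by
  induction m with
  | zero => ext i j; fin_cases i <;> fin_cases j <;> simp
  | succ m ih =>
    rw [pow_succ, ih]
    ext i j
    fin_cases i <;> fin_cases j <;> simp [rMat, Finset.sum_range_succ, pow_succ]
    ring

theorem jonesValue_singleton (z : ℂ) (m : ℕ) :
    jonesValue z [m] = z * ∑ i ∈ Finset.range m, z ^ i + (1 - z) := by
  simp [jonesValue, wordMat, rMat_pow, sMat]

section Orbits

variable {ι n R : Type*} [CommRing R]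

def rootMultiples (N : ℕ) (v : ι → n → R) : Set (n → R) :=
  {w | ∃ s : R, s ^ N = 1 ∧ ∃ i, w = s • v i}

theorem finite_rootMultiples [IsDomain R] [Finite ι] {N : ℕ} (hN : N ≠ 0) (v : ι → n → R) :
    (rootMultiples N v).Finite := by
  have hroots : {s : R | s ^ N = 1}.Finite :=
    (Polynomial.nthRootsFinset N (1 : R)).finite_toSet.subset fun s hs =>
      (Polynomial.mem_nthRootsFinset (Nat.pos_of_ne_zero hN) 1).2 hs
  refine ((hroots.prod Set.finite_univ).image fun p : R × ι => p.1 • v p.2).subset ?_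
  rintro w ⟨s, hs, i, rfl⟩
  exact ⟨(s, i), ⟨hs, trivial⟩, rfl⟩

variable [Fintype n] [DecidableEq n]

def vecMulStabilizer (O : Set (n → R)) : Submonoid (Matrix n n R) where
  carrier := {A | ∀ w ∈ O, w ᵥ* A ∈ O}
  one_mem' w hw := by simpa using hw
  mul_mem' hA hB w hw := by rw [← vecMul_vecMul]; exact hB _ (hA _ hw)

def PermutesLinesUpToRoots (N : ℕ) (A : Matrix n n R) (v : ι → n → R) : Prop :=
  ∃ (σ : ι → ι) (c : ι → R), ∀ i, c i ^ N = 1 ∧ v i ᵥ* A = c i • v (σ i)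

theorem PermutesLinesUpToRoots.mem_vecMulStabilizer {N : ℕ} {A : Matrix n n R} {v : ι → n → R}
    (h : PermutesLinesUpToRoots N A v) : A ∈ vecMulStabilizer (rootMultiples N v) := by
  obtain ⟨σ, c, hc⟩ := h
  rintro w ⟨s, hs, i, rfl⟩
  refine ⟨s * c i, by rw [mul_pow, hs, (hc i).1, one_mul], σ i, ?_⟩
  rw [smul_vecMul, (hc i).2, smul_smul]

end Orbits

theorem wordMat_mem_vecMulStabilizer {z : ℂ} {O : Set (Fin 2 → ℂ)}
    (hR : rMat z ∈ vecMulStabilizer O) (hS : sMat z ∈ vecMulStabilizer O) (c : List ℕ) :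
    wordMat z c ∈ vecMulStabilizer O := by
  refine Submonoid.list_prod_mem _ fun A hA => ?_
  obtain ⟨a, -, rfl⟩ := List.mem_map.1 hA
  exact mul_mem (pow_mem hR a) hS

theorem finite_range_jonesValue_of_permutesLines {ι : Type*} [Finite ι] {N : ℕ} (hN : N ≠ 0)
    {z : ℂ} {v : ι → Fin 2 → ℂ} (i₀ : ι) (he : v i₀ = ![z, 1 - z])
    (hR : PermutesLinesUpToRoots N (rMat z) v) (hS : PermutesLinesUpToRoots N (sMat z) v) :
    (Set.range (jonesValue z)).Finite := by
  have he' : ![z, 1 - z] ∈ rootMultiples N v := ⟨1, one_pow N, i₀, by rw [one_smul, he]⟩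
  refine ((finite_rootMultiples hN v).image (· 0)).subset ?_
  rintro _ ⟨c, rfl⟩
  exact ⟨_, wordMat_mem_vecMulStabilizer hR.mem_vecMulStabilizer hS.mem_vecMulStabilizer c _ he',
    (jonesValue_eq_vecMul z c).symm⟩

theorem IsPrimitiveRoot.inv_eq_pow {M : Type*} [DivisionCommMonoid M] {z : M} {k : ℕ}
    (hz : IsPrimitiveRoot z (k + 1)) : z⁻¹ = z ^ k :=
  inv_eq_of_mul_eq_one_right (by rw [← pow_succ']; exact hz.pow_eq_one)

/- In each table below, the lines through the `v i` form the orbit of the line through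
`(z, 1 - z)`; the permutations and the root-of-unity multipliers were found by computing this
orbit in `ℚ(z)`. -/

theorem finite_range_jonesValue_of_isPrimitiveRoot_two {z : ℂ} (hz : IsPrimitiveRoot z 2) :
    (Set.range (jonesValue z)).Finite := by
  have hrel : z = -1 := hz.eq_neg_one_of_two_right
  refine finite_range_jonesValue_of_permutesLines (N := 2) (by norm_num)
    (v := ![![z, 1 - z], ![1, 1], ![2, -1]]) 0 rfl
    ⟨![1, 0, 2], ![1, 1, -1], ?_⟩ ⟨![2, 1, 0], ![1, 1, 1], ?_⟩ <;>
  intro i <;> fin_cases i <;> simp [hz.inv_eq_pow, vecCons_inj] <;> grind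

theorem finite_range_jonesValue_of_isPrimitiveRoot_three {z : ℂ} (hz : IsPrimitiveRoot z 3) :
    (Set.range (jonesValue z)).Finite := by
  have hrel : 1 + z + z ^ 2 = 0 := by
    simpa [Finset.sum_range_succ] using hz.geom_sum_eq_zero (by norm_num)
  refine finite_range_jonesValue_of_permutesLines (N := 6) (by norm_num)
    (v := ![![z, 1 - z], ![1, z], ![1 - z, -1], ![1, -z]]) 0 rfl
    ⟨![1, 3, 2, 0], ![z ^ 2, z, z, 1], ?_⟩ ⟨![2, 3, 0, 1], ![1, z, -z ^ 2, -z], ?_⟩ <;>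
  intro i <;> fin_cases i <;> simp [hz.inv_eq_pow, vecCons_inj] <;> grind

theorem finite_range_jonesValue_of_isPrimitiveRoot_four {z : ℂ} (hz : IsPrimitiveRoot z 4) :
    (Set.range (jonesValue z)).Finite := by
  have hrel : z ^ 2 = -1 :=
    (hz.pow (by norm_num) (by norm_num : 4 = 2 * 2)).eq_neg_one_of_two_right
  refine finite_range_jonesValue_of_permutesLines (N := 4) (by norm_num)
    (v := ![![z, 1 - z], ![-1, 1], ![1 - z, -1], ![-z, 0], ![1, -z], ![0, 1]]) 0 rfl
    ⟨![1, 3, 2, 4, 0, 5], ![1, 1, z, 1, 1, 1], ?_⟩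
    ⟨![2, 4, 0, 5, 1, 3], ![1, 1, z, 1, z, z], ?_⟩ <;>
  intro i <;> fin_cases i <;> simp [hz.inv_eq_pow, vecCons_inj] <;> grind

theorem finite_range_jonesValue_of_isPrimitiveRoot_five {z : ℂ} (hz : IsPrimitiveRoot z 5) :
    (Set.range (jonesValue z)).Finite := by
  have hrel : 1 + z + z ^ 2 + z ^ 3 + z ^ 4 = 0 := by
    simpa [Finset.sum_range_succ] using hz.geom_sum_eq_zero (by norm_num)
  refine finite_range_jonesValue_of_permutesLines (N := 10) (by norm_num)
    (v := ![![z, 1 - z], ![z ^ 2, 1], ![1 - z, -1], ![z ^ 3, 1 + z ^ 2], ![1, -z],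
      ![1, -1 - z ^ 2], ![1 + z ^ 2, -z ^ 2], ![-z - z ^ 3, -1], ![-1 - z ^ 3, 1 + z ^ 3],
      ![-1 - z ^ 2, 0], ![z + z ^ 3, 1 + z ^ 2], ![0, 1 + z ^ 2]]) 0 rfl
    ⟨![1, 3, 2, 5, 0, 4, 7, 8, 9, 10, 6, 11],
      ![1, 1, z, z ^ 4, 1, z, -1, z ^ 4, z ^ 4, -1, z ^ 2, 1], ?_⟩
    ⟨![2, 4, 0, 6, 1, 7, 3, 5, 10, 11, 8, 9],
      ![1, 1, -z ^ 4, 1, -z ^ 4, z ^ 4, -z ^ 4, -1, z ^ 2, z ^ 4, -z ^ 2, -1], ?_⟩ <;>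
  intro i <;> fin_cases i <;> simp [hz.inv_eq_pow, vecCons_inj] <;> grind

theorem finite_range_jonesValue_of_isPrimitiveRoot_six {z : ℂ} (hz : IsPrimitiveRoot z 6) :
    (Set.range (jonesValue z)).Finite := by
  have hcube : z ^ 3 = -1 :=
    (hz.pow (by norm_num) (by norm_num : 6 = 3 * 2)).eq_neg_one_of_two_right
  have hne : z + 1 ≠ 0 := fun h => by
    have : z ^ 2 = 1 := by rw [eq_neg_of_add_eq_zero_left h]; norm_num
    exact hz.pow_ne_one_of_pos_of_lt (by norm_num) (by norm_num) this
  have hrel : z ^ 2 - z + 1 = 0 := by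
    refine (mul_eq_zero.1 ?_).resolve_left hne
    linear_combination hcube
  refine finite_range_jonesValue_of_permutesLines (N := 6) (by norm_num)
    (v := ![![z, 1 - z]]) 0 rfl ⟨![0], ![z], ?_⟩ ⟨![0], ![-z], ?_⟩ <;>
  intro i <;> fin_cases i <;> simp [hz.inv_eq_pow, vecCons_inj] <;> grind

theorem finite_range_jonesValue_of_isPrimitiveRoot {z : ℂ} {n : ℕ}
    (hn : n ∈ ({2, 3, 4, 5, 6} : Set ℕ)) (hz : IsPrimitiveRoot z n) :
    (Set.range (jonesValue z)).Finite := by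
  rcases hn with rfl | rfl | rfl | rfl | rfl
  · exact finite_range_jonesValue_of_isPrimitiveRoot_two hz
  · exact finite_range_jonesValue_of_isPrimitiveRoot_three hz
  · exact finite_range_jonesValue_of_isPrimitiveRoot_four hz
  · exact finite_range_jonesValue_of_isPrimitiveRoot_five hz
  · exact finite_range_jonesValue_of_isPrimitiveRoot_six hz

section GeomSum

variable {K : Type*} [Ring K] [CharZero K]

theorem geom_sum_ne_zero_of_orderOf_lt_two {z : K} (h : orderOf z < 2) {d : ℕ} (hd : d ≠ 0) :
    ∑ i ∈ Finset.range d, z ^ i ≠ 0 := by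
  intro hsum
  have hz1 : z ≠ 1 := by rintro rfl; simp [hd] at hsum
  have hpow : z ^ d = 1 := by
    have := geom_sum_mul z d
    rw [hsum, zero_mul] at this
    exact sub_eq_zero.1 this.symm
  have hpos : 0 < orderOf z :=
    orderOf_pos_iff.2 (isOfFinOrder_iff_pow_eq_one.2 ⟨d, Nat.pos_of_ne_zero hd, hpow⟩)
  have hne : orderOf z ≠ 1 := fun h1 => hz1 (orderOf_eq_one_iff.1 h1)
  omega

theorem geom_sum_injective [NoZeroDivisors K] {z : K} (hz : z ≠ 0) (h : orderOf z < 2) :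
    Function.Injective fun m => ∑ i ∈ Finset.range m, z ^ i := by
  refine .of_lt_imp_ne fun a b hab heq => ?_
  obtain ⟨d, rfl⟩ := Nat.exists_eq_add_of_lt hab
  rw [add_assoc, Finset.sum_range_add, left_eq_add] at heq
  simp only [pow_add, ← Finset.mul_sum] at heq
  exact mul_ne_zero (pow_ne_zero a hz) (geom_sum_ne_zero_of_orderOf_lt_two h d.succ_ne_zero) heq

end GeomSum

theorem infinite_jonesValue_image_of_orderOf_lt_two {z : ℂ} (hz : z ≠ 0) (h : orderOf z < 2) :
    (jonesValue z '' admissibleWords).Infinite := by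
  refine Set.infinite_of_injective_forall_mem (f := fun m => jonesValue z [m + 2]) ?_
    fun m => ⟨[m + 2], ⟨by simp, by simp⟩, rfl⟩
  intro a b hab
  simp only [jonesValue_singleton] at hab
  have := geom_sum_injective hz h (mul_left_cancel₀ hz (add_right_cancel hab))
  omega

theorem exists_roots_of_two_lt_norm {t d : ℂ} (ht : 2 < ‖t‖) (hd : ‖d‖ = 1) :
    ∃ l m : ℂ, l + m = t ∧ l * m = d ∧ 1 < ‖l‖ ∧ 0 < ‖m‖ ∧ ‖m‖ < 1 := by
  obtain ⟨s, hs⟩ := IsAlgClosed.exists_pow_nat_eq (t ^ 2 - 4 * d) two_pos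
  wlog h : ‖(t - s) / 2‖ ≤ ‖(t + s) / 2‖ generalizing s
  · exact this (-s) (by rw [neg_sq, hs]) (by rw [sub_neg_eq_add, ← sub_eq_add_neg]; linarith)
  have hsum : (t + s) / 2 + (t - s) / 2 = t := by ring
  have hprod : (t + s) / 2 * ((t - s) / 2) = d := by linear_combination (-1 / 4 : ℂ) * hs
  have hnorm_prod : ‖(t + s) / 2‖ * ‖(t - s) / 2‖ = 1 := by rw [← norm_mul, hprod, hd]
  have hnorm_sum : 2 < ‖(t + s) / 2‖ + ‖(t - s) / 2‖ :=
    ht.trans_le (by simpa only [hsum] using norm_add_le ((t + s) / 2) ((t - s) / 2))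
  refine ⟨_, _, hsum, hprod, ?_, ?_, ?_⟩ <;> nlinarith [norm_nonneg ((t - s) / 2)]

theorem infinite_range_of_recurrence {l m : ℂ} (hl : 1 < ‖l‖) (hm₀ : 0 < ‖m‖) (hm : ‖m‖ < 1)
    {u : ℕ → ℂ} (hu : ∀ k, u (k + 2) = (l + m) * u (k + 1) - l * m * u k) (h0 : u 0 ≠ 0) :
    (Set.range u).Infinite := by
  intro hfin
  obtain ⟨C, hC⟩ := (hfin.image (‖·‖)).bddAbove
  have hbound : ∀ k, ‖u k‖ ≤ C := fun k => hC ⟨u k, ⟨k, rfl⟩, rfl⟩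
  have hdiff : ∀ k, u (k + 1) - m * u k = l ^ k * (u 1 - m * u 0) := by
    intro k
    induction k with
    | zero => simp
    | succ k ih => linear_combination hu k + l * ih
  have hdiff₀ : u 1 - m * u 0 = 0 := by
    by_contra hne
    obtain ⟨k, hk⟩ := pow_unbounded_of_one_lt (2 * C / ‖u 1 - m * u 0‖) hl
    rw [div_lt_iff₀ (norm_pos_iff.2 hne)] at hk
    have : ‖l‖ ^ k * ‖u 1 - m * u 0‖ ≤ 2 * C :=
      calc ‖l‖ ^ k * ‖u 1 - m * u 0‖ = ‖u (k + 1) - m * u k‖ := by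
            rw [hdiff k, norm_mul, norm_pow]
        _ ≤ ‖u (k + 1)‖ + ‖m‖ * ‖u k‖ := by rw [← norm_mul]; exact norm_sub_le _ _
        _ ≤ C + 1 * C := by gcongr <;> exact hbound _
        _ = 2 * C := by ring
    linarith
  have hgeom : ∀ k, u k = m ^ k * u 0 := by
    intro k
    induction k with
    | zero => simp
    | succ k ih =>
      have h := hdiff k
      rw [hdiff₀, mul_zero, sub_eq_zero] at h
      rw [h, ih, pow_succ, mul_assoc, mul_left_comm]
  refine Set.infinite_range_of_injective (fun a b hab => ?_) hfin
  rw [hgeom a, hgeom b] at hab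
  exact pow_right_injective₀ hm₀ hm.ne
    (by simpa [norm_pow] using congrArg norm (mul_right_cancel₀ h0 hab))

theorem rMat_pow_three_mul_sMat {z : ℂ} (hz : z ≠ 0) :
    rMat z ^ 3 * sMat z = !![1 + z + z ^ 2, -z ^ 2; 1, 0] := by
  ext i j
  fin_cases i <;> fin_cases j <;> simp [rMat_pow, sMat, Finset.sum_range_succ]
  field_simp

theorem jonesValue_replicate_three_add_two {z : ℂ} (hz : z ≠ 0) (k : ℕ) :
    jonesValue z (List.replicate (k + 2) 3) =
      (1 + z + z ^ 2) * jonesValue z (List.replicate (k + 1) 3) -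
        z ^ 2 * jonesValue z (List.replicate k 3) := by
  set F : Matrix (Fin 2) (Fin 2) ℂ := !![1 + z + z ^ 2, -z ^ 2; 1, 0]
  have hword : ∀ j, wordMat z (List.replicate j 3) = F ^ j := fun j => by
    simp [wordMat, List.map_replicate, List.prod_replicate, rMat_pow_three_mul_sMat hz, F]
  have hcayley : F * F = (1 + z + z ^ 2) • F - z ^ 2 • (1 : Matrix (Fin 2) (Fin 2) ℂ) := by
    ext i j
    fin_cases i <;> fin_cases j <;> simp [F, Matrix.mul_apply, Fin.sum_univ_two]
    ring
  have hpow : F ^ (k + 2) = (1 + z + z ^ 2) • F ^ (k + 1) - z ^ 2 • F ^ k := by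
    rw [pow_add, sq, hcayley, mul_sub, mul_smul_comm, mul_smul_comm, mul_one, ← pow_succ]
  simp only [jonesValue_eq_vecMul, hword, hpow, vecMul_sub, vecMul_smul, Pi.sub_apply,
    Pi.smul_apply, smul_eq_mul]

theorem infinite_jonesValue_image_of_two_lt_norm {z : ℂ} (hz : ‖z‖ = 1)
    (ht : 2 < ‖1 + z + z ^ 2‖) : (jonesValue z '' admissibleWords).Infinite := by
  have hz₀ : z ≠ 0 := norm_ne_zero_iff.1 (by rw [hz]; exact one_ne_zero)
  obtain ⟨l, m, hsum, hprod, hl, hm₀, hm⟩ :=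
    exists_roots_of_two_lt_norm ht (d := z ^ 2) (by rw [norm_pow, hz, one_pow])
  have hinf : (Set.range fun k => jonesValue z (List.replicate k 3)).Infinite :=
    infinite_range_of_recurrence hl hm₀ hm
      (fun k => by rw [hsum, hprod]; exact jonesValue_replicate_three_add_two hz₀ k)
      (by simpa [jonesValue, wordMat] using hz₀)
  refine fun hfin => hinf ((hfin.insert (jonesValue z [])).subset ?_)
  rintro _ ⟨_ | k, rfl⟩
  · exact Set.mem_insert _ _
  · exact Or.inr ⟨_, ⟨by simp, fun x hx => by simp [List.eq_of_mem_replicate hx]⟩, rfl⟩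

theorem norm_one_add_exp_add_sq (θ : ℝ) :
    ‖1 + exp (θ * I) + exp (θ * I) ^ 2‖ = |1 + 2 * Real.cos θ| := by
  have h : 1 + exp (θ * I) + exp (θ * I) ^ 2 = exp (θ * I) * ((1 + 2 * Real.cos θ : ℝ) : ℂ) := by
    have hinv : exp (θ * I) * exp (-θ * I) = 1 := by rw [← Complex.exp_add]; simp
    push_cast
    rw [Complex.two_cos]
    linear_combination -hinv
  rw [h, norm_mul, Complex.norm_exp_ofReal_mul_I, one_mul, Complex.norm_real, Real.norm_eq_abs]

theorem two_lt_norm_one_add_exp_add_sq {n : ℕ} (hn : 7 ≤ n) :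
    2 < ‖1 + exp (2 * Real.pi * I / n) + exp (2 * Real.pi * I / n) ^ 2‖ := by
  have hθ : 2 * Real.pi * I / n = ((2 * Real.pi / n : ℝ) : ℂ) * I := by push_cast; ring
  have hn₀ : (0 : ℝ) < n := by positivity
  have hlt : 2 * Real.pi / n < Real.pi / 3 := by
    rw [div_lt_div_iff₀ hn₀ three_pos]
    have : (7 : ℝ) ≤ n := by exact_mod_cast hn
    nlinarith [Real.pi_pos]
  have hcos : 1 / 2 < Real.cos (2 * Real.pi / n) := by
    rw [← Real.cos_pi_div_three]
    exact Real.cos_lt_cos_of_nonneg_of_le_pi (by positivity) (by linarith [Real.pi_pos]) hlt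
  rw [hθ, norm_one_add_exp_add_sq]
  exact lt_of_lt_of_le (by linarith) (le_abs_self _)

theorem map_toLaurent {A : Type*} [CommRing A] (f : LaurentPolynomial ℤ →+* A)
    (p : Polynomial ℤ) : f (Polynomial.toLaurent p) = Polynomial.aeval (f (T 1)) p := by
  have : f.comp Polynomial.toLaurent = (Polynomial.aeval (f (T 1))).toRingHom :=
    Polynomial.ringHom_ext (fun a => by simp) (by simp)
  exact RingHom.congr_fun this p

theorem map_eq_zero_of_isPrimitiveRoot {K : Type*} [Field K] [CharZero K] {n : ℕ} (hn : 0 < n)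
    {f g : LaurentPolynomial ℤ →+* K} (hf : IsPrimitiveRoot (f (T 1)) n)
    (hg : IsPrimitiveRoot (g (T 1)) n) {p : LaurentPolynomial ℤ} (hp : f p = 0) : g p = 0 := by
  obtain ⟨m, q, hq⟩ := p.exists_T_pow
  have hfq : Polynomial.aeval (f (T 1)) q = 0 := by
    rw [← map_toLaurent, hq, map_mul, hp, zero_mul]
  have hdvd : minpoly ℤ (g (T 1)) ∣ q := by
    rw [← Polynomial.cyclotomic_eq_minpoly hg hn, Polynomial.cyclotomic_eq_minpoly hf hn]
    exact minpoly.isIntegrallyClosed_dvd (hf.isIntegral hn) hfq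
  have hgq : Polynomial.aeval (g (T 1)) q = 0 := by
    obtain ⟨r, rfl⟩ := hdvd
    rw [map_mul, minpoly.aeval, zero_mul]
  rw [← map_toLaurent, hq, map_mul] at hgq
  exact (mul_eq_zero.1 hgq).resolve_right ((isUnit_T _).map g).ne_zero

theorem infinite_jonesValue_image_of_seven_le_orderOf (f : LaurentPolynomial ℤ →+* ℂ)
    (h : 7 ≤ orderOf (f (T 1))) : (jonesValue (f (T 1)) '' admissibleWords).Infinite := by
  set n := orderOf (f (T 1))
  set ζ₀ := exp (2 * Real.pi * I / n)
  have hprim₀ : IsPrimitiveRoot ζ₀ n := Complex.isPrimitiveRoot_exp n (by omega)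
  let g : LaurentPolynomial ℤ →+* ℂ :=
    LaurentPolynomial.eval₂ (Int.castRingHom ℂ) (Units.mk0 ζ₀ (Complex.exp_ne_zero _))
  have hg : g (T 1) = ζ₀ := by simp [g]
  have hfactor : Function.FactorsThrough (jonesValue ζ₀) (jonesValue (f (T 1))) := by
    intro a b hab
    rw [← map_jonesPoly, ← map_jonesPoly, ← sub_eq_zero, ← map_sub] at hab
    rw [← hg, ← map_jonesPoly, ← map_jonesPoly, ← sub_eq_zero, ← map_sub]
    exact map_eq_zero_of_isPrimitiveRoot (by omega) (IsPrimitiveRoot.orderOf _) (hg ▸ hprim₀) hab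
  intro hfin
  refine infinite_jonesValue_image_of_two_lt_norm (hprim₀.norm'_eq_one (by omega))
    (two_lt_norm_one_add_exp_add_sq h) ?_
  simpa only [Set.image_image, hfactor.extend_apply] using
    hfin.image (Function.extend (jonesValue (f (T 1))) (jonesValue ζ₀) 0)

theorem jones_values_finite_iff_general (ζ : ℂ)
    (RU SU : Matrix.GeneralLinearGroup (Fin 2) (LaurentPolynomial ℤ))
    (hRU : (RU : Matrix (Fin 2) (Fin 2) (LaurentPolynomial ℤ)) = Rq)
    (hSU : (SU : Matrix (Fin 2) (Fin 2) (LaurentPolynomial ℤ)) = Sq)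
    (evζ : LaurentPolynomial ℤ →+* ℂ) (hevζ : evζ (T 1) = ζ) :
    {z : ℂ | ∃ c : List ℕ, c ≠ [] ∧ (∀ x ∈ c, 2 ≤ x) ∧
        z = ζ * evζ ((Mq RU SU c : Matrix (Fin 2) (Fin 2) (LaurentPolynomial ℤ)) 0 0) +
          (1 - ζ) * evζ ((Mq RU SU c : Matrix (Fin 2) (Fin 2) (LaurentPolynomial ℤ)) 1 0)}.Finite ↔
      ∃ n ∈ ({2, 3, 4, 5, 6} : Set ℕ), IsPrimitiveRoot ζ n := by
  subst hevζ
  rw [← jonesValue_image_eq evζ hRU hSU]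
  constructor
  · intro hfin
    have h2 : 2 ≤ orderOf (evζ (T 1)) := by
      by_contra! h
      exact infinite_jonesValue_image_of_orderOf_lt_two (map_T_one_ne_zero evζ) h hfin
    have h6 : orderOf (evζ (T 1)) ≤ 6 := by
      by_contra! h
      exact infinite_jonesValue_image_of_seven_le_orderOf evζ h hfin
    refine ⟨_, ?_, IsPrimitiveRoot.orderOf _⟩
    simp only [Set.mem_insert_iff, Set.mem_singleton_iff]
    omega
  · rintro ⟨n, hn, hprim⟩
    exact (finite_range_jonesValue_of_isPrimitiveRoot hn hprim).subset (Set.image_subset_range _ _)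

theorem jones_values_finite_iff (ζ : ℂ) (hζ : ζ ≠ 0)
    (RU SU : Matrix.GeneralLinearGroup (Fin 2) (LaurentPolynomial ℤ))
    (hRU : (RU : Matrix (Fin 2) (Fin 2) (LaurentPolynomial ℤ)) = Rq)
    (hSU : (SU : Matrix (Fin 2) (Fin 2) (LaurentPolynomial ℤ)) = Sq)
    (evζ : LaurentPolynomial ℤ →+* ℂ) (hevζ : evζ (T 1) = ζ) :
    {z : ℂ | ∃ c : List ℕ, c ≠ [] ∧ (∀ x ∈ c, 2 ≤ x) ∧
        z = ζ * evζ ((Mq RU SU c : Matrix (Fin 2) (Fin 2) (LaurentPolynomial ℤ)) 0 0) +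
          (1 - ζ) * evζ ((Mq RU SU c : Matrix (Fin 2) (Fin 2) (LaurentPolynomial ℤ)) 1 0)}.Finite ↔
      ∃ n ∈ ({2, 3, 4, 5, 6} : Set ℕ), IsPrimitiveRoot ζ n :=
  jones_values_finite_iff_general ζ RU SU hRU hSU evζ hevζ
end
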